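/- arXiv:2405.17639 — 10 statements merged into one kernel-verified Lean document; each statement's English description precedes it below -/
import Mathlib

section
/- Let P = {(A_i, B_i) : i ∈ [m]} be a family of pairs of finite subsets of [n] such that A_i ∩ B_j = ∅ if and only if i = j. Then ∑_{i=1}^m (binom(|A_i|+|B_i|, |A_i|))^{-1} ≤ 1. -/
open Finset

-- key binomial identity: (a+1+b) * C(a+b, a) = C(a+1+b, a+1) * (a+1)
lemma bollobas_choose_id (a b : ℕ) :
    (a + 1 + b) * ((a + b).choose a) = (a + 1 + b).choose (a + 1) * (a + 1) := by
  have := Nat.add_one_mul_choose_eq (a + b) a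
  have h1 : a + 1 + b = a + b + 1 := by omega
  rw [h1]
  simpa [Nat.succ_eq_add_one] using this

lemma bollobas_sumx {α : Type*} [DecidableEq α] (U A B : Finset α)
    (hA : A ⊆ U) (hB : B ⊆ U) (hd : Disjoint A B) (ha : A.Nonempty) :
    ∑ x ∈ U \ B, (((A.erase x).card + B.card).choose (A.erase x).card : ℝ)⁻¹
      = U.card * ((A.card + B.card).choose A.card : ℝ)⁻¹ := by
  obtain ⟨a, hA1⟩ : ∃ a, A.card = a + 1 := by
    have := ha.card_pos; exact ⟨A.card - 1, by omega⟩
  set b := B.card with hb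
  have hAsub : A ⊆ U \ B := subset_sdiff.mpr ⟨hA, hd⟩
  rw [← Finset.sum_sdiff hAsub]
  have h1 : ∀ x ∈ (U \ B) \ A,
      (((A.erase x).card + B.card).choose (A.erase x).card : ℝ)⁻¹
        = (((a+1) + b).choose (a+1) : ℝ)⁻¹ := by
    intro x hx
    have hxA : x ∉ A := (Finset.mem_sdiff.mp hx).2
    rw [Finset.erase_eq_of_notMem hxA, hA1]
  have h2 : ∀ x ∈ A,
      (((A.erase x).card + B.card).choose (A.erase x).card : ℝ)⁻¹
        = ((a + b).choose a : ℝ)⁻¹ := by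
    intro x hx
    rw [Finset.card_erase_of_mem hx, hA1]
    norm_num [hb]
  rw [Finset.sum_congr rfl h1, Finset.sum_congr rfl h2, Finset.sum_const, Finset.sum_const]
  have hcard1 : ((U \ B) \ A).card = U.card - b - (a+1) := by
    rw [Finset.card_sdiff_of_subset hAsub, Finset.card_sdiff_of_subset hB, hA1]
  have hle : a + 1 + b ≤ U.card := by
    have := Finset.card_le_card hAsub
    have := Finset.card_sdiff_of_subset hB
    omega
  have hc1 : (0:ℝ) < ((a + 1 + b).choose (a+1) : ℝ) := by
    exact_mod_cast Nat.choose_pos (by omega)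
  have hc2 : (0:ℝ) < ((a + b).choose a : ℝ) := by
    exact_mod_cast Nat.choose_pos (by omega)
  have hid : ((a + 1 + b : ℕ) : ℝ) * ((a + b).choose a : ℝ)
      = ((a + 1 + b).choose (a + 1) : ℝ) * ((a + 1 : ℕ) : ℝ) := by
    exact_mod_cast bollobas_choose_id a b
  rw [hcard1, hA1]
  have hU : (((U.card - b - (a+1) : ℕ)) : ℝ) = (U.card : ℝ) - b - (a+1) := by
    rw [Nat.sub_sub, Nat.cast_sub (by omega)]
    push_cast; ring
  rw [nsmul_eq_mul, nsmul_eq_mul, hU]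
  push_cast at hid ⊢
  field_simp
  ring_nf
  ring_nf at hid
  nlinarith [hid]


lemma bollobas_aux {α : Type} [DecidableEq α] (k : ℕ) :
    ∀ (U : Finset α), U.card = k → ∀ (ι : Type) [Fintype ι] (A B : ι → Finset α),
      (∀ i, A i ⊆ U) → (∀ i, B i ⊆ U) →
      (∀ i j, A i ∩ B j = ∅ ↔ i = j) →
      ∑ i, (((A i).card + (B i).card).choose (A i).card : ℝ)⁻¹ ≤ 1 := by
  induction k with
  | zero =>
    intro U hU ι inst A B hAU hBU h
    have hterm1 : ∀ i : ι, (((A i).card + (B i).card).choose (A i).card : ℝ)⁻¹ ≤ 1 := by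
      intro i
      rw [inv_le_one_iff₀]
      right
      exact_mod_cast Nat.one_le_iff_ne_zero.mpr (Nat.choose_pos (Nat.le_add_right _ _)).ne'
    by_cases htriv : ∀ i j : ι, i = j
    · calc ∑ i, (((A i).card + (B i).card).choose (A i).card : ℝ)⁻¹
          ≤ (univ : Finset ι).card • (1:ℝ) :=
            Finset.sum_le_card_nsmul _ _ _ (fun i _ => hterm1 i)
        _ ≤ 1 := by
            have h1 : (univ : Finset ι).card ≤ 1 := Fintype.card_le_one_iff.mpr htriv
            have : ((univ : Finset ι).card : ℝ) ≤ 1 := by exact_mod_cast h1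
            simpa using this
    · exfalso
      push_neg at htriv
      obtain ⟨i0, j0, hij⟩ := htriv
      have hne : A i0 ∩ B j0 ≠ ∅ := fun hh => hij ((h _ _).mp hh)
      obtain ⟨x, hx⟩ := Finset.nonempty_iff_ne_empty.mpr hne
      have : x ∈ U := hAU i0 (Finset.mem_inter.mp hx).1
      rw [Finset.card_eq_zero.mp hU] at this
      exact absurd this (Finset.notMem_empty x)
  | succ k ih =>
    intro U hU ι inst A B hAU hBU h
    -- each term is ≤ 1 and ≥ 0
    have hterm1 : ∀ i : ι, (((A i).card + (B i).card).choose (A i).card : ℝ)⁻¹ ≤ 1 := by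
      intro i
      rw [inv_le_one_iff₀]
      right
      exact_mod_cast Nat.one_le_iff_ne_zero.mpr (Nat.choose_pos (Nat.le_add_right _ _)).ne'
    by_cases htriv : ∀ i j : ι, i = j
    · -- at most one index
      calc ∑ i, (((A i).card + (B i).card).choose (A i).card : ℝ)⁻¹
          ≤ (univ : Finset ι).card • (1:ℝ) :=
            Finset.sum_le_card_nsmul _ _ _ (fun i _ => hterm1 i)
        _ ≤ 1 := by
            have : (univ : Finset ι).card ≤ 1 := Fintype.card_le_one_iff.mpr htriv
            have : ((univ : Finset ι).card : ℝ) ≤ 1 := by exact_mod_cast this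
            simpa using this
    · push_neg at htriv
      obtain ⟨i0, j0, hij⟩ := htriv
      have hnontriv : ∀ i : ι, ∃ j, j ≠ i := by
        intro i
        by_cases hi : i = i0
        · exact ⟨j0, by rw [hi]; exact fun hh => hij hh.symm⟩
        · exact ⟨i0, fun hh => hi hh.symm⟩
      have hAne : ∀ i, (A i).Nonempty := by
        intro i
        obtain ⟨j, hj⟩ := hnontriv i
        have : A i ∩ B j ≠ ∅ := fun hh => hj ((h i j).mp hh).symm
        obtain ⟨x, hx⟩ := Finset.nonempty_iff_ne_empty.mpr this
        exact ⟨x, (Finset.mem_inter.mp hx).1⟩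
      have hBne : ∀ i, (B i).Nonempty := by
        intro i
        obtain ⟨j, hj⟩ := hnontriv i
        have : A j ∩ B i ≠ ∅ := fun hh => hj ((h j i).mp hh)
        obtain ⟨x, hx⟩ := Finset.nonempty_iff_ne_empty.mpr this
        exact ⟨x, (Finset.mem_inter.mp hx).2⟩
      have hd : ∀ i, Disjoint (A i) (B i) := fun i =>
        Finset.disjoint_iff_inter_eq_empty.mpr ((h i i).mpr rfl)
      -- For each x ∈ U, the restricted family bound
      have hkey : ∀ x ∈ U,
          ∑ i ∈ univ.filter (fun i : ι => x ∉ B i),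
            ((((A i).erase x).card + (B i).card).choose ((A i).erase x).card : ℝ)⁻¹ ≤ 1 := by
        intro x hx
        have hcard : (U.erase x).card = k := by
          rw [Finset.card_erase_of_mem hx, hU]; omega
        have := ih (U.erase x) hcard {i : ι // x ∉ B i}
          (fun i => (A i.1).erase x) (fun i => B i.1)
          (fun i => fun y hy => Finset.mem_erase.mpr
            ⟨(Finset.mem_erase.mp hy).1, hAU i.1 (Finset.mem_of_mem_erase hy)⟩)
          (fun i => fun y hy => Finset.mem_erase.mpr
            ⟨fun hh => i.2 (hh ▸ hy), hBU i.1 hy⟩)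
          (by
            rintro ⟨i, hi⟩ ⟨j, hj⟩
            constructor
            · intro hij2
              have : A i ∩ B j = ∅ := by
                rw [← Finset.subset_empty, ← hij2]
                intro y hy
                rw [Finset.mem_inter] at hy
                exact Finset.mem_inter.mpr
                  ⟨Finset.mem_erase.mpr ⟨fun hh => hj (hh ▸ hy.2), hy.1⟩, hy.2⟩
              exact Subtype.ext ((h i j).mp this)
            · intro he
              obtain rfl : i = j := by injection he
              rw [← Finset.subset_empty, ← (h i i).mpr rfl]
              intro y hy
              rw [Finset.mem_inter] at hy
              exact Finset.mem_inter.mpr ⟨Finset.mem_of_mem_erase hy.1, hy.2⟩)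
        rw [← Finset.sum_subtype (univ.filter (fun i : ι => x ∉ B i))
          (by intro i; simp) (fun i => ((((A i).erase x).card + (B i).card).choose
            ((A i).erase x).card : ℝ)⁻¹)] at this
        exact this
      -- double counting
      have hdouble :
          ∑ x ∈ U, ∑ i ∈ univ.filter (fun i : ι => x ∉ B i),
            ((((A i).erase x).card + (B i).card).choose ((A i).erase x).card : ℝ)⁻¹
          = (U.card : ℝ) * ∑ i, (((A i).card + (B i).card).choose (A i).card : ℝ)⁻¹ := by
        have swap : ∀ x ∈ U, ∑ i ∈ univ.filter (fun i : ι => x ∉ B i),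
            ((((A i).erase x).card + (B i).card).choose ((A i).erase x).card : ℝ)⁻¹
            = ∑ i : ι, if x ∉ B i then
              ((((A i).erase x).card + (B i).card).choose ((A i).erase x).card : ℝ)⁻¹ else 0 :=
          fun x _ => Finset.sum_filter _ _
        rw [Finset.sum_congr rfl swap, Finset.sum_comm]
        rw [Finset.mul_sum]
        refine Finset.sum_congr rfl fun i _ => ?_
        rw [← Finset.sum_filter]
        have hfil : U.filter (fun x => x ∉ B i) = U \ B i := by
          rw [Finset.sdiff_eq_filter]
        rw [hfil, bollobas_sumx U (A i) (B i) (hAU i) (hBU i) (hd i) (hAne i)]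
      have hpos : (0:ℝ) < (U.card : ℝ) := by
        rw [hU]; positivity
      rw [← mul_le_mul_iff_right₀ hpos, ← hdouble, mul_one]
      calc ∑ x ∈ U, ∑ i ∈ univ.filter (fun i : ι => x ∉ B i),
            ((((A i).erase x).card + (B i).card).choose ((A i).erase x).card : ℝ)⁻¹
          ≤ ∑ _x ∈ U, (1:ℝ) := Finset.sum_le_sum hkey
        _ = (U.card : ℝ) := by simp

theorem bollobas (n m : ℕ) (A B : Fin m → Finset (Fin n))
    (h : ∀ i j, A i ∩ B j = ∅ ↔ i = j) :
    ∑ i, (((A i).card + (B i).card).choose (A i).card : ℝ)⁻¹ ≤ 1 := by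
  exact bollobas_aux (Finset.univ : Finset (Fin n)).card Finset.univ rfl (Fin m) A B
    (fun i => Finset.subset_univ _) (fun i => Finset.subset_univ _) h
end

section
/- Let P = {(A_i, B_i) : i ∈ [m]} be a Bollobás system with A_i, B_i ⊆ [n] and |A_i| = a, |B_i| = b for all i. Then m ≤ binom(a+b, a). -/
open Finset Equiv

noncomputable def sortPerm {a b : ℕ} (T : Finset (Fin (a+b))) (hT : T.card = a)
    (hTc : Tᶜ.card = b) : Equiv.Perm (Fin (a+b)) :=
  (Equiv.sumCompl (· ∈ T)).symm.trans <|
    (Equiv.sumCongr (T.orderIsoOfFin hT).symm.toEquiv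
      ((Equiv.subtypeEquivRight (fun x => (Finset.mem_compl (s := T) (a := x)).symm)).trans
        ((Tᶜ).orderIsoOfFin hTc).symm.toEquiv)).trans finSumFinEquiv

lemma sortPerm_lt {a b : ℕ} {T : Finset (Fin (a+b))} (hT : T.card = a)
    (hTc : Tᶜ.card = b) {x : Fin (a+b)} (hx : x ∈ T) :
    (sortPerm T hT hTc x : ℕ) < a := by
  simp only [sortPerm, Equiv.trans_apply, Equiv.sumCompl_symm_apply_of_pos (p := (· ∈ T)) hx,
    Equiv.sumCongr_apply, Sum.map_inl, finSumFinEquiv_apply_left]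
  simp [Fin.is_lt]

lemma sortPerm_ge {a b : ℕ} {T : Finset (Fin (a+b))} (hT : T.card = a)
    (hTc : Tᶜ.card = b) {x : Fin (a+b)} (hx : x ∉ T) :
    a ≤ (sortPerm T hT hTc x : ℕ) := by
  simp only [sortPerm, Equiv.trans_apply, Equiv.sumCompl_symm_apply_of_neg (p := (· ∈ T)) hx,
    Equiv.sumCongr_apply, Sum.map_inr, finSumFinEquiv_apply_right]
  simp [Fin.natAdd]

noncomputable def tauPerm {n a b : ℕ} (V : Finset (Fin n)) (hV : V.card = a+b)
    (T : Finset (Fin (a+b))) (hT : T.card = a) (hTc : Tᶜ.card = b) : Equiv.Perm (Fin n) :=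
  (sortPerm T hT hTc).extendDomain (V.orderIsoOfFin hV).toEquiv

lemma tauPerm_congr {n a b : ℕ} {V₁ V₂ : Finset (Fin n)} {hV₁ : V₁.card = a+b}
    {hV₂ : V₂.card = a+b} {T₁ T₂ : Finset (Fin (a+b))} {hT₁ : T₁.card = a} {hT₂ : T₂.card = a}
    {hTc₁ : T₁ᶜ.card = b} {hTc₂ : T₂ᶜ.card = b} (hv : V₁ = V₂) (ht : T₁ = T₂) :
    tauPerm V₁ hV₁ T₁ hT₁ hTc₁ = tauPerm V₂ hV₂ T₂ hT₂ hTc₂ := by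
  subst hv; subst ht; rfl

lemma tauPerm_apply_mem {n a b : ℕ} (V : Finset (Fin n)) (hV : V.card = a+b)
    (T : Finset (Fin (a+b))) (hT : T.card = a) (hTc : Tᶜ.card = b) {z : Fin n} (hz : z ∈ V) :
    tauPerm V hV T hT hTc z =
      ((V.orderIsoOfFin hV) (sortPerm T hT hTc ((V.orderIsoOfFin hV).symm ⟨z, hz⟩)) : Fin n) :=
  Equiv.Perm.extendDomain_apply_subtype _ _ hz

lemma tauPerm_mem {n a b : ℕ} (V : Finset (Fin n)) (hV : V.card = a+b)
    (T : Finset (Fin (a+b))) (hT : T.card = a) (hTc : Tᶜ.card = b) {z : Fin n} (hz : z ∈ V) :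
    tauPerm V hV T hT hTc z ∈ V := by
  rw [tauPerm_apply_mem V hV T hT hTc hz]
  exact ((V.orderIsoOfFin hV) _).2

lemma bollobas_key (n a b : ℕ) (Af Bf : Finset (Fin n)) (hA : Af.card = a) (hB : Bf.card = b)
    (hd : Disjoint Af Bf) :
    Nat.factorial n ≤ (a+b).choose a *
      (Finset.univ.filter (fun σ : Equiv.Perm (Fin n) =>
        ∀ x ∈ Af, ∀ y ∈ Bf, σ x < σ y)).card := by
  classical
  set D : Finset (Fin n) := Af ∪ Bf with hDdef
  have hD : D.card = a + b := by
    rw [hDdef, card_union_of_disjoint hd, hA, hB]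
  -- the image of D under σ
  set V : Equiv.Perm (Fin n) → Finset (Fin n) := fun σ => D.image σ with hVdef
  have hV : ∀ σ, (V σ).card = a + b := fun σ => by
    rw [hVdef]; rw [card_image_of_injective _ σ.injective, hD]
  have hmemV : ∀ (σ : Equiv.Perm (Fin n)) {x : Fin n}, x ∈ D → σ x ∈ V σ :=
    fun σ x hx => mem_image_of_mem _ hx
  -- the set of ranks of Af inside V σ
  set T : Equiv.Perm (Fin n) → Finset (Fin (a+b)) := fun σ =>
    Af.attach.image (fun x => ((V σ).orderIsoOfFin (hV σ)).symm
      ⟨σ x.1, hmemV σ (mem_union_left _ x.2)⟩) with hTdef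
  have hT : ∀ σ, (T σ).card = a := by
    intro σ
    rw [hTdef]
    rw [Finset.card_image_of_injective _ ?_, card_attach, hA]
    intro x y hxy
    have := congrArg (fun z => (((V σ).orderIsoOfFin (hV σ)) z : Fin n)) hxy
    simp only [OrderIso.apply_symm_apply] at this
    exact Subtype.ext (σ.injective this)
  have hTc : ∀ σ, (T σ)ᶜ.card = b := by
    intro σ
    rw [Finset.card_compl, hT σ, Fintype.card_fin]
    omega
  set Φ : Equiv.Perm (Fin n) → Equiv.Perm (Fin n) := fun σ =>
    σ.trans (tauPerm (V σ) (hV σ) (T σ) (hT σ) (hTc σ)) with hΦdef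
  -- value of Φ σ on points of D
  have hΦD : ∀ (σ : Equiv.Perm (Fin n)) {x : Fin n} (hx : x ∈ D),
      Φ σ x = (((V σ).orderIsoOfFin (hV σ))
        (sortPerm (T σ) (hT σ) (hTc σ)
          (((V σ).orderIsoOfFin (hV σ)).symm ⟨σ x, hmemV σ hx⟩)) : Fin n) := by
    intro σ x hx
    exact tauPerm_apply_mem _ _ _ _ _ (hmemV σ hx)
  -- ranks of Af are in T, ranks of Bf are not
  have hrankA : ∀ (σ : Equiv.Perm (Fin n)) {x : Fin n} (hx : x ∈ Af),
      ((V σ).orderIsoOfFin (hV σ)).symm ⟨σ x, hmemV σ (mem_union_left _ hx)⟩ ∈ T σ := by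
    intro σ x hx
    rw [hTdef]
    exact mem_image_of_mem _ (mem_attach _ ⟨x, hx⟩)
  have hrankB : ∀ (σ : Equiv.Perm (Fin n)) {y : Fin n} (hy : y ∈ Bf),
      ((V σ).orderIsoOfFin (hV σ)).symm ⟨σ y, hmemV σ (mem_union_right _ hy)⟩ ∉ T σ := by
    intro σ y hy hmem
    rw [hTdef] at hmem
    obtain ⟨x, -, hxy⟩ := mem_image.1 hmem
    have := congrArg (fun z => (((V σ).orderIsoOfFin (hV σ)) z : Fin n)) hxy
    simp only [OrderIso.apply_symm_apply] at this
    have : (x : Fin n) = y := σ.injective this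
    exact (Finset.disjoint_left.1 hd (this ▸ x.2)) hy
  -- Φ σ sorts Af before Bf
  have hΦsort : ∀ σ, Φ σ ∈ Finset.univ.filter (fun σ : Equiv.Perm (Fin n) =>
      ∀ x ∈ Af, ∀ y ∈ Bf, σ x < σ y) := by
    intro σ
    rw [mem_filter]
    refine ⟨mem_univ _, fun x hx y hy => ?_⟩
    rw [hΦD σ (mem_union_left _ hx), hΦD σ (mem_union_right _ hy)]
    have h1 := sortPerm_lt (hT σ) (hTc σ) (hrankA σ hx)
    have h2 := sortPerm_ge (hT σ) (hTc σ) (hrankB σ hy)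
    have hlt : sortPerm (T σ) (hT σ) (hTc σ)
          (((V σ).orderIsoOfFin (hV σ)).symm ⟨σ x, hmemV σ (mem_union_left _ hx)⟩) <
        sortPerm (T σ) (hT σ) (hTc σ)
          (((V σ).orderIsoOfFin (hV σ)).symm ⟨σ y, hmemV σ (mem_union_right _ hy)⟩) := by
      exact Fin.lt_def.2 (lt_of_lt_of_le h1 h2)
    exact_mod_cast ((V σ).orderIsoOfFin (hV σ)).strictMono hlt
  -- V σ is recoverable from Φ σ
  have hVrec : ∀ σ, D.image (Φ σ) = V σ := by
    intro σ
    apply Finset.eq_of_subset_of_card_le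
    · intro z hz
      obtain ⟨x, hx, rfl⟩ := mem_image.1 hz
      rw [hΦD σ hx]
      exact (((V σ).orderIsoOfFin (hV σ)) _).2
    · rw [hV σ, card_image_of_injective _ (Φ σ).injective, hD]
  -- fibers of Φ have size at most (a+b).choose a
  have hfiber : ∀ ρ ∈ Finset.univ.image Φ,
      (Finset.univ.filter (fun σ => Φ σ = ρ)).card ≤ (a+b).choose a := by
    intro ρ _
    have : ((Finset.univ : Finset (Fin (a+b))).powersetCard a).card = (a+b).choose a := by
      rw [Finset.card_powersetCard, card_univ, Fintype.card_fin]
    rw [← this]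
    apply Finset.card_le_card_of_injOn T
    · intro σ hσ
      rw [mem_coe, Finset.mem_powersetCard]
      exact ⟨subset_univ _, hT σ⟩
    · intro σ₁ h₁ σ₂ h₂ hTeq
      simp only [mem_coe, mem_filter, mem_univ, true_and] at h₁ h₂
      have hVeq : V σ₁ = V σ₂ := by rw [← hVrec σ₁, ← hVrec σ₂, h₁, h₂]
      have hτ : tauPerm (V σ₁) (hV σ₁) (T σ₁) (hT σ₁) (hTc σ₁) =
          tauPerm (V σ₂) (hV σ₂) (T σ₂) (hT σ₂) (hTc σ₂) := tauPerm_congr hVeq hTeq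
      apply Equiv.Perm.ext
      intro x
      have hx := congrArg (fun π : Equiv.Perm (Fin n) => π x) (h₁.trans h₂.symm)
      simp only [hΦdef, Equiv.trans_apply] at hx
      rw [← hτ] at hx
      exact (tauPerm (V σ₁) (hV σ₁) (T σ₁) (hT σ₁) (hTc σ₁)).injective hx
  -- put it together
  calc Nat.factorial n = (Finset.univ : Finset (Equiv.Perm (Fin n))).card := by
        rw [card_univ, Fintype.card_perm, Fintype.card_fin]
    _ ≤ (a+b).choose a * (Finset.univ.image Φ).card :=
        Finset.card_le_mul_card_image _ _ hfiber
    _ ≤ (a+b).choose a * (Finset.univ.filter (fun σ : Equiv.Perm (Fin n) =>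
          ∀ x ∈ Af, ∀ y ∈ Bf, σ x < σ y)).card := by
        apply Nat.mul_le_mul_left
        apply Finset.card_le_card
        intro ρ hρ
        obtain ⟨σ, -, rfl⟩ := mem_image.1 hρ
        exact hΦsort σ

theorem bollobas_uniform (n m a b : ℕ) (A B : Fin m → Finset (Fin n))
    (h : ∀ i j, A i ∩ B j = ∅ ↔ i = j)
    (hA : ∀ i, (A i).card = a) (hB : ∀ i, (B i).card = b) :
    m ≤ (a + b).choose a := by
  classical
  set S : Fin m → Finset (Equiv.Perm (Fin n)) := fun i =>
    Finset.univ.filter (fun σ : Equiv.Perm (Fin n) => ∀ x ∈ A i, ∀ y ∈ B i, σ x < σ y) with hSdef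
  have hdisj : ∀ i, Disjoint (A i) (B i) := fun i =>
    Finset.disjoint_iff_inter_eq_empty.2 ((h i i).2 rfl)
  have hkey : ∀ i, Nat.factorial n ≤ (a+b).choose a * (S i).card := fun i =>
    bollobas_key n a b (A i) (B i) (hA i) (hB i) (hdisj i)
  have hpair : ∀ i ∈ (Finset.univ : Finset (Fin m)), ∀ j ∈ (Finset.univ : Finset (Fin m)),
      i ≠ j → Disjoint (S i) (S j) := by
    intro i _ j _ hij
    rw [Finset.disjoint_left]
    intro σ hσi hσj
    rw [hSdef] at hσi hσj
    simp only [mem_filter, mem_univ, true_and] at hσi hσj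
    have hxy : (A i ∩ B j).Nonempty := Finset.nonempty_iff_ne_empty.2 (fun hc => hij ((h i j).1 hc))
    have hyx : (A j ∩ B i).Nonempty :=
      Finset.nonempty_iff_ne_empty.2 (fun hc => hij ((h j i).1 hc).symm)
    obtain ⟨x, hx⟩ := hxy
    obtain ⟨y, hy⟩ := hyx
    rw [Finset.mem_inter] at hx hy
    exact absurd (hσi x hx.1 y hy.2) (not_lt.2 (le_of_lt (hσj y hy.1 x hx.2)))
  have hsum : ∑ i : Fin m, (S i).card ≤ Nat.factorial n := by
    rw [← Finset.card_biUnion hpair]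
    calc ((Finset.univ : Finset (Fin m)).biUnion S).card
        ≤ (Finset.univ : Finset (Equiv.Perm (Fin n))).card := Finset.card_le_card (subset_univ _)
      _ = Nat.factorial n := by rw [card_univ, Fintype.card_perm, Fintype.card_fin]
  have hmain : m * Nat.factorial n ≤ (a+b).choose a * Nat.factorial n := by
    calc m * Nat.factorial n = ∑ _i : Fin m, Nat.factorial n := by
          rw [Finset.sum_const, card_univ, Fintype.card_fin, smul_eq_mul]
      _ ≤ ∑ i : Fin m, (a+b).choose a * (S i).card := Finset.sum_le_sum (fun i _ => hkey i)
      _ = (a+b).choose a * ∑ i : Fin m, (S i).card := by rw [Finset.mul_sum]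
      _ ≤ (a+b).choose a * Nat.factorial n := Nat.mul_le_mul_left _ hsum
  exact Nat.le_of_mul_le_mul_right hmain (Nat.factorial_pos n)
end

section
/- Let P = {(A_i, B_i) : i ∈ [m]} be a skew Bollobás system with A_i, B_i ⊆ [n]. Then ∑_{i=1}^m (binom(|A_i|+|B_i|, |A_i|))^{-1} ≤ 1 + n. -/
open Finset Equiv

noncomputable def HFemb {n : ℕ} (U : Finset (Fin n)) (ρ : Equiv.Perm {x : Fin n // x ∈ U}) :
    Equiv.Perm (Fin n) :=
  Equiv.Perm.subtypeCongr ρ (Equiv.refl _)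

lemma HFemb_mem {n : ℕ} {U : Finset (Fin n)} (ρ : Equiv.Perm {x : Fin n // x ∈ U})
    {x : Fin n} (hx : x ∈ U) : HFemb U ρ x = ρ ⟨x, hx⟩ :=
  Equiv.Perm.subtypeCongr.left_apply _ _ hx

private lemma HF_exists_low {n : ℕ} (σ : Equiv.Perm (Fin n)) (U : Finset (Fin n)) :
    ∀ k, k ≤ U.card → ∃ L, L ⊆ U ∧ L.card = k ∧
      ∀ x ∈ L, ∀ y ∈ U, y ∉ L → σ x < σ y := by
  intro k
  induction k with
  | zero => intro _; exact ⟨∅, empty_subset _, rfl, by simp⟩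
  | succ k ih =>
    intro hk
    obtain ⟨L, hLU, hLc, hsep⟩ := ih (Nat.le_of_succ_le hk)
    have hne : (U \ L).Nonempty := by
      rw [← Finset.card_pos, Finset.card_sdiff_of_subset hLU, hLc]
      omega
    obtain ⟨y₀, hy₀, hmin⟩ := Finset.exists_min_image (U \ L) (fun y => σ y) hne
    have hy₀U : y₀ ∈ U := (Finset.mem_sdiff.1 hy₀).1
    have hy₀L : y₀ ∉ L := (Finset.mem_sdiff.1 hy₀).2
    refine ⟨insert y₀ L, Finset.insert_subset hy₀U hLU,
      by rw [Finset.card_insert_of_notMem hy₀L, hLc], ?_⟩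
    intro x hx y hyU hy
    have hyy₀ : y ≠ y₀ := fun h => hy (h ▸ Finset.mem_insert_self _ _)
    have hyL : y ∉ L := fun h => hy (Finset.mem_insert_of_mem h)
    rcases Finset.mem_insert.1 hx with h | h
    · subst h
      exact lt_of_le_of_ne (hmin y (Finset.mem_sdiff.2 ⟨hyU, hyL⟩))
        (fun he => hyy₀ (σ.injective he).symm)
    · exact hsep x h y hyU hyL

private lemma HF_fiber {n : ℕ} (A B : Finset (Fin n)) (hd : Disjoint A B)
    (σ : Equiv.Perm (Fin n)) :
    A.card.factorial * B.card.factorial ≤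
      Fintype.card {ρ : Equiv.Perm {x : Fin n // x ∈ A ∪ B} //
        ∀ x ∈ A, ∀ y ∈ B, σ (HFemb (A ∪ B) ρ x) < σ (HFemb (A ∪ B) ρ y)} := by
  classical
  set U := A ∪ B with hUdef
  have hAU : A ⊆ U := subset_union_left
  have hBU : B ⊆ U := subset_union_right
  have hUcard : U.card = A.card + B.card := card_union_of_disjoint hd
  obtain ⟨L, hLU, hLc, hsep⟩ := HF_exists_low σ U A.card (by rw [hUcard]; omega)
  have hMc : (U \ L).card = B.card := by rw [card_sdiff_of_subset hLU, hUcard, hLc]; omega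
  have c1 : Fintype.card {x : Fin n // x ∈ A} = Fintype.card {x : Fin n // x ∈ L} := by
    rw [Fintype.card_coe, Fintype.card_coe, hLc]
  have c2 : Fintype.card {x : Fin n // x ∈ B} = Fintype.card {x : Fin n // x ∈ U \ L} := by
    rw [Fintype.card_coe, Fintype.card_coe, hMc]
  set E := (({x : Fin n // x ∈ A} ≃ {x : Fin n // x ∈ L}) ×
      ({x : Fin n // x ∈ B} ≃ {x : Fin n // x ∈ U \ L})) with hE
  let g : E → {x : Fin n // x ∈ U} → {x : Fin n // x ∈ U} := fun e u =>
    if h : u.1 ∈ A then ⟨(e.1 ⟨u.1, h⟩).1, hLU (e.1 ⟨u.1, h⟩).2⟩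
    else ⟨(e.2 ⟨u.1, (mem_union.1 u.2).resolve_left h⟩).1,
          (mem_sdiff.1 (e.2 ⟨u.1, (mem_union.1 u.2).resolve_left h⟩).2).1⟩
  have hginj : ∀ e, Function.Injective (g e) := by
    intro e u v huv
    have hval := congrArg Subtype.val huv
    by_cases hu : u.1 ∈ A <;> by_cases hv : v.1 ∈ A
    · simp only [g, dif_pos hu, dif_pos hv] at hval
      have h3 : (⟨u.1, hu⟩ : {x : Fin n // x ∈ A}) = ⟨v.1, hv⟩ := e.1.injective (Subtype.ext hval)
      exact Subtype.ext (Subtype.mk.inj h3)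
    · exfalso
      simp only [g, dif_pos hu, dif_neg hv] at hval
      have h1 : (e.1 ⟨u.1, hu⟩).1 ∈ L := (e.1 _).2
      have h2 := (mem_sdiff.1 (e.2 ⟨v.1, (mem_union.1 v.2).resolve_left hv⟩).2).2
      rw [hval] at h1
      exact h2 h1
    · exfalso
      simp only [g, dif_neg hu, dif_pos hv] at hval
      have h1 : (e.1 ⟨v.1, hv⟩).1 ∈ L := (e.1 _).2
      have h2 := (mem_sdiff.1 (e.2 ⟨u.1, (mem_union.1 u.2).resolve_left hu⟩).2).2
      rw [← hval] at h1
      exact h2 h1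
    · simp only [g, dif_neg hu, dif_neg hv] at hval
      have h3 : (⟨u.1, (mem_union.1 u.2).resolve_left hu⟩ : {x : Fin n // x ∈ B}) =
          ⟨v.1, (mem_union.1 v.2).resolve_left hv⟩ := e.2.injective (Subtype.ext hval)
      exact Subtype.ext (Subtype.mk.inj h3)
  let Φ : E → {ρ : Equiv.Perm {x : Fin n // x ∈ U} //
      ∀ x ∈ A, ∀ y ∈ B, σ (HFemb U ρ x) < σ (HFemb U ρ y)} := fun e =>
    ⟨Equiv.ofBijective (g e) ((Finite.injective_iff_bijective).1 (hginj e)), by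
      intro x hx y hy
      have hxU : x ∈ U := hAU hx
      have hyU : y ∈ U := hBU hy
      have hyA : y ∉ A := fun h => (Finset.disjoint_left.1 hd h) hy
      rw [HFemb_mem _ hxU, HFemb_mem _ hyU]
      show σ (g e ⟨x, hxU⟩).1 < σ (g e ⟨y, hyU⟩).1
      simp only [g, dif_pos hx, dif_neg hyA]
      exact hsep _ (e.1 _).2 _ (mem_sdiff.1 (e.2 _).2).1 (mem_sdiff.1 (e.2 _).2).2⟩
  have hΦ : Function.Injective Φ := by
    intro e f hef
    have h1 : ∀ u, g e u = g f u := fun u =>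
      Equiv.ext_iff.1 (congrArg Subtype.val hef) u
    have he1 : e.1 = f.1 := by
      apply Equiv.ext
      intro x
      have := h1 ⟨x.1, hAU x.2⟩
      simp only [g, dif_pos x.2] at this
      have h4 : ((e.1 x : Fin n)) = (f.1 x : Fin n) := Subtype.mk.inj this
      exact Subtype.ext h4
    have he2 : e.2 = f.2 := by
      apply Equiv.ext
      intro x
      have hxA : x.1 ∉ A := fun h => (Finset.disjoint_left.1 hd h) x.2
      have := h1 ⟨x.1, hBU x.2⟩
      simp only [g, dif_neg hxA] at this
      have h4 : ((e.2 x : Fin n)) = (f.2 x : Fin n) := Subtype.mk.inj this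
      exact Subtype.ext h4
    exact Prod.ext he1 he2
  calc A.card.factorial * B.card.factorial
      = Fintype.card E := by
        show _ = Fintype.card ((({x : Fin n // x ∈ A} ≃ {x : Fin n // x ∈ L}) ×
          ({x : Fin n // x ∈ B} ≃ {x : Fin n // x ∈ U \ L})))
        rw [Fintype.card_prod, Fintype.card_equiv (Fintype.equivOfCardEq c1),
          Fintype.card_equiv (Fintype.equivOfCardEq c2), Fintype.card_coe, Fintype.card_coe]
    _ ≤ _ := Fintype.card_le_of_injective Φ hΦ


private lemma HF_count {n : ℕ} (A B : Finset (Fin n)) (hd : A ∩ B = ∅) :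
    n.factorial ≤ (A.card + B.card).choose A.card *
      (Finset.univ.filter
        (fun σ : Equiv.Perm (Fin n) => ∀ x ∈ A, ∀ y ∈ B, σ x < σ y)).card := by
  classical
  have hdisj : Disjoint A B := Finset.disjoint_iff_inter_eq_empty.2 hd
  set U := A ∪ B with hUdef
  have hUcard : U.card = A.card + B.card := card_union_of_disjoint hdisj
  set G : Equiv.Perm (Fin n) → Prop := fun τ => ∀ x ∈ A, ∀ y ∈ B, τ x < τ y with hG
  let PT := {p : Equiv.Perm (Fin n) × Equiv.Perm {x : Fin n // x ∈ U} //
    G (p.1 * HFemb U p.2)}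
  let e1 : PT ≃ {τ : Equiv.Perm (Fin n) // G τ} × Equiv.Perm {x : Fin n // x ∈ U} :=
    { toFun := fun p => (⟨p.1.1 * HFemb U p.1.2, p.2⟩, p.1.2)
      invFun := fun q => ⟨(q.1.1 * (HFemb U q.2)⁻¹, q.2), by
        rw [inv_mul_cancel_right]; exact q.1.2⟩
      left_inv := fun p => Subtype.ext (Prod.ext (mul_inv_cancel_right _ _) rfl)
      right_inv := fun q => Prod.ext (Subtype.ext (inv_mul_cancel_right _ _)) rfl }
  have hPT : Fintype.card PT =
      (Finset.univ.filter G).card * (A.card + B.card).factorial := by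
    rw [Fintype.card_congr e1, Fintype.card_prod, Fintype.card_perm, Fintype.card_coe,
      hUcard, Fintype.card_subtype]
  let e2 : PT ≃ Σ σ : Equiv.Perm (Fin n),
      {ρ : Equiv.Perm {x : Fin n // x ∈ U} // G (σ * HFemb U ρ)} :=
    Equiv.subtypeProdEquivSigmaSubtype (fun σ ρ => G (σ * HFemb U ρ))
  have hlow : n.factorial * (A.card.factorial * B.card.factorial) ≤ Fintype.card PT := by
    rw [Fintype.card_congr e2, Fintype.card_sigma]
    calc n.factorial * (A.card.factorial * B.card.factorial)
        = ∑ _σ : Equiv.Perm (Fin n), (A.card.factorial * B.card.factorial) := by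
          rw [Finset.sum_const, Finset.card_univ, Fintype.card_perm, Fintype.card_fin,
            smul_eq_mul]
      _ ≤ _ := Finset.sum_le_sum fun σ _ => by
          exact (HF_fiber A B hdisj σ).trans
            (Fintype.card_congr (Equiv.subtypeEquivRight fun ρ => Iff.rfl)).le
  have hfact : (A.card + B.card).factorial =
      (A.card + B.card).choose A.card * A.card.factorial * B.card.factorial := by
    have := Nat.choose_mul_factorial_mul_factorial (Nat.le_add_right A.card B.card)
    simpa [Nat.add_sub_cancel_left] using this.symm
  have h5 : n.factorial * (A.card.factorial * B.card.factorial) ≤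
      ((A.card + B.card).choose A.card * (Finset.univ.filter G).card) *
        (A.card.factorial * B.card.factorial) := by
    calc n.factorial * (A.card.factorial * B.card.factorial) ≤ Fintype.card PT := hlow
      _ = (Finset.univ.filter G).card * (A.card + B.card).factorial := hPT
      _ = _ := by rw [hfact]; ring
  exact Nat.le_of_mul_le_mul_right h5
    (Nat.mul_pos (Nat.factorial_pos _) (Nat.factorial_pos _))


private lemma HF_perm_bound {n m : ℕ} (A B : Fin m → Finset (Fin n))
    (hskew : ∀ i j, i < j → (A i ∩ B j).Nonempty) (σ : Equiv.Perm (Fin n)) :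
    (Finset.univ.filter (fun i => ∀ x ∈ A i, ∀ y ∈ B i, σ x < σ y)).card ≤ n + 1 := by
  classical
  have hcard : (Finset.univ.filter (fun i => ∀ x ∈ A i, ∀ y ∈ B i, σ x < σ y)).card ≤
      (Finset.range (n+1)).card := by
    apply Finset.card_le_card_of_injOn (fun i => (A i).sup (fun a => (σ a : ℕ) + 1))
    · intro i _
      simp only [Finset.mem_coe, Finset.mem_range, Nat.lt_succ_iff]
      exact Finset.sup_le fun a _ => Nat.succ_le_of_lt (σ a).isLt
    · intro i hi j hj hij
      dsimp only at hij
      by_contra hne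
      have key : ∀ p q : Fin m, p < q →
          (∀ x ∈ A p, ∀ y ∈ B p, σ x < σ y) → (∀ x ∈ A q, ∀ y ∈ B q, σ x < σ y) →
          (A q).sup (fun a => (σ a : ℕ) + 1) < (A p).sup (fun a => (σ a : ℕ) + 1) := by
        intro p q hpq hp hq
        obtain ⟨x, hx⟩ := hskew p q hpq
        have hxA := (Finset.mem_inter.1 hx).1
        have hxB := (Finset.mem_inter.1 hx).2
        have h1 : (A q).sup (fun a => (σ a : ℕ) + 1) ≤ (σ x : ℕ) :=
          Finset.sup_le fun a ha => Nat.succ_le_of_lt (Fin.lt_def.1 (hq a ha x hxB))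
        have h2 : (σ x : ℕ) + 1 ≤ (A p).sup (fun a => (σ a : ℕ) + 1) :=
          Finset.le_sup (f := fun a => (σ a : ℕ) + 1) hxA
        omega
      simp only [Finset.mem_coe, Finset.mem_filter] at hi hj
      rcases lt_or_gt_of_ne hne with h | h
      · have := key i j h hi.2 hj.2; omega
      · have := key j i h hj.2 hi.2; omega
  simpa using hcard

theorem skew_bollobas_hegedus_frankl (n m : ℕ) (A B : Fin m → Finset (Fin n))
    (hdisj : ∀ i, A i ∩ B i = ∅)
    (hskew : ∀ i j, i < j → (A i ∩ B j).Nonempty) :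
    ∑ i, (((A i).card + (B i).card).choose (A i).card : ℝ)⁻¹ ≤ 1 + n := by
  classical
  set cnt : Fin m → ℕ := fun i => (Finset.univ.filter
    (fun σ : Equiv.Perm (Fin n) => ∀ x ∈ A i, ∀ y ∈ B i, σ x < σ y)).card with hcnt
  have h2 : ∀ i, n.factorial ≤ ((A i).card + (B i).card).choose (A i).card * cnt i :=
    fun i => HF_count (A i) (B i) (hdisj i)
  have h1 : ∑ i, cnt i ≤ (n + 1) * n.factorial := by
    have swap : ∑ i, cnt i = ∑ σ : Equiv.Perm (Fin n),
        (Finset.univ.filter (fun i => ∀ x ∈ A i, ∀ y ∈ B i, σ x < σ y)).card := by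
      simp only [hcnt, Finset.card_filter]
      exact Finset.sum_comm
    rw [swap]
    calc ∑ σ : Equiv.Perm (Fin n),
          (Finset.univ.filter (fun i => ∀ x ∈ A i, ∀ y ∈ B i, σ x < σ y)).card
        ≤ ∑ _σ : Equiv.Perm (Fin n), (n+1) :=
          Finset.sum_le_sum fun σ _ => HF_perm_bound A B hskew σ
      _ = (n+1) * n.factorial := by
          rw [Finset.sum_const, Finset.card_univ, Fintype.card_perm, Fintype.card_fin,
            smul_eq_mul]
          exact Nat.mul_comm _ _
  have hK : (0:ℝ) < (n.factorial : ℝ) := by exact_mod_cast n.factorial_pos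
  have step : ∀ i, (((A i).card + (B i).card).choose (A i).card : ℝ)⁻¹ ≤
      (cnt i : ℝ) / (n.factorial : ℝ) := by
    intro i
    have hC : (0:ℝ) < (((A i).card + (B i).card).choose (A i).card : ℝ) := by
      exact_mod_cast Nat.choose_pos (Nat.le_add_right _ _)
    rw [le_div_iff₀ hK, inv_mul_le_iff₀ hC]
    exact_mod_cast h2 i
  calc ∑ i, (((A i).card + (B i).card).choose (A i).card : ℝ)⁻¹
      ≤ ∑ i, (cnt i : ℝ) / (n.factorial : ℝ) := Finset.sum_le_sum fun i _ => step i
    _ = (∑ i, (cnt i : ℝ)) / (n.factorial : ℝ) := by rw [Finset.sum_div]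
    _ ≤ (((n+1) * n.factorial : ℕ) : ℝ) / (n.factorial : ℝ) := by
        gcongr
        exact_mod_cast h1
    _ = 1 + n := by
        rw [Nat.cast_mul]
        rw [mul_div_assoc, div_self (ne_of_gt hK), mul_one]
        push_cast
        ring
end

section
/- Let P = {(A_i, B_i) : i ∈ [m]} be a skew Bollobás system with A_i, B_i ⊆ [n]. Then ∑_{i=1}^m ((1 + |A_i| + |B_i|) · binom(|A_i|+|B_i|, |A_i|))^{-1} ≤ 1. -/
open Finset

namespace SkewBollobasAux

variable {N : ℕ}

/-- Target rank of a value `v ∈ V`: values in `VA` go to the bottom ranks (keeping their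
relative order), the single leftover value goes to rank `a`, values of `VB` go to the top. -/
def dfun (VA VB V : Finset (Fin N)) {a b : ℕ} (hVA : VA.card = a) (hVB : VB.card = b)
    (v : {v : Fin N // v ∈ V}) : Fin (a + b + 1) :=
  if h : v.1 ∈ VA then
    ⟨(((VA.orderIsoOfFin hVA).symm ⟨v.1, h⟩ : Fin a) : ℕ), by
      have := ((VA.orderIsoOfFin hVA).symm ⟨v.1, h⟩).isLt; omega⟩
  else if h' : v.1 ∈ VB then
    ⟨a + 1 + (((VB.orderIsoOfFin hVB).symm ⟨v.1, h'⟩ : Fin b) : ℕ), by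
      have := ((VB.orderIsoOfFin hVB).symm ⟨v.1, h'⟩).isLt; omega⟩
  else ⟨a, by omega⟩

theorem dfun_val_of_mem_VA (VA VB V : Finset (Fin N)) {a b : ℕ} (hVA : VA.card = a)
    (hVB : VB.card = b) (v : {v : Fin N // v ∈ V}) (h : v.1 ∈ VA) :
    ((dfun VA VB V hVA hVB v : Fin (a+b+1)) : ℕ) < a := by
  unfold dfun
  rw [dif_pos h]
  exact ((VA.orderIsoOfFin hVA).symm ⟨v.1, h⟩).isLt

theorem dfun_val_of_mem_VB (VA VB V : Finset (Fin N)) {a b : ℕ} (hVA : VA.card = a)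
    (hVB : VB.card = b) (v : {v : Fin N // v ∈ V}) (h : v.1 ∉ VA) (h' : v.1 ∈ VB) :
    a < ((dfun VA VB V hVA hVB v : Fin (a+b+1)) : ℕ) := by
  unfold dfun
  rw [dif_neg h, dif_pos h']
  show a < a + 1 + (((VB.orderIsoOfFin hVB).symm ⟨v.1, h'⟩ : Fin b) : ℕ)
  omega

theorem dfun_val_of_none (VA VB V : Finset (Fin N)) {a b : ℕ} (hVA : VA.card = a)
    (hVB : VB.card = b) (v : {v : Fin N // v ∈ V}) (h : v.1 ∉ VA) (h' : v.1 ∉ VB) :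
    ((dfun VA VB V hVA hVB v : Fin (a+b+1)) : ℕ) = a := by
  unfold dfun
  rw [dif_neg h, dif_neg h']

theorem dfun_inj (VA VB V : Finset (Fin N)) {a b : ℕ} (hVA : VA.card = a) (hVB : VB.card = b)
    (vx : Fin N) (hdisj : ∀ v ∈ VA, v ∉ VB)
    (hcov : ∀ v ∈ V, v ∉ VA → v ∉ VB → v = vx) :
    Function.Injective (dfun VA VB V hVA hVB) := by
  intro u v huv
  unfold dfun at huv
  by_cases h1 : u.1 ∈ VA <;> by_cases h2 : v.1 ∈ VA
  · rw [dif_pos h1, dif_pos h2] at huv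
    simp only [Fin.mk.injEq] at huv
    have h6 : (⟨u.1, h1⟩ : {z : Fin N // z ∈ VA}) = ⟨v.1, h2⟩ :=
      (VA.orderIsoOfFin hVA).symm.injective (Fin.ext huv)
    have h7 := Subtype.ext_iff.mp h6
    exact Subtype.ext h7
  · rw [dif_pos h1, dif_neg h2] at huv
    have hu := ((VA.orderIsoOfFin hVA).symm ⟨u.1, h1⟩).isLt
    by_cases h3 : v.1 ∈ VB
    · rw [dif_pos h3] at huv; simp only [Fin.mk.injEq] at huv; omega
    · rw [dif_neg h3] at huv; simp only [Fin.mk.injEq] at huv; omega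
  · rw [dif_neg h1, dif_pos h2] at huv
    have hv := ((VA.orderIsoOfFin hVA).symm ⟨v.1, h2⟩).isLt
    by_cases h3 : u.1 ∈ VB
    · rw [dif_pos h3] at huv; simp only [Fin.mk.injEq] at huv; omega
    · rw [dif_neg h3] at huv; simp only [Fin.mk.injEq] at huv; omega
  · rw [dif_neg h1, dif_neg h2] at huv
    by_cases h3 : u.1 ∈ VB <;> by_cases h4 : v.1 ∈ VB
    · rw [dif_pos h3, dif_pos h4] at huv
      simp only [Fin.mk.injEq] at huv
      have h6 : (⟨u.1, h3⟩ : {z : Fin N // z ∈ VB}) = ⟨v.1, h4⟩ :=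
        (VB.orderIsoOfFin hVB).symm.injective (Fin.ext (by omega))
      have h7 := Subtype.ext_iff.mp h6
      exact Subtype.ext h7
    · rw [dif_pos h3, dif_neg h4] at huv
      simp only [Fin.mk.injEq] at huv
      have := ((VB.orderIsoOfFin hVB).symm ⟨u.1, h3⟩).isLt; omega
    · rw [dif_neg h3, dif_pos h4] at huv
      simp only [Fin.mk.injEq] at huv
      have := ((VB.orderIsoOfFin hVB).symm ⟨v.1, h4⟩).isLt; omega
    · have hu := hcov u.1 u.2 h1 h3
      have hv := hcov v.1 v.2 h2 h4
      exact Subtype.ext (hu.trans hv.symm)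

/-- The sorting permutation. -/
noncomputable def csort (VA VB V : Finset (Fin N)) {a b : ℕ} (hVA : VA.card = a) (hVB : VB.card = b)
    (hV : V.card = a + b + 1)
    (hinj : Function.Injective (dfun VA VB V hVA hVB)) : Equiv.Perm (Fin N) :=
  Equiv.Perm.subtypeCongr
    ((Equiv.ofBijective _ ((Fintype.bijective_iff_injective_and_card _).2
        ⟨hinj, by simp [Fintype.card_coe, hV]⟩)).trans (V.orderIsoOfFin hV).toEquiv)
    (Equiv.refl _)

theorem csort_apply_mem (VA VB V : Finset (Fin N)) {a b : ℕ} (hVA : VA.card = a)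
    (hVB : VB.card = b) (hV : V.card = a + b + 1)
    (hinj : Function.Injective (dfun VA VB V hVA hVB)) {v : Fin N} (h : v ∈ V) :
    csort VA VB V hVA hVB hV hinj v
      = ↑(V.orderIsoOfFin hV (dfun VA VB V hVA hVB ⟨v, h⟩)) := by
  unfold csort
  rw [Equiv.Perm.subtypeCongr.left_apply _ _ h]
  rfl

theorem csort_apply_not_mem (VA VB V : Finset (Fin N)) {a b : ℕ} (hVA : VA.card = a)
    (hVB : VB.card = b) (hV : V.card = a + b + 1)
    (hinj : Function.Injective (dfun VA VB V hVA hVB)) {v : Fin N} (h : v ∉ V) :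
    csort VA VB V hVA hVB hV hinj v = v := by
  unfold csort
  rw [Equiv.Perm.subtypeCongr.right_apply _ _ h]
  rfl

theorem csort_image (VA VB V : Finset (Fin N)) {a b : ℕ} (hVA : VA.card = a)
    (hVB : VB.card = b) (hV : V.card = a + b + 1)
    (hinj : Function.Injective (dfun VA VB V hVA hVB)) :
    V.image (csort VA VB V hVA hVB hV hinj) = V := by
  apply Finset.eq_of_subset_of_card_le
  · intro w hw
    obtain ⟨v, hv, rfl⟩ := Finset.mem_image.1 hw
    rw [csort_apply_mem VA VB V hVA hVB hV hinj hv]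
    exact (V.orderIsoOfFin hV _).2
  · rw [Finset.card_image_of_injective _ (Equiv.injective _)]

theorem csort_congr {VA₁ VA₂ VB₁ VB₂ V₁ V₂ : Finset (Fin N)} {a b : ℕ}
    (h1 : VA₁ = VA₂) (h2 : VB₁ = VB₂) (h3 : V₁ = V₂)
    (hVA₁ : VA₁.card = a) (hVB₁ : VB₁.card = b) (hV₁ : V₁.card = a + b + 1)
    (hinj₁ : Function.Injective (dfun VA₁ VB₁ V₁ hVA₁ hVB₁))
    (hVA₂ : VA₂.card = a) (hVB₂ : VB₂.card = b) (hV₂ : V₂.card = a + b + 1)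
    (hinj₂ : Function.Injective (dfun VA₂ VB₂ V₂ hVA₂ hVB₂)) :
    csort VA₁ VB₁ V₁ hVA₁ hVB₁ hV₁ hinj₁ = csort VA₂ VB₂ V₂ hVA₂ hVB₂ hV₂ hinj₂ := by
  subst h1; subst h2; subst h3
  rfl

theorem orderIsoOfFin_congr {α : Type*} [LinearOrder α] {s t : Finset α} (hst : s = t)
    {k : ℕ} (hs : s.card = k) (ht : t.card = k) (j : Fin k) :
    (↑(s.orderIsoOfFin hs j) : α) = ↑(t.orderIsoOfFin ht j) := by
  subst hst; rfl

def SS (x : Fin N) (A' B' : Finset (Fin N)) : Finset (Fin N) := insert x (A' ∪ B')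

theorem ssA (x : Fin N) (A' B' : Finset (Fin N)) : A' ⊆ SS x A' B' :=
  fun v hv => mem_insert_of_mem (mem_union_left _ hv)

theorem ssB (x : Fin N) (A' B' : Finset (Fin N)) : B' ⊆ SS x A' B' :=
  fun v hv => mem_insert_of_mem (mem_union_right _ hv)

theorem xSS (x : Fin N) (A' B' : Finset (Fin N)) : x ∈ SS x A' B' := mem_insert_self _ _

theorem cardVA (A' : Finset (Fin N)) (σ : Equiv.Perm (Fin N)) :
    (A'.image ⇑σ).card = A'.card := card_image_of_injective _ σ.injective

theorem cardSS (x : Fin N) (A' B' : Finset (Fin N)) (hAB : Disjoint A' B')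
    (hxA : x ∉ A') (hxB : x ∉ B') : (SS x A' B').card = A'.card + B'.card + 1 := by
  rw [SS, card_insert_of_notMem (by simp [hxA, hxB]), card_union_of_disjoint hAB]

theorem cardV (x : Fin N) (A' B' : Finset (Fin N)) (hAB : Disjoint A' B')
    (hxA : x ∉ A') (hxB : x ∉ B') (σ : Equiv.Perm (Fin N)) :
    ((SS x A' B').image ⇑σ).card = A'.card + B'.card + 1 := by
  rw [card_image_of_injective _ σ.injective, cardSS x A' B' hAB hxA hxB]

theorem xV (x : Fin N) (A' B' : Finset (Fin N)) (σ : Equiv.Perm (Fin N)) :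
    σ x ∈ (SS x A' B').image ⇑σ := mem_image_of_mem _ (xSS x A' B')

theorem cardW (x : Fin N) (A' B' : Finset (Fin N)) (hAB : Disjoint A' B')
    (hxA : x ∉ A') (hxB : x ∉ B') (σ : Equiv.Perm (Fin N)) :
    (((SS x A' B').image ⇑σ).erase (σ x)).card = A'.card + B'.card := by
  rw [card_erase_of_mem (xV x A' B' σ), cardV x A' B' hAB hxA hxB σ]
  omega

theorem xVA (x : Fin N) (A' : Finset (Fin N)) (hxA : x ∉ A') (σ : Equiv.Perm (Fin N)) :
    σ x ∉ A'.image ⇑σ := by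
  intro h
  obtain ⟨y, hy, he⟩ := Finset.mem_image.1 h
  rw [σ.injective he] at hy
  exact hxA hy

theorem disjV (A' B' : Finset (Fin N)) (hAB : Disjoint A' B') (σ : Equiv.Perm (Fin N)) :
    ∀ v ∈ A'.image ⇑σ, v ∉ B'.image ⇑σ := by
  intro v h1 h2
  obtain ⟨y, hy, hey⟩ := Finset.mem_image.1 h1
  obtain ⟨z, hz, hez⟩ := Finset.mem_image.1 h2
  have : y = z := σ.injective (hey.trans hez.symm)
  exact (Finset.disjoint_left.1 hAB hy) (this ▸ hz)

theorem covV (x : Fin N) (A' B' : Finset (Fin N)) (σ : Equiv.Perm (Fin N)) :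
    ∀ v ∈ (SS x A' B').image ⇑σ, v ∉ A'.image ⇑σ → v ∉ B'.image ⇑σ → v = σ x := by
  intro v hv h1 h2
  obtain ⟨y, hy, rfl⟩ := Finset.mem_image.1 hv
  rcases Finset.mem_insert.1 hy with h | h
  · rw [h]
  · rcases Finset.mem_union.1 h with h | h
    · exact absurd (mem_image_of_mem _ h) h1
    · exact absurd (mem_image_of_mem _ h) h2

theorem injd (x : Fin N) (A' B' : Finset (Fin N)) (hAB : Disjoint A' B')
    (hxA : x ∉ A') (hxB : x ∉ B') (σ : Equiv.Perm (Fin N)) :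
    Function.Injective (dfun (A'.image ⇑σ) (B'.image ⇑σ) ((SS x A' B').image ⇑σ)
      (cardVA A' σ) (cardVA B' σ)) :=
  dfun_inj _ _ _ _ _ (σ x) (disjV A' B' hAB σ) (covV x A' B' σ)

/-- The per-permutation sorting permutation. -/
noncomputable def cperm (x : Fin N) (A' B' : Finset (Fin N)) (hAB : Disjoint A' B')
    (hxA : x ∉ A') (hxB : x ∉ B') (σ : Equiv.Perm (Fin N)) : Equiv.Perm (Fin N) :=
  csort (A'.image ⇑σ) (B'.image ⇑σ) ((SS x A' B').image ⇑σ)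
    (cardVA A' σ) (cardVA B' σ) (cardV x A' B' hAB hxA hxB σ)
    (injd x A' B' hAB hxA hxB σ)

theorem imgS (x : Fin N) (A' B' : Finset (Fin N)) (hAB : Disjoint A' B')
    (hxA : x ∉ A') (hxB : x ∉ B') (σ : Equiv.Perm (Fin N)) :
    (SS x A' B').image ⇑(σ.trans (cperm x A' B' hAB hxA hxB σ)) = (SS x A' B').image ⇑σ := by
  have h : ⇑(σ.trans (cperm x A' B' hAB hxA hxB σ)) = ⇑(cperm x A' B' hAB hxA hxB σ) ∘ ⇑σ := rfl
  rw [h, ← Finset.image_image]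
  exact csort_image _ _ _ _ _ _ _

theorem oIso_lt (V : Finset (Fin N)) {k : ℕ} (hV : V.card = k) (i j : Fin k) :
    (↑(V.orderIsoOfFin hV i) : Fin N) < ↑(V.orderIsoOfFin hV j) ↔ i < j := by
  rw [Finset.coe_orderIsoOfFin_apply, Finset.coe_orderIsoOfFin_apply]
  exact OrderEmbedding.lt_iff_lt _

theorem memE (x : Fin N) (A' B' : Finset (Fin N)) (hAB : Disjoint A' B')
    (hxA : x ∉ A') (hxB : x ∉ B') (σ : Equiv.Perm (Fin N)) :
    (∀ v ∈ A', (σ.trans (cperm x A' B' hAB hxA hxB σ)) v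
        < (σ.trans (cperm x A' B' hAB hxA hxB σ)) x) ∧
    (∀ v ∈ B', (σ.trans (cperm x A' B' hAB hxA hxB σ)) x
        < (σ.trans (cperm x A' B' hAB hxA hxB σ)) v) := by
  have hxd : ((dfun (A'.image ⇑σ) (B'.image ⇑σ) ((SS x A' B').image ⇑σ)
      (cardVA A' σ) (cardVA B' σ) ⟨σ x, xV x A' B' σ⟩) : ℕ) = A'.card :=
    dfun_val_of_none _ _ _ _ _ _ (xVA x A' hxA σ) (xVA x B' hxB σ)
  constructor
  · intro v hv
    have hvS : σ v ∈ (SS x A' B').image ⇑σ := mem_image_of_mem _ (ssA x A' B' hv)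
    show cperm x A' B' hAB hxA hxB σ (σ v) < cperm x A' B' hAB hxA hxB σ (σ x)
    rw [cperm, csort_apply_mem _ _ _ _ _ _ _ hvS, csort_apply_mem _ _ _ _ _ _ _ (xV x A' B' σ),
      oIso_lt, Fin.lt_def, hxd]
    exact dfun_val_of_mem_VA _ _ _ _ _ _ (mem_image_of_mem _ hv)
  · intro v hv
    have hvS : σ v ∈ (SS x A' B').image ⇑σ := mem_image_of_mem _ (ssB x A' B' hv)
    show cperm x A' B' hAB hxA hxB σ (σ x) < cperm x A' B' hAB hxA hxB σ (σ v)
    rw [cperm, csort_apply_mem _ _ _ _ _ _ _ (xV x A' B' σ), csort_apply_mem _ _ _ _ _ _ _ hvS,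
      oIso_lt, Fin.lt_def, hxd]
    exact dfun_val_of_mem_VB _ _ _ _ _ _
      (fun h => disjV A' B' hAB σ _ h (mem_image_of_mem _ hv)) (mem_image_of_mem _ hv)

/-- rank of `σ x` among the values of `σ` on `S`. -/
noncomputable def rk (x : Fin N) (A' B' : Finset (Fin N)) (hAB : Disjoint A' B')
    (hxA : x ∉ A') (hxB : x ∉ B') (σ : Equiv.Perm (Fin N)) : Fin (A'.card + B'.card + 1) :=
  (((SS x A' B').image ⇑σ).orderIsoOfFin (cardV x A' B' hAB hxA hxB σ)).symm
    ⟨σ x, xV x A' B' σ⟩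

theorem x_recover (x : Fin N) (A' B' : Finset (Fin N)) (hAB : Disjoint A' B')
    (hxA : x ∉ A') (hxB : x ∉ B') (σ : Equiv.Perm (Fin N)) :
    σ x = ↑(((SS x A' B').image ⇑σ).orderIsoOfFin (cardV x A' B' hAB hxA hxB σ)
      (rk x A' B' hAB hxA hxB σ)) := by
  rw [rk, OrderIso.apply_symm_apply]

/-- set of ranks (inside `W = V \ {σ x}`) occupied by the values of `A'`. -/
noncomputable def sfin (x : Fin N) (A' B' : Finset (Fin N)) (hAB : Disjoint A' B')
    (hxA : x ∉ A') (hxB : x ∉ B') (σ : Equiv.Perm (Fin N)) :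
    Finset (Fin (A'.card + B'.card)) :=
  univ.filter (fun j =>
    (↑((((SS x A' B').image ⇑σ).erase (σ x)).orderIsoOfFin (cardW x A' B' hAB hxA hxB σ) j)
      : Fin N) ∈ A'.image ⇑σ)

theorem VA_eq (x : Fin N) (A' B' : Finset (Fin N)) (hAB : Disjoint A' B')
    (hxA : x ∉ A') (hxB : x ∉ B') (σ : Equiv.Perm (Fin N)) :
    A'.image ⇑σ = (sfin x A' B' hAB hxA hxB σ).image (fun j =>
      (↑((((SS x A' B').image ⇑σ).erase (σ x)).orderIsoOfFin (cardW x A' B' hAB hxA hxB σ) j)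
        : Fin N)) := by
  ext v
  constructor
  · intro hv
    have hvV : v ∈ (SS x A' B').image ⇑σ := Finset.image_subset_image (ssA x A' B') hv
    have hvW : v ∈ ((SS x A' B').image ⇑σ).erase (σ x) :=
      Finset.mem_erase.2 ⟨fun he => xVA x A' hxA σ (he ▸ hv), hvV⟩
    refine Finset.mem_image.2 ⟨((((SS x A' B').image ⇑σ).erase (σ x)).orderIsoOfFin
      (cardW x A' B' hAB hxA hxB σ)).symm ⟨v, hvW⟩, ?_, ?_⟩
    · refine Finset.mem_filter.2 ⟨Finset.mem_univ _, ?_⟩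
      rw [OrderIso.apply_symm_apply]
      exact hv
    · rw [OrderIso.apply_symm_apply]
  · intro hv
    obtain ⟨j, hj, rfl⟩ := Finset.mem_image.1 hv
    exact (Finset.mem_filter.1 hj).2

theorem card_sfin (x : Fin N) (A' B' : Finset (Fin N)) (hAB : Disjoint A' B')
    (hxA : x ∉ A') (hxB : x ∉ B') (σ : Equiv.Perm (Fin N)) :
    (sfin x A' B' hAB hxA hxB σ).card = A'.card := by
  have hinj : Function.Injective (fun j : Fin (A'.card + B'.card) =>
      (↑((((SS x A' B').image ⇑σ).erase (σ x)).orderIsoOfFin (cardW x A' B' hAB hxA hxB σ) j)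
        : Fin N)) := by
    intro i j hij
    exact ((((SS x A' B').image ⇑σ).erase (σ x)).orderIsoOfFin
      (cardW x A' B' hAB hxA hxB σ)).injective (Subtype.ext hij)
  calc (sfin x A' B' hAB hxA hxB σ).card
      = ((sfin x A' B' hAB hxA hxB σ).image _).card :=
        (card_image_of_injective _ hinj).symm
    _ = (A'.image ⇑σ).card := by rw [← VA_eq x A' B' hAB hxA hxB σ]
    _ = A'.card := cardVA A' σ

theorem VB_eq (x : Fin N) (A' B' : Finset (Fin N)) (hAB : Disjoint A' B')
    (hxA : x ∉ A') (hxB : x ∉ B') (σ : Equiv.Perm (Fin N)) :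
    B'.image ⇑σ = (((SS x A' B').image ⇑σ).erase (σ x)) \ (A'.image ⇑σ) := by
  ext v
  constructor
  · intro hv
    refine Finset.mem_sdiff.2 ⟨Finset.mem_erase.2 ⟨fun he => xVA x B' hxB σ (he ▸ hv),
      Finset.image_subset_image (ssB x A' B') hv⟩, fun hvA => disjV A' B' hAB σ v hvA hv⟩
  · intro hv
    obtain ⟨hve, hvA⟩ := Finset.mem_sdiff.1 hv
    obtain ⟨hne, hvV⟩ := Finset.mem_erase.1 hve
    by_contra hvB
    exact hne (covV x A' B' σ v hvV hvA hvB)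

theorem key_inj (x : Fin N) (A' B' : Finset (Fin N)) (hAB : Disjoint A' B')
    (hxA : x ∉ A') (hxB : x ∉ B') (σ τ : Equiv.Perm (Fin N))
    (h1 : σ.trans (cperm x A' B' hAB hxA hxB σ) = τ.trans (cperm x A' B' hAB hxA hxB τ))
    (h2 : rk x A' B' hAB hxA hxB σ = rk x A' B' hAB hxA hxB τ)
    (h3 : sfin x A' B' hAB hxA hxB σ = sfin x A' B' hAB hxA hxB τ) : σ = τ := by
  have hV : (SS x A' B').image ⇑σ = (SS x A' B').image ⇑τ := by
    rw [← imgS x A' B' hAB hxA hxB σ, ← imgS x A' B' hAB hxA hxB τ, h1]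
  have hx : σ x = τ x := by
    rw [x_recover x A' B' hAB hxA hxB σ, x_recover x A' B' hAB hxA hxB τ, h2]
    exact orderIsoOfFin_congr hV _ _ _
  have hW : ((SS x A' B').image ⇑σ).erase (σ x) = ((SS x A' B').image ⇑τ).erase (τ x) := by
    rw [hV, hx]
  have hVA : A'.image ⇑σ = A'.image ⇑τ := by
    rw [VA_eq x A' B' hAB hxA hxB σ, VA_eq x A' B' hAB hxA hxB τ, h3]
    exact Finset.image_congr (fun j _ => orderIsoOfFin_congr hW _ _ j)
  have hVB : B'.image ⇑σ = B'.image ⇑τ := by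
    rw [VB_eq x A' B' hAB hxA hxB σ, VB_eq x A' B' hAB hxA hxB τ, hW, hVA]
  have hc : cperm x A' B' hAB hxA hxB σ = cperm x A' B' hAB hxA hxB τ := by
    unfold cperm
    exact csort_congr hVA hVB hV _ _ _ _ _ _ _ _
  ext y
  have hy := DFunLike.congr_fun h1 y
  rw [hc] at hy
  simp only [Equiv.trans_apply] at hy
  exact congrArg Fin.val ((cperm x A' B' hAB hxA hxB τ).injective hy)
theorem key (N : ℕ) (x : Fin N) (A' B' : Finset (Fin N))
    (hAB : Disjoint A' B') (hxA : x ∉ A') (hxB : x ∉ B') :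
    Nat.factorial N ≤
      (univ.filter (fun σ : Equiv.Perm (Fin N) =>
        (∀ v ∈ A', σ v < σ x) ∧ (∀ v ∈ B', σ x < σ v))).card *
      ((A'.card + B'.card + 1) * ((A'.card + B'.card).choose A'.card)) := by
  classical
  have main : (univ : Finset (Equiv.Perm (Fin N))).card ≤
      ((univ.filter (fun σ : Equiv.Perm (Fin N) =>
        (∀ v ∈ A', σ v < σ x) ∧ (∀ v ∈ B', σ x < σ v))) ×ˢ
       ((univ : Finset (Fin (A'.card + B'.card + 1))) ×ˢ
        (univ.filter (fun s : Finset (Fin (A'.card + B'.card)) => s.card = A'.card)))).card := by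
    apply Finset.card_le_card_of_injOn
      (fun σ => (σ.trans (cperm x A' B' hAB hxA hxB σ), rk x A' B' hAB hxA hxB σ,
        sfin x A' B' hAB hxA hxB σ))
    · intro σ _
      simp only [Finset.mem_coe, Finset.mem_product, Finset.mem_filter, Finset.mem_univ, true_and]
      exact ⟨memE x A' B' hAB hxA hxB σ, card_sfin x A' B' hAB hxA hxB σ⟩
    · intro σ _ τ _ h
      simp only [Prod.mk.injEq] at h
      exact key_inj x A' B' hAB hxA hxB σ τ h.1 h.2.1 h.2.2
  have hΩ : (univ : Finset (Equiv.Perm (Fin N))).card = Nat.factorial N := by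
    rw [Finset.card_univ, Fintype.card_perm, Fintype.card_fin]
  have hfl : (univ.filter (fun s : Finset (Fin (A'.card + B'.card)) => s.card = A'.card)).card
      = (A'.card + B'.card).choose A'.card := by
    have h1 := Fintype.card_finset_len (α := Fin (A'.card + B'.card)) A'.card
    rw [Fintype.card_fin] at h1
    rw [← h1, Fintype.card_subtype]
  rw [hΩ, Finset.card_product, Finset.card_product, Finset.card_univ, Fintype.card_fin, hfl]
    at main
  exact main

end SkewBollobasAux

theorem skew_bollobas_strengthened (n m : ℕ) (A B : Fin m → Finset (Fin n))
    (hdisj : ∀ i, A i ∩ B i = ∅)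
    (hskew : ∀ i j, i < j → (A i ∩ B j).Nonempty) :
    ∑ i, ((1 + (A i).card + (B i).card : ℝ) *
      (((A i).card + (B i).card).choose (A i).card : ℝ))⁻¹ ≤ 1 := by
  classical
  set E : Fin m → Finset (Equiv.Perm (Fin (n+1))) := fun i =>
    Finset.univ.filter (fun σ : Equiv.Perm (Fin (n+1)) =>
      (∀ v ∈ (A i).map Fin.castSuccEmb, σ v < σ (Fin.last n)) ∧
      (∀ v ∈ (B i).map Fin.castSuccEmb, σ (Fin.last n) < σ v)) with hE
  have hlastA : ∀ s : Finset (Fin n), Fin.last n ∉ s.map Fin.castSuccEmb := by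
    intro s h
    obtain ⟨y, _, he⟩ := Finset.mem_map.1 h
    have : (Fin.castSucc y : Fin (n+1)) < Fin.last n := Fin.castSucc_lt_last y
    rw [show (Fin.castSuccEmb y : Fin (n+1)) = Fin.castSucc y from rfl] at he
    exact absurd he this.ne
  have hkey : ∀ i, Nat.factorial (n+1) ≤ (E i).card *
      (((A i).card + (B i).card + 1) * (((A i).card + (B i).card).choose (A i).card)) := by
    intro i
    have h := SkewBollobasAux.key (n+1) (Fin.last n)
      ((A i).map Fin.castSuccEmb) ((B i).map Fin.castSuccEmb)
      ((Finset.disjoint_map _).2 (Finset.disjoint_iff_inter_eq_empty.2 (hdisj i)))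
      (hlastA (A i)) (hlastA (B i))
    simpa [Finset.card_map, hE] using h
  have hdisjE : ∀ i j : Fin m, i ≠ j → Disjoint (E i) (E j) := by
    have base : ∀ i j : Fin m, i < j → Disjoint (E i) (E j) := by
      intro i j hij
      rw [Finset.disjoint_left]
      intro σ hσi hσj
      obtain ⟨y, hy⟩ := hskew i j hij
      rw [hE] at hσi hσj
      have h1 := (Finset.mem_filter.1 hσi).2.1 (Fin.castSucc y)
        (Finset.mem_map_of_mem _ (Finset.mem_of_mem_inter_left hy))
      have h2 := (Finset.mem_filter.1 hσj).2.2 (Fin.castSucc y)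
        (Finset.mem_map_of_mem _ (Finset.mem_of_mem_inter_right hy))
      exact absurd (h1.trans h2) (lt_irrefl _)
    intro i j hij
    rcases lt_or_gt_of_ne hij with h | h
    · exact base i j h
    · exact (base j i h).symm
  have hsum : ∑ i, (E i).card ≤ Nat.factorial (n+1) := by
    calc ∑ i, (E i).card = (Finset.univ.biUnion E).card :=
          (Finset.card_biUnion (fun i _ j _ h => hdisjE i j h)).symm
      _ ≤ (Finset.univ : Finset (Equiv.Perm (Fin (n+1)))).card :=
          Finset.card_le_card (Finset.subset_univ _)
      _ = Nat.factorial (n+1) := by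
          rw [Finset.card_univ, Fintype.card_perm, Fintype.card_fin]
  have hF : (0:ℝ) < Nat.factorial (n+1) := by positivity
  have hterm : ∀ i : Fin m, ((1 + (A i).card + (B i).card : ℝ) *
      (((A i).card + (B i).card).choose (A i).card : ℝ))⁻¹
      ≤ (E i).card / Nat.factorial (n+1) := by
    intro i
    have hch : 0 < ((A i).card + (B i).card).choose (A i).card :=
      Nat.choose_pos (Nat.le_add_right _ _)
    have hw : (0:ℝ) < (1 + (A i).card + (B i).card : ℝ) *
        (((A i).card + (B i).card).choose (A i).card : ℝ) := by positivity
    rw [← one_div, div_le_div_iff₀ hw hF, one_mul]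
    have := hkey i
    calc ((n+1).factorial : ℝ) ≤ ((E i).card *
          (((A i).card + (B i).card + 1) * (((A i).card + (B i).card).choose (A i).card)) : ℕ) :=
          by exact_mod_cast this
      _ = (E i).card * ((1 + (A i).card + (B i).card : ℝ) *
          (((A i).card + (B i).card).choose (A i).card : ℝ)) := by push_cast; ring
  calc ∑ i, ((1 + (A i).card + (B i).card : ℝ) *
      (((A i).card + (B i).card).choose (A i).card : ℝ))⁻¹
      ≤ ∑ i, ((E i).card : ℝ) / Nat.factorial (n+1) :=
        Finset.sum_le_sum (fun i _ => hterm i)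
    _ = (∑ i, ((E i).card : ℝ)) / Nat.factorial (n+1) := by rw [Finset.sum_div]
    _ ≤ 1 := by
        rw [div_le_one hF]
        exact_mod_cast hsum
end

section
/- Let X = [n] be the disjoint union of sets X_1, ..., X_r, and suppose (A_i, B_i), i ∈ [m], is a skew Bollobás system of pairs of subsets of X satisfying |A_i ∩ X_k| = a_k and |B_i ∩ X_k| = b_k for all i ∈ [m] and k ∈ [r], for fixed integers a_k, b_k. Then m ≤ ∏_{k=1}^r binom(a_k + b_k, a_k). -/
open Finset Equiv Matrix

namespace AlonAux

variable {a b : ℕ}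

abbrev Sub (a b : ℕ) := {S : Finset (Fin (a + b)) // S.card = a}

lemma card_compl' (S : Sub a b) : (S.1ᶜ).card = b := by
  rw [Finset.card_compl, Fintype.card_fin, S.2]; omega

noncomputable def fA (S : Sub a b) : Fin a → Fin (a + b) := S.1.orderEmbOfFin S.2

noncomputable def fB (S : Sub a b) : Fin b → Fin (a + b) := (S.1ᶜ).orderEmbOfFin (card_compl' S)

lemma fA_mem (S : Sub a b) (j : Fin a) : fA S j ∈ S.1 := S.1.orderEmbOfFin_mem S.2 j

lemma fB_mem (S : Sub a b) (j : Fin b) : fB S j ∈ S.1ᶜ := (S.1ᶜ).orderEmbOfFin_mem _ j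

lemma fA_inj (S : Sub a b) : Function.Injective (fA S) := (S.1.orderEmbOfFin S.2).injective

lemma fB_inj (S : Sub a b) : Function.Injective (fB S) := ((S.1ᶜ).orderEmbOfFin _).injective

lemma fA_surj (S : Sub a b) {x : Fin (a + b)} (hx : x ∈ S.1) : ∃ j, fA S j = x := by
  have : x ∈ Set.range (S.1.orderEmbOfFin S.2) := by
    rw [Finset.range_orderEmbOfFin]; exact hx
  exact this

lemma fB_surj (S : Sub a b) {x : Fin (a + b)} (hx : x ∈ S.1ᶜ) : ∃ j, fB S j = x := by
  have : x ∈ Set.range ((S.1ᶜ).orderEmbOfFin (card_compl' S)) := by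
    rw [Finset.range_orderEmbOfFin]; exact hx
  exact this

noncomputable def eS (S : Sub a b) : (Fin a ⊕ Fin b) ≃ Fin (a + b) := by
  apply Equiv.ofBijective (Sum.elim (fA S) (fB S))
  rw [Fintype.bijective_iff_injective_and_card]
  refine ⟨?_, by simp⟩
  rintro (u | u) (v | v) huv
  · simp only [Sum.elim_inl] at huv; exact congrArg Sum.inl (fA_inj S huv)
  · exfalso
    have h1 := fA_mem S u
    have h2 := fB_mem S v
    rw [Sum.elim_inl, Sum.elim_inr] at huv
    rw [huv] at h1
    exact (Finset.mem_compl.mp h2) h1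
  · exfalso
    have h1 := fB_mem S u
    have h2 := fA_mem S v
    rw [Sum.elim_inr, Sum.elim_inl] at huv
    rw [← huv] at h2
    exact (Finset.mem_compl.mp h1) h2
  · simp only [Sum.elim_inr] at huv; exact congrArg Sum.inr (fB_inj S huv)

@[simp] lemma eS_inl (S : Sub a b) (j : Fin a) : eS S (Sum.inl j) = fA S j := rfl

@[simp] lemma eS_inr (S : Sub a b) (j : Fin b) : eS S (Sum.inr j) = fB S j := rfl

noncomputable def perm0 (S : Sub a b) : Equiv.Perm (Fin (a + b)) :=
  finSumFinEquiv.symm.trans (eS S)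

noncomputable def bigPerm (S : Sub a b) (π : Equiv.Perm (Fin a)) (τ : Equiv.Perm (Fin b)) :
    Equiv.Perm (Fin (a + b)) :=
  finSumFinEquiv.symm.trans ((Equiv.sumCongr π τ).trans (eS S))

lemma bigPerm_inl (S : Sub a b) (π : Equiv.Perm (Fin a)) (τ : Equiv.Perm (Fin b)) (j : Fin a) :
    bigPerm S π τ (finSumFinEquiv (Sum.inl j)) = fA S (π j) := by
  simp [bigPerm]

lemma bigPerm_inr (S : Sub a b) (π : Equiv.Perm (Fin a)) (τ : Equiv.Perm (Fin b)) (j : Fin b) :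
    bigPerm S π τ (finSumFinEquiv (Sum.inr j)) = fB S (τ j) := by
  simp [bigPerm]

lemma bigPerm_eq_mul (S : Sub a b) (π : Equiv.Perm (Fin a)) (τ : Equiv.Perm (Fin b)) :
    bigPerm S π τ = (perm0 S) * (finSumFinEquiv.permCongr (Equiv.sumCongr π τ)) := by
  ext x
  simp [bigPerm, perm0, Equiv.permCongr, Equiv.Perm.mul_apply]

lemma sign_bigPerm (S : Sub a b) (π : Equiv.Perm (Fin a)) (τ : Equiv.Perm (Fin b)) :
    Equiv.Perm.sign (bigPerm S π τ)
      = Equiv.Perm.sign (perm0 S) * (Equiv.Perm.sign π * Equiv.Perm.sign τ) := by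
  rw [bigPerm_eq_mul, _root_.map_mul, Equiv.Perm.sign_permCongr, Equiv.Perm.sign_sumCongr]

noncomputable def pack : (Σ _S : Sub a b, Equiv.Perm (Fin a) × Equiv.Perm (Fin b)) →
    Equiv.Perm (Fin (a + b)) :=
  fun x => bigPerm x.1 x.2.1 x.2.2

lemma image_big (S : Sub a b) (π : Equiv.Perm (Fin a)) (τ : Equiv.Perm (Fin b)) :
    Finset.image (fun j => bigPerm S π τ (finSumFinEquiv (Sum.inl j))) Finset.univ = S.1 := by
  have h1 : (fun j => bigPerm S π τ (finSumFinEquiv (Sum.inl j))) = (fA S) ∘ π := by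
    funext j; exact bigPerm_inl S π τ j
  rw [h1, ← Finset.image_image, Finset.image_univ_equiv]
  ext x
  simp only [Finset.mem_image, Finset.mem_univ, true_and]
  constructor
  · rintro ⟨j, rfl⟩; exact fA_mem S j
  · intro hx; exact fA_surj S hx

lemma pack_bijective : Function.Bijective (pack (a := a) (b := b)) := by
  rw [Fintype.bijective_iff_injective_and_card]
  constructor
  · rintro ⟨S, π, τ⟩ ⟨S', π', τ'⟩ h
    simp only [pack] at h
    have hS : S = S' := by
      apply Subtype.ext
      rw [← image_big S π τ, ← image_big S' π' τ', h]
    subst hS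
    have e1 : ∀ j, fA S (π j) = fA S (π' j) := fun j => by
      rw [← bigPerm_inl S π τ j, ← bigPerm_inl S π' τ' j, h]
    have e2 : ∀ j, fB S (τ j) = fB S (τ' j) := fun j => by
      rw [← bigPerm_inr S π τ j, ← bigPerm_inr S π' τ' j, h]
    have hπ : π = π' := Equiv.ext fun j => fA_inj S (e1 j)
    have hτ : τ = τ' := Equiv.ext fun j => fB_inj S (e2 j)
    rw [hπ, hτ]
  · rw [Fintype.card_sigma, Fintype.card_perm]
    simp only [Fintype.card_prod, Fintype.card_perm, Fintype.card_fin]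
    rw [Finset.sum_const, Finset.card_univ, Fintype.card_finset_len, Fintype.card_fin,
      smul_eq_mul]
    have := Nat.choose_mul_factorial_mul_factorial (Nat.le_add_right a b)
    rw [Nat.add_sub_cancel_left] at this
    rw [← this]
    ring

theorem laplace {R : Type*} [CommRing R] (M : Matrix (Fin (a + b)) (Fin (a + b)) R) :
    M.det = ∑ S : Sub a b, ((Equiv.Perm.sign (perm0 S) : ℤ) : R) *
      ((M.submatrix (fA S) (fun j => finSumFinEquiv (Sum.inl j))).det *
       (M.submatrix (fB S) (fun j => finSumFinEquiv (Sum.inr j))).det) := by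
  rw [Matrix.det_apply']
  rw [← Fintype.sum_bijective pack pack_bijective
    (fun x => ((Equiv.Perm.sign (pack x) : ℤ) : R) * ∏ i, M (pack x i) i)
    (fun σ => ((Equiv.Perm.sign σ : ℤ) : R) * ∏ i, M (σ i) i) (fun x => rfl)]
  rw [← Finset.univ_sigma_univ, Finset.sum_sigma]
  refine Finset.sum_congr rfl fun S _ => ?_
  rw [Matrix.det_apply', Matrix.det_apply', Finset.sum_mul_sum]
  simp only [Finset.mul_sum]
  rw [Fintype.sum_prod_type]
  refine Finset.sum_congr rfl fun π _ => ?_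
  refine Finset.sum_congr rfl fun τ _ => ?_
  have hsign : ((Equiv.Perm.sign (bigPerm S π τ) : ℤ) : R)
      = ((Equiv.Perm.sign (perm0 S) : ℤ) : R)
        * (((Equiv.Perm.sign π : ℤ) : R) * ((Equiv.Perm.sign τ : ℤ) : R)) := by
    rw [sign_bigPerm]
    push_cast
    ring
  have hprod : (∏ i, M (bigPerm S π τ i) i)
      = (∏ j, M (fA S (π j)) (finSumFinEquiv (Sum.inl j)))
        * (∏ j, M (fB S (τ j)) (finSumFinEquiv (Sum.inr j))) := by
    rw [← Equiv.prod_comp finSumFinEquiv (fun i => M (bigPerm S π τ i) i)]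
    rw [Fintype.prod_sum_type]
    congr 1
    · exact Finset.prod_congr rfl fun j _ => by rw [bigPerm_inl]
    · exact Finset.prod_congr rfl fun j _ => by rw [bigPerm_inr]
  show ((Equiv.Perm.sign (bigPerm S π τ) : ℤ) : R) * ∏ i, M (bigPerm S π τ i) i = _
  rw [hsign, hprod]
  simp only [Matrix.submatrix_apply]
  ring

end AlonAux

theorem alon_partition_uniform (n m r : ℕ) (X : Fin r → Finset (Fin n))
    (hX : ∀ k l, k ≠ l → Disjoint (X k) (X l))
    (hcover : Finset.univ.biUnion X = Finset.univ)
    (a b : Fin r → ℕ) (A B : Fin m → Finset (Fin n))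
    (hdisj : ∀ i, A i ∩ B i = ∅)
    (hskew : ∀ i j, i < j → (A i ∩ B j).Nonempty)
    (ha : ∀ i k, (A i ∩ X k).card = a k)
    (hb : ∀ i k, (B i ∩ X k).card = b k) :
    m ≤ ∏ k, (a k + b k).choose (a k) := by
  classical
  have hmem : ∀ x : Fin n, ∃ k, x ∈ X k := by
    intro x
    have hx : x ∈ Finset.univ.biUnion X := by rw [hcover]; exact Finset.mem_univ x
    simpa using Finset.mem_biUnion.mp hx
  let colA : Fin m → (k : Fin r) → Fin (a k) → Fin n :=
    fun i k => (A i ∩ X k).orderEmbOfFin (ha i k)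
  let colB : Fin m → (k : Fin r) → Fin (b k) → Fin n :=
    fun j k => (B j ∩ X k).orderEmbOfFin (hb j k)
  let tv : Fin n → ℝ := fun x => ((x : ℕ) : ℝ)
  have htv : Function.Injective tv := fun x y h => Fin.val_injective (Nat.cast_inj.mp h)
  let w : Fin m → Fin m → (k : Fin r) → Fin (a k + b k) → ℝ :=
    fun i j k q => tv (Sum.elim (colA i k) (colB j k) (finSumFinEquiv.symm q))
  let Mat : Fin m → Fin m → (k : Fin r) → Matrix (Fin (a k + b k)) (Fin (a k + b k)) ℝ :=
    fun i j k => Matrix.of fun p q => (w i j k q) ^ (p : ℕ)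
  let DA : Fin m → (k : Fin r) → AlonAux.Sub (a k) (b k) → ℝ :=
    fun i k s => Matrix.det (Matrix.of fun p q => tv (colA i k q) ^ ((AlonAux.fA s p : ℕ)))
  let DB : Fin m → (k : Fin r) → AlonAux.Sub (a k) (b k) → ℝ :=
    fun j k s => Matrix.det (Matrix.of fun p q => tv (colB j k q) ^ ((AlonAux.fB s p : ℕ)))
  let sg : (k : Fin r) → AlonAux.Sub (a k) (b k) → ℝ :=
    fun k s => ((Equiv.Perm.sign (AlonAux.perm0 s) : ℤ) : ℝ)
  have hlap : ∀ i j k, (Mat i j k).det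
      = ∑ s : AlonAux.Sub (a k) (b k), DA i k s * (sg k s * DB j k s) := by
    intro i j k
    rw [AlonAux.laplace (Mat i j k)]
    refine Finset.sum_congr rfl fun s _ => ?_
    have h1 : (Mat i j k).submatrix (AlonAux.fA s) (fun q => finSumFinEquiv (Sum.inl q))
        = Matrix.of fun p q => tv (colA i k q) ^ ((AlonAux.fA s p : ℕ)) := by
      ext p q
      simp [Mat, w, Matrix.submatrix_apply]
    have h2 : (Mat i j k).submatrix (AlonAux.fB s) (fun q => finSumFinEquiv (Sum.inr q))
        = Matrix.of fun p q => tv (colB j k q) ^ ((AlonAux.fB s p : ℕ)) := by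
      ext p q
      simp [Mat, w, Matrix.submatrix_apply]
    rw [h1, h2]
    show sg k s * (DA i k s * DB j k s) = _
    ring
  let Φ : Fin m → ((k : Fin r) → AlonAux.Sub (a k) (b k)) → ℝ := fun i S => ∏ k, DA i k (S k)
  let Ψ : Fin m → ((k : Fin r) → AlonAux.Sub (a k) (b k)) → ℝ :=
    fun j S => ∏ k, (sg k (S k) * DB j k (S k))
  have pairing : ∀ i j, (∑ S : ((k : Fin r) → AlonAux.Sub (a k) (b k)), Φ i S * Ψ j S)
      = ∏ k, (Mat i j k).det := by
    intro i j
    have hstep : ∀ S : ((k : Fin r) → AlonAux.Sub (a k) (b k)),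
        Φ i S * Ψ j S = ∏ k, (DA i k (S k) * (sg k (S k) * DB j k (S k))) := by
      intro S; rw [← Finset.prod_mul_distrib]
    rw [Finset.sum_congr rfl (fun S _ => hstep S)]
    exact ((Fintype.prod_sum fun k s => DA i k s * (sg k s * DB j k s)).symm).trans
      (Finset.prod_congr rfl fun k _ => (hlap i j k).symm)
  have hvan : ∀ i j, i < j → ∏ k, (Mat i j k).det = 0 := by
    intro i j hij
    obtain ⟨x, hx⟩ := hskew i j hij
    obtain ⟨k₀, hk₀⟩ := hmem x
    rw [Finset.mem_inter] at hx
    have hxA : x ∈ A i ∩ X k₀ := Finset.mem_inter.mpr ⟨hx.1, hk₀⟩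
    have hxB : x ∈ B j ∩ X k₀ := Finset.mem_inter.mpr ⟨hx.2, hk₀⟩
    obtain ⟨s, hs⟩ : ∃ s, colA i k₀ s = x := by
      have : x ∈ Set.range ((A i ∩ X k₀).orderEmbOfFin (ha i k₀)) := by
        rw [Finset.range_orderEmbOfFin]; exact hxA
      exact this
    obtain ⟨t, ht⟩ : ∃ t, colB j k₀ t = x := by
      have : x ∈ Set.range ((B j ∩ X k₀).orderEmbOfFin (hb j k₀)) := by
        rw [Finset.range_orderEmbOfFin]; exact hxB
      exact this
    apply Finset.prod_eq_zero (Finset.mem_univ k₀)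
    apply Matrix.det_zero_of_column_eq
      (i := finSumFinEquiv (Sum.inl s)) (j := finSumFinEquiv (Sum.inr t))
    · exact fun h => Sum.inl_ne_inr (finSumFinEquiv.injective h)
    · intro p
      show (w i j k₀ _) ^ (p : ℕ) = (w i j k₀ _) ^ (p : ℕ)
      simp only [w, Equiv.symm_apply_apply, Sum.elim_inl, Sum.elim_inr]
      rw [hs, ht]
  have hnz : ∀ i k, (Mat i i k).det ≠ 0 := by
    intro i k
    have hMat : Mat i i k = (Matrix.vandermonde (w i i k)).transpose := by
      ext p q
      simp [Mat, Matrix.vandermonde, Matrix.transpose_apply]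
    rw [hMat, Matrix.det_transpose]
    apply Matrix.det_vandermonde_ne_zero_iff.mpr
    have hcinj : Function.Injective (Sum.elim (colA i k) (colB i k)) := by
      rintro (u | u) (v | v) he <;> simp only [Sum.elim_inl, Sum.elim_inr] at he
      · exact congrArg Sum.inl (((A i ∩ X k).orderEmbOfFin (ha i k)).injective he)
      · exfalso
        have h1 : colA i k u ∈ A i ∩ X k := (A i ∩ X k).orderEmbOfFin_mem (ha i k) u
        have h2 : colB i k v ∈ B i ∩ X k := (B i ∩ X k).orderEmbOfFin_mem (hb i k) v
        rw [he] at h1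
        have hmem2 : colB i k v ∈ A i ∩ B i := by
          rw [Finset.mem_inter] at h1 h2 ⊢
          exact ⟨h1.1, h2.1⟩
        rw [hdisj i] at hmem2
        exact Finset.notMem_empty _ hmem2
      · exfalso
        have h1 : colB i k u ∈ B i ∩ X k := (B i ∩ X k).orderEmbOfFin_mem (hb i k) u
        have h2 : colA i k v ∈ A i ∩ X k := (A i ∩ X k).orderEmbOfFin_mem (ha i k) v
        rw [he] at h1
        have hmem2 : colA i k v ∈ A i ∩ B i := by
          rw [Finset.mem_inter] at h1 h2 ⊢
          exact ⟨h2.1, h1.1⟩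
        rw [hdisj i] at hmem2
        exact Finset.notMem_empty _ hmem2
      · exact congrArg Sum.inr (((B i ∩ X k).orderEmbOfFin (hb i k)).injective he)
    intro q q' he
    exact finSumFinEquiv.symm.injective (hcinj (htv he))
  have hli : LinearIndependent ℝ Φ := by
    rw [Fintype.linearIndependent_iff]
    intro g hg
    by_contra hcon
    push_neg at hcon
    obtain ⟨i0, hi0⟩ := hcon
    set T : Finset (Fin m) := Finset.univ.filter (fun i => g i ≠ 0) with hT
    have hTne : T.Nonempty := ⟨i0, by simp [hT, hi0]⟩
    set j := T.max' hTne with hjdef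
    have hjT : j ∈ T := T.max'_mem hTne
    have hgj : g j ≠ 0 := (Finset.mem_filter.mp hjT).2
    have key : ∑ i, g i * (∏ k, (Mat i j k).det) = 0 := by
      have h0 : ∀ S, (∑ i, g i * Φ i S) = 0 := by
        intro S
        have hS := congrFun hg S
        simpa [Finset.sum_apply] using hS
      calc ∑ i, g i * (∏ k, (Mat i j k).det)
          = ∑ i, g i * (∑ S, Φ i S * Ψ j S) :=
            Finset.sum_congr rfl fun i _ => by rw [pairing]
        _ = ∑ i, ∑ S : ((k : Fin r) → AlonAux.Sub (a k) (b k)), g i * (Φ i S * Ψ j S) := by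
            simp_rw [Finset.mul_sum]
        _ = ∑ S : ((k : Fin r) → AlonAux.Sub (a k) (b k)), ∑ i, g i * (Φ i S * Ψ j S) :=
            Finset.sum_comm
        _ = ∑ S : ((k : Fin r) → AlonAux.Sub (a k) (b k)), (∑ i, g i * Φ i S) * Ψ j S := by
            refine Finset.sum_congr rfl fun S _ => ?_
            rw [Finset.sum_mul]
            exact Finset.sum_congr rfl fun i _ => by ring
        _ = 0 := by simp [h0]
    rw [Finset.sum_eq_single j] at key
    · have hne : (∏ k, (Mat j j k).det) ≠ 0 :=
        Finset.prod_ne_zero_iff.mpr (fun k _ => hnz j k)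
      exact hgj ((mul_eq_zero.mp key).resolve_right hne)
    · intro i _ hij
      rcases lt_or_gt_of_ne hij with h | h
      · rw [hvan i j h, mul_zero]
      · have hgi : g i = 0 := by
          by_contra hgi
          have hiT : i ∈ T := by simp [hT, hgi]
          exact absurd (T.le_max' i hiT) (not_le.mpr h)
        rw [hgi, zero_mul]
    · intro h; exact absurd (Finset.mem_univ j) h
  have hcard := hli.fintype_card_le_finrank
  rw [Fintype.card_fin] at hcard
  calc m ≤ Module.finrank ℝ (((k : Fin r) → AlonAux.Sub (a k) (b k)) → ℝ) := hcard
    _ = Fintype.card ((k : Fin r) → AlonAux.Sub (a k) (b k)) := Module.finrank_pi ℝ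
    _ = ∏ k, (a k + b k).choose (a k) := by
        rw [Fintype.card_pi]
        exact Finset.prod_congr rfl fun k _ => by
          rw [Fintype.card_finset_len, Fintype.card_fin]
end

section
/- Let X = [n] be the disjoint union of sets X_1, ..., X_r with |X_k| = n_k, and let (A_i, B_i), i ∈ [m], be a skew Bollobás system of pairs of subsets of X. Then ∑_{i=1}^m (∏_{k=1}^r binom(|A_i ∩ X_k| + |B_i ∩ X_k|, |A_i ∩ X_k|))^{-1} ≤ ∏_{k=1}^r (1 + n_k). -/
open Finset Nat

lemma fact_powerset_sum {α : Type*} [DecidableEq α] (D : Finset α) :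
    ∀ a b : ℕ, (a + b + 1)! * ∑ U ∈ D.powerset, (a + U.card)! * (b + (D.card - U.card))! =
    (a + b + D.card + 1)! * ((a)! * (b)!) := by
  induction D using Finset.induction_on with
  | empty => intro a b; simp
  | @insert x s hx ih =>
    intro a b
    have hcard : (insert x s).card = s.card + 1 := card_insert_of_notMem hx
    have hsplit : ∑ U ∈ (insert x s).powerset, (a + U.card)! * (b + ((insert x s).card - U.card))!
        = (∑ U ∈ s.powerset, (a + U.card)! * ((b+1) + (s.card - U.card))!)
          + ∑ U ∈ s.powerset, ((a+1) + U.card)! * (b + (s.card - U.card))! := by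
      rw [powerset_insert, sum_union, sum_image]
      · congr 1
        · refine sum_congr rfl fun U hU => ?_
          have hUs : U.card ≤ s.card := card_le_card (mem_powerset.1 hU)
          have : b + ((insert x s).card - U.card) = (b+1) + (s.card - U.card) := by
            rw [hcard]; omega
          rw [this]
        · refine sum_congr rfl fun U hU => ?_
          have hUs : U.card ≤ s.card := card_le_card (mem_powerset.1 hU)
          have hxU : x ∉ U := fun h => hx (mem_powerset.1 hU h)
          rw [card_insert_of_notMem hxU, hcard]
          have h3 : a + (U.card + 1) = (a+1) + U.card := by omega
          have h4 : b + (s.card + 1 - (U.card + 1)) = b + (s.card - U.card) := by omega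
          rw [h3, h4]
      · intro U hU V hV hUV
        have hxU : x ∉ U := fun h => hx (mem_powerset.1 hU h)
        have hxV : x ∉ V := fun h => hx (mem_powerset.1 hV h)
        have := congrArg (fun t => Finset.erase t x) hUV
        simpa [erase_insert hxU, erase_insert hxV] using this
      · rw [disjoint_left]
        intro U hU hU'
        simp only [mem_image, mem_powerset] at hU hU'
        obtain ⟨V, hV, rfl⟩ := hU'
        exact hx (hU (mem_insert_self x V))
    rw [hsplit, hcard]
    have h1 := ih a (b+1)
    have h2 := ih (a+1) b
    refine Nat.eq_of_mul_eq_mul_left (show 0 < a + b + 2 by omega) ?_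
    have e1 : (a + (b+1) + 1)! = (a + b + 2) * (a + b + 1)! := by
      rw [show a + (b+1) + 1 = (a + b + 1) + 1 by ring, Nat.factorial_succ]
    have e2 : ((a+1) + b + 1)! = (a + b + 2) * (a + b + 1)! := by
      rw [show (a+1) + b + 1 = (a + b + 1) + 1 by ring, Nat.factorial_succ]
    calc (a + b + 2) * ((a + b + 1)! * (∑ U ∈ s.powerset, (a + U.card)! * ((b+1) + (s.card - U.card))!
            + ∑ U ∈ s.powerset, ((a+1) + U.card)! * (b + (s.card - U.card))!))
        = (a + (b+1) + 1)! * ∑ U ∈ s.powerset, (a + U.card)! * ((b+1) + (s.card - U.card))!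
          + ((a+1) + b + 1)! * ∑ U ∈ s.powerset, ((a+1) + U.card)! * (b + (s.card - U.card))! := by
          rw [e1, e2]; ring
      _ = (a + (b+1) + s.card + 1)! * ((a)! * (b+1)!) + ((a+1) + b + s.card + 1)! * ((a+1)! * (b)!) := by
          rw [h1, h2]
      _ = (a + b + 2) * ((a + b + (s.card + 1) + 1)! * ((a)! * (b)!)) := by
          rw [show a + (b+1) + s.card + 1 = a + b + (s.card+1) + 1 by ring,
              show (a+1) + b + s.card + 1 = a + b + (s.card+1) + 1 by ring,
              Nat.factorial_succ b, Nat.factorial_succ a]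
          ring

lemma part_count {α : Type*} [DecidableEq α] (Xk A B : Finset α)
    (hA : A ⊆ Xk) (hB : B ⊆ Xk) (hAB : Disjoint A B) :
    (A.card + B.card + 1)! *
      ∑ T ∈ Xk.powerset.filter (fun T => A ⊆ T ∧ Disjoint T B),
        (T.card)! * (Xk.card - T.card)! =
    (Xk.card + 1)! * ((A.card)! * (B.card)!) := by
  set D := Xk \ (A ∪ B) with hD
  have hABX : A ∪ B ⊆ Xk := union_subset hA hB
  have hDcard : Xk.card = A.card + B.card + D.card := by
    have h1 : D.card = Xk.card - (A ∪ B).card := card_sdiff_of_subset hABX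
    have h2 : (A ∪ B).card = A.card + B.card := card_union_of_disjoint hAB
    have h3 : (A ∪ B).card ≤ Xk.card := card_le_card hABX
    omega
  have hreindex : ∑ T ∈ Xk.powerset.filter (fun T => A ⊆ T ∧ Disjoint T B),
        (T.card)! * (Xk.card - T.card)!
      = ∑ U ∈ D.powerset, (A.card + U.card)! * (B.card + (D.card - U.card))! := by
    refine Finset.sum_nbij' (fun T => T \ A) (fun U => A ∪ U) ?_ ?_ ?_ ?_ ?_
    · intro T hT
      simp only [mem_filter, mem_powerset] at hT
      obtain ⟨hTX, hAT, hTB⟩ := hT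
      rw [mem_powerset, hD]
      intro y hy
      simp only [mem_sdiff] at hy ⊢
      refine ⟨hTX hy.1, ?_⟩
      simp only [mem_union]
      rintro (h | h)
      · exact hy.2 h
      · exact (disjoint_left.1 hTB) hy.1 h
    · intro U hU
      rw [mem_powerset] at hU
      simp only [mem_filter, mem_powerset]
      refine ⟨union_subset hA fun y hy => (mem_sdiff.1 (hU hy)).1, subset_union_left, ?_⟩
      rw [disjoint_union_left]
      refine ⟨hAB, disjoint_left.2 fun y hy hyB => ?_⟩
      exact (mem_sdiff.1 (hU hy)).2 (mem_union_right _ hyB)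
    · intro T hT
      simp only [mem_filter, mem_powerset] at hT
      exact union_sdiff_of_subset hT.2.1
    · intro U hU
      rw [mem_powerset] at hU
      have : Disjoint A U := disjoint_left.2 fun y hyA hyU =>
        (mem_sdiff.1 (hU hyU)).2 (mem_union_left _ hyA)
      rw [union_sdiff_cancel_left this]
    · intro T hT
      simp only [mem_filter, mem_powerset] at hT
      obtain ⟨hTX, hAT, hTB⟩ := hT
      have hUD : T \ A ⊆ D := by
        intro y hy
        rw [hD]
        simp only [mem_sdiff] at hy ⊢
        refine ⟨hTX hy.1, ?_⟩
        simp only [mem_union]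
        rintro (h | h)
        · exact hy.2 h
        · exact (disjoint_left.1 hTB) hy.1 h
      have h1 : (T \ A).card = T.card - A.card := card_sdiff_of_subset hAT
      have h2 : A.card ≤ T.card := card_le_card hAT
      have h3 : T.card ≤ Xk.card := card_le_card hTX
      have h4 : (T \ A).card ≤ D.card := card_le_card hUD
      have e1 : A.card + (T \ A).card = T.card := by omega
      have e2 : B.card + (D.card - (T \ A).card) = Xk.card - T.card := by omega
      rw [e1, e2]
  rw [hreindex, fact_powerset_sum D A.card B.card, ← hDcard]

lemma part_total {α : Type*} [DecidableEq α] (Xk : Finset α) :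
    ∑ T ∈ Xk.powerset, (((T.card)! * (Xk.card - T.card)! : ℕ) / ((Xk.card + 1)! : ℝ)) = 1 := by
  have h := fact_powerset_sum Xk 0 0
  simp only [Nat.zero_add, Nat.add_zero, Nat.factorial_one, one_mul, Nat.factorial_zero,
    mul_one] at h
  rw [← Finset.sum_div]
  rw [div_eq_one_iff_eq (by positivity)]
  push_cast [← h]
  rfl

lemma part_bound {α : Type*} [DecidableEq α] (Xk A B : Finset α)
    (hA : A ⊆ Xk) (hB : B ⊆ Xk) (hAB : Disjoint A B) :
    ((1 + (Xk.card : ℝ)) * ((A.card + B.card).choose A.card))⁻¹ ≤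
      ∑ T ∈ Xk.powerset.filter (fun T => A ⊆ T ∧ Disjoint T B),
        (((T.card)! * (Xk.card - T.card)! : ℕ) / ((Xk.card + 1)! : ℝ)) := by
  set a := A.card with ha
  set b := B.card with hb
  have hab : a + b ≤ Xk.card := by
    have h2 : (A ∪ B).card = a + b := card_union_of_disjoint hAB
    have h3 : (A ∪ B).card ≤ Xk.card := card_le_card (union_subset hA hB)
    omega
  have hCpos : 0 < (((a + b).choose a : ℕ) : ℝ) := by
    exact_mod_cast Nat.choose_pos (Nat.le_add_right a b)
  have hfacpos : (0:ℝ) < ((Xk.card + 1)! : ℕ) := by positivity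
  have habpos : (0:ℝ) < ((a + b + 1)! : ℕ) := by positivity
  have key := part_count Xk A B hA hB hAB
  rw [← ha, ← hb] at key
  have keyR : ((a + b + 1)! : ℝ) *
      ∑ T ∈ Xk.powerset.filter (fun T => A ⊆ T ∧ Disjoint T B),
        (((T.card)! * (Xk.card - T.card)! : ℕ) : ℝ)
      = (((Xk.card + 1)! : ℕ) : ℝ) * (((a)! : ℕ) * ((b)! : ℕ)) := by
    exact_mod_cast key
  have hchoose : (((a + b).choose a : ℕ) : ℝ) * ((a)! : ℕ) * ((b)! : ℕ) = ((a + b)! : ℕ) := by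
    have h := Nat.choose_mul_factorial_mul_factorial (Nat.le_add_right a b)
    rw [Nat.add_sub_cancel_left] at h
    exact_mod_cast h
  have hsucc : ((a + b + 1)! : ℝ) = ((a : ℝ) + b + 1) * ((a + b)! : ℕ) := by
    have h := Nat.factorial_succ (a + b)
    push_cast [h]
    ring
  have hkey2 : ((a:ℝ) + b + 1) * (((a + b).choose a : ℕ) : ℝ) * (((a)! : ℕ) * ((b)! : ℕ))
      = ((a + b + 1)! : ℕ) := by
    rw [hsucc]
    nlinarith [hchoose]
  have hSnonneg : (0:ℝ) ≤ ∑ T ∈ Xk.powerset.filter (fun T => A ⊆ T ∧ Disjoint T B),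
        (((T.card)! * (Xk.card - T.card)! : ℕ) : ℝ) :=
    Finset.sum_nonneg fun _ _ => Nat.cast_nonneg _
  have hfb : (((a)! : ℕ) : ℝ) * (((b)! : ℕ) : ℝ) ≠ 0 := by positivity
  have hcancel : ((a:ℝ) + b + 1) * (((a + b).choose a : ℕ) : ℝ) *
      (∑ T ∈ Xk.powerset.filter (fun T => A ⊆ T ∧ Disjoint T B),
        (((T.card)! * (Xk.card - T.card)! : ℕ) : ℝ))
      = (((Xk.card + 1)! : ℕ) : ℝ) := by
    apply mul_right_cancel₀ hfb
    rw [← hkey2] at keyR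
    linear_combination keyR
  rw [← Finset.sum_div, inv_eq_one_div, div_le_div_iff₀ (by positivity) hfacpos, one_mul]
  have hcast : ((a:ℝ)) + b ≤ (Xk.card : ℝ) := by exact_mod_cast hab
  nlinarith [hcancel, hSnonneg, hCpos, hcast]

theorem skew_bollobas_partition (n m r : ℕ) (X : Fin r → Finset (Fin n))
    (hX : ∀ k l, k ≠ l → Disjoint (X k) (X l))
    (hcover : Finset.univ.biUnion X = Finset.univ)
    (A B : Fin m → Finset (Fin n))
    (hdisj : ∀ i, A i ∩ B i = ∅)
    (hskew : ∀ i j, i < j → (A i ∩ B j).Nonempty) :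
    ∑ i, (∏ k, (((A i ∩ X k).card + (B i ∩ X k).card).choose (A i ∩ X k).card : ℝ))⁻¹
      ≤ ∏ k, (1 + (X k).card : ℝ) := by
  classical
  set f : Fin r → Finset (Fin n) → ℝ :=
    fun k T => (((T.card)! * ((X k).card - T.card)! : ℕ) : ℝ) / (((X k).card + 1)! : ℕ) with hf
  set E : Fin m → Fin r → Finset (Finset (Fin n)) :=
    fun i k => (X k).powerset.filter
      (fun T => (A i ∩ X k) ⊆ T ∧ Disjoint T (B i ∩ X k)) with hE
  have hABd : ∀ i k, Disjoint (A i ∩ X k) (B i ∩ X k) := by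
    intro i k
    have : Disjoint (A i) (B i) := Finset.disjoint_iff_inter_eq_empty.2 (hdisj i)
    exact Finset.disjoint_of_subset_left Finset.inter_subset_left
      (Finset.disjoint_of_subset_right Finset.inter_subset_left this)
  have hf0 : ∀ k T, 0 ≤ f k T := fun k T => by
    rw [hf]; positivity
  -- Step 1: per-i lower bound on event weight
  have step1 : ∀ i, ∏ k, ((1 + ((X k).card : ℝ)) *
        (((A i ∩ X k).card + (B i ∩ X k).card).choose (A i ∩ X k).card : ℕ))⁻¹
      ≤ ∑ S ∈ Fintype.piFinset (E i), ∏ k, f k (S k) := by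
    intro i
    rw [← Finset.prod_univ_sum]
    refine Finset.prod_le_prod (fun k _ => by positivity) (fun k _ => ?_)
    exact part_bound (X k) (A i ∩ X k) (B i ∩ X k)
      Finset.inter_subset_right Finset.inter_subset_right (hABd i k)
  -- Step 2: events are pairwise disjoint
  have step2 : ∀ i j : Fin m, i ≠ j →
      Disjoint (Fintype.piFinset (E i)) (Fintype.piFinset (E j)) := by
    have aux : ∀ i j : Fin m, i < j →
        Disjoint (Fintype.piFinset (E i)) (Fintype.piFinset (E j)) := by
      intro i j hij
      rw [Finset.disjoint_left]
      intro S hSi hSj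
      obtain ⟨x, hx⟩ := hskew i j hij
      rw [Finset.mem_inter] at hx
      have hxk : ∃ k, x ∈ X k := by
        have : x ∈ Finset.univ.biUnion X := by rw [hcover]; exact Finset.mem_univ x
        simpa using Finset.mem_biUnion.1 this
      obtain ⟨k, hk⟩ := hxk
      rw [Fintype.mem_piFinset] at hSi hSj
      have h1 := hSi k
      have h2 := hSj k
      rw [hE, Finset.mem_filter] at h1 h2
      have hxS : x ∈ S k := h1.2.1 (Finset.mem_inter.2 ⟨hx.1, hk⟩)
      exact (Finset.disjoint_left.1 h2.2.2) hxS (Finset.mem_inter.2 ⟨hx.2, hk⟩)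
    intro i j hij
    rcases lt_or_gt_of_ne hij with h | h
    · exact aux i j h
    · exact (aux j i h).symm
  -- Step 3 + 4: total weight is 1
  have step3 : ∑ i, ∑ S ∈ Fintype.piFinset (E i), ∏ k, f k (S k) ≤ 1 := by
    rw [← Finset.sum_biUnion (fun i _ j _ hij => step2 i j hij)]
    have htotal : ∑ S ∈ Fintype.piFinset (fun k => (X k).powerset), ∏ k, f k (S k) = 1 := by
      rw [← Finset.prod_univ_sum]
      rw [Finset.prod_eq_one]
      intro k _
      exact part_total (X k)
    rw [← htotal]
    apply Finset.sum_le_sum_of_subset_of_nonneg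
    · intro S hS
      rw [Finset.mem_biUnion] at hS
      obtain ⟨i, _, hSi⟩ := hS
      rw [Fintype.mem_piFinset] at hSi ⊢
      intro k
      exact Finset.filter_subset _ _ (hSi k)
    · intro S _ _
      exact Finset.prod_nonneg fun k _ => hf0 k (S k)
  have main : ∑ i, ∏ k, ((1 + ((X k).card : ℝ)) *
        (((A i ∩ X k).card + (B i ∩ X k).card).choose (A i ∩ X k).card : ℕ))⁻¹ ≤ 1 :=
    le_trans (Finset.sum_le_sum fun i _ => step1 i) step3
  -- final algebra
  have hP : (0:ℝ) < ∏ k, (1 + ((X k).card : ℝ)) :=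
    Finset.prod_pos fun k _ => by positivity
  have hsplit : ∀ i : Fin m, ∏ k, ((1 + ((X k).card : ℝ)) *
        (((A i ∩ X k).card + (B i ∩ X k).card).choose (A i ∩ X k).card : ℕ))⁻¹
      = (∏ k, (1 + ((X k).card : ℝ)))⁻¹ *
        (∏ k, (((A i ∩ X k).card + (B i ∩ X k).card).choose (A i ∩ X k).card : ℝ))⁻¹ := by
    intro i
    rw [← Finset.prod_inv_distrib, ← Finset.prod_inv_distrib, ← Finset.prod_mul_distrib]
    refine Finset.prod_congr rfl fun k _ => ?_
    rw [mul_inv]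
  rw [Finset.sum_congr rfl (fun i _ => hsplit i), ← Finset.mul_sum] at main
  rw [inv_mul_le_iff₀ hP, mul_one] at main
  exact main
end

section
/- Let X = [n] be the disjoint union of sets X_1, ..., X_r with |X_k| = n_k, and let (A_i, B_i), i ∈ [m], be a skew Bollobás system of pairs of subsets of X. Then ∑_{i=1}^m (∏_{k=1}^r binom(|A_i ∩ X_k| + |B_i ∩ X_k|, |A_i ∩ X_k|))^{-1} ≤ (1 + n/r)^r. -/
open Finset

set_option maxHeartbeats 1000000

/-- Bottom-`k` subset of a finset in a linear order. -/
lemma exists_bottom {α : Type*} [LinearOrder α] [DecidableEq α] (v : Finset α) (k : ℕ) (hk : k ≤ v.card) :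
    ∃ u, u ⊆ v ∧ u.card = k ∧ ∀ x ∈ u, ∀ y ∈ v \ u, x < y := by
  classical
  set l := v.sort (· ≤ ·) with hl
  refine ⟨(l.take k).toFinset, ?_, ?_, ?_⟩
  · intro x hx
    rw [List.mem_toFinset] at hx
    have := List.mem_of_mem_take hx
    rwa [hl, Finset.mem_sort] at this
  · have hnd : l.Nodup := v.sort_nodup _
    rw [List.toFinset_card_of_nodup (hnd.sublist (List.take_sublist _ _))]
    rw [List.length_take, hl, Finset.length_sort]
    exact min_eq_left hk
  · intro x hx y hy
    rw [List.mem_toFinset] at hx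
    rw [mem_sdiff, List.mem_toFinset] at hy
    obtain ⟨hyv, hynt⟩ := hy
    have hyl : y ∈ l := by rwa [hl, Finset.mem_sort]
    have hyd : y ∈ l.drop k := by
      have h2 : y ∈ l.take k ++ l.drop k := by rw [List.take_append_drop]; exact hyl
      rcases List.mem_append.mp h2 with h | h
      · exact absurd h hynt
      · exact h
    have hsorted : l.Pairwise (· ≤ ·) := v.pairwise_sort _
    have hle : x ≤ y := by
      have := hsorted
      rw [← List.take_append_drop k l, List.pairwise_append] at this
      exact this.2.2 x hx y hyd
    have hnd : l.Nodup := v.sort_nodup _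
    have hne : x ≠ y := by
      intro h
      subst h
      rw [← List.take_append_drop k l, List.nodup_append] at hnd
      exact hnd.2.2 x hx x hyd rfl
    exact lt_of_le_of_ne hle hne

lemma exists_perm_blocks {N : ℕ} {A B T : Finset (Fin N)}
    (hT : T ⊆ A ∪ B) (hTA : T.card = A.card) :
    ∃ π : Equiv.Perm (Fin N), (∀ x ∈ T, π x ∈ A) ∧ (∀ x ∈ (A ∪ B) \ T, π x ∈ B) := by
  classical
  set S := A ∪ B with hS
  have hSA : A ⊆ S := subset_union_left
  -- card computation for sub-subtypes
  have hcard : ∀ (W : Finset (Fin N)), W ⊆ S →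
      Fintype.card {y : {x : Fin N // x ∈ S} // (y : Fin N) ∈ W} = W.card := by
    intro W hW
    rw [Fintype.card_congr ((Equiv.subtypeSubtypeEquivSubtypeInter (· ∈ S) (· ∈ W)).trans
      (Equiv.subtypeEquivRight (fun x => and_iff_right_iff_imp.mpr (fun h => hW h))))]
    exact Fintype.card_coe W
  have hc : Fintype.card {y : {x : Fin N // x ∈ S} // (y : Fin N) ∈ T}
      = Fintype.card {y : {x : Fin N // x ∈ S} // (y : Fin N) ∈ A} := by
    rw [hcard T hT, hcard A hSA, hTA]
  let e0 : {y : {x : Fin N // x ∈ S} // (y : Fin N) ∈ T}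
      ≃ {y : {x : Fin N // x ∈ S} // (y : Fin N) ∈ A} := Fintype.equivOfCardEq hc
  let e : Equiv.Perm {x : Fin N // x ∈ S} := e0.extendSubtype
  let π : Equiv.Perm (Fin N) := e.extendSubtype
  have hπS : ∀ x (hx : x ∈ S), π x = (e ⟨x, hx⟩ : Fin N) := by
    intro x hx
    exact Equiv.extendSubtype_apply_of_mem e x hx
  refine ⟨π, ?_, ?_⟩
  · intro x hx
    have hxS : x ∈ S := hT hx
    rw [hπS x hxS]
    have : ((⟨x, hxS⟩ : {x : Fin N // x ∈ S}) : Fin N) ∈ T := hx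
    have h2 := Equiv.extendSubtype_mem e0 ⟨x, hxS⟩ this
    exact h2
  · intro x hx
    rw [mem_sdiff] at hx
    obtain ⟨hxS, hxT⟩ := hx
    rw [hπS x hxS]
    have hnA : ¬ ((e ⟨x, hxS⟩ : Fin N) ∈ A) :=
      Equiv.extendSubtype_not_mem e0 ⟨x, hxS⟩ hxT
    have hmem : (e ⟨x, hxS⟩ : Fin N) ∈ S := (e ⟨x, hxS⟩).2
    rcases mem_union.mp hmem with h | h
    · exact absurd h hnA
    · exact h

lemma core_count {N : ℕ} (A B : Finset (Fin N)) (hAB : Disjoint A B) :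
    N.factorial ≤ (univ.filter fun σ : Equiv.Perm (Fin N) =>
        ∀ a ∈ A, ∀ b ∈ B, σ a < σ b).card * (A.card + B.card).choose A.card := by

  set S := A ∪ B with hS
  set E := (univ.filter fun σ : Equiv.Perm (Fin N) => ∀ a ∈ A, ∀ b ∈ B, σ a < σ b) with hE
  have hScard : S.card = A.card + B.card := card_union_of_disjoint hAB
  have hAS : A.card ≤ S.card := by omega
  let πf : Finset (Fin N) → Equiv.Perm (Fin N) := fun T =>
    if h : T ⊆ S ∧ T.card = A.card then (exists_perm_blocks h.1 h.2).choose else 1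
  have hπf : ∀ T, T ⊆ S → T.card = A.card →
      (∀ x ∈ T, πf T x ∈ A) ∧ (∀ x ∈ S \ T, πf T x ∈ B) := by
    intro T h1 h2
    have hp : T ⊆ S ∧ T.card = A.card := ⟨h1, h2⟩
    simp only [πf, dif_pos hp]
    exact (exists_perm_blocks hp.1 hp.2).choose_spec
  have hinv : ∀ T, T ⊆ S → T.card = A.card →
      (∀ a ∈ A, (πf T)⁻¹ a ∈ T) ∧ (∀ b ∈ B, (πf T)⁻¹ b ∈ S \ T) := by
    intro T h1 h2
    obtain ⟨hp1, hp2⟩ := hπf T h1 h2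
    have himgA : T.image (πf T) = A := by
      apply eq_of_subset_of_card_le (image_subset_iff.mpr hp1)
      rw [card_image_of_injective _ (πf T).injective, h2]
    have himgB : (S \ T).image (πf T) = B := by
      apply eq_of_subset_of_card_le (image_subset_iff.mpr hp2)
      rw [card_image_of_injective _ (πf T).injective, card_sdiff_of_subset h1, hScard, h2]
      omega
    constructor
    · intro a ha
      rw [← himgA, mem_image] at ha
      obtain ⟨t, ht, rfl⟩ := ha
      rwa [Equiv.Perm.inv_def, Equiv.symm_apply_apply]
    · intro b hb
      rw [← himgB, mem_image] at hb
      obtain ⟨s, hs, rfl⟩ := hb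
      rwa [Equiv.Perm.inv_def, Equiv.symm_apply_apply]
  have hbot : ∀ σ : Equiv.Perm (Fin N), ∃ u, u ⊆ S.image σ ∧ u.card = A.card ∧
      ∀ x ∈ u, ∀ y ∈ (S.image σ) \ u, x < y := by
    intro σ
    exact exists_bottom (S.image ⇑σ) A.card (by rw [card_image_of_injective _ σ.injective]; exact hAS)
  choose u hu1 hu2 hu3 using hbot
  let Tf : Equiv.Perm (Fin N) → Finset (Fin N) := fun σ => S.filter (fun x => σ x ∈ u σ)
  have hTsub : ∀ σ, Tf σ ⊆ S := fun σ => filter_subset _ _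
  have hTimg : ∀ σ, (Tf σ).image σ = u σ := by
    intro σ
    ext y
    constructor
    · intro hy
      rw [mem_image] at hy
      obtain ⟨x, hx, rfl⟩ := hy
      exact (mem_filter.mp hx).2
    · intro hy
      have h2 := hu1 σ hy
      rw [mem_image] at h2 ⊢
      obtain ⟨x, hx, rfl⟩ := h2
      exact ⟨x, mem_filter.mpr ⟨hx, hy⟩, rfl⟩
  have hTcard : ∀ σ, (Tf σ).card = A.card := by
    intro σ
    rw [← hu2 σ, ← hTimg σ, card_image_of_injective _ σ.injective]
  let Φ : Equiv.Perm (Fin N) → Equiv.Perm (Fin N) × Finset (Fin N) :=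
    fun σ => (σ * (πf (Tf σ))⁻¹, Tf σ)
  have hmaps : ∀ σ ∈ (univ : Finset (Equiv.Perm (Fin N))),
      Φ σ ∈ E ×ˢ S.powersetCard A.card := by
    intro σ _
    rw [mem_product]
    constructor
    · rw [hE, mem_filter]
      refine ⟨mem_univ _, ?_⟩
      intro a ha b hb
      obtain ⟨hi1, hi2⟩ := hinv (Tf σ) (hTsub σ) (hTcard σ)
      have hta := hi1 a ha
      have hsb := hi2 b hb
      rw [mem_filter] at hta
      rw [mem_sdiff] at hsb
      have h1 : σ ((πf (Tf σ))⁻¹ a) ∈ u σ := hta.2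
      have h2 : σ ((πf (Tf σ))⁻¹ b) ∈ (S.image σ) \ u σ := by
        rw [mem_sdiff]
        refine ⟨mem_image_of_mem _ hsb.1, ?_⟩
        intro hmem
        exact hsb.2 (mem_filter.mpr ⟨hsb.1, hmem⟩)
      exact hu3 σ _ h1 _ h2
    · exact mem_powersetCard.mpr ⟨hTsub σ, hTcard σ⟩
  have hinj : Set.InjOn Φ (univ : Finset (Equiv.Perm (Fin N))) := by
    intro σ _ σ' _ h
    have h2 : Tf σ = Tf σ' := congrArg Prod.snd h
    have h1 : σ * (πf (Tf σ))⁻¹ = σ' * (πf (Tf σ))⁻¹ := by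
      have := congrArg Prod.fst h
      simpa [Φ, h2] using this
    exact mul_right_cancel h1
  have hle := card_le_card_of_injOn Φ hmaps hinj
  rw [card_univ, Fintype.card_perm, Fintype.card_fin, card_product,
    card_powersetCard, hScard] at hle
  exact hle

lemma count_le {n m r : ℕ} (X : Fin r → Finset (Fin n))
    (hcover : Finset.univ.biUnion X = Finset.univ)
    (A B : Fin m → Finset (Fin n))
    (hskew : ∀ i j, i < j → (A i ∩ B j).Nonempty)
    (ω : Fin r → Equiv.Perm (Fin n)) :
    (univ.filter fun i : Fin m =>
      ∀ k, ∀ p ∈ A i ∩ X k, ∀ q ∈ B i ∩ X k, ω k p < ω k q).card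
      ≤ ∏ k, ((X k).card + 1) := by
  set I := univ.filter fun i : Fin m =>
      ∀ k, ∀ p ∈ A i ∩ X k, ∀ q ∈ B i ∩ X k, ω k p < ω k q with hI
  let c : Fin m → Fin r → ℕ := fun i k => (A i ∩ X k).sup (fun p => (ω k p : ℕ) + 1)
  let Y : Fin m → Fin r → Finset (Fin n) :=
    fun i k => (X k).filter (fun y => ((ω k) y : ℕ) < c i k)
  let d : Fin m → Fin r → ℕ := fun i k => (Y i k).card
  have key : ∀ i ∈ I, ∀ j ∈ I, i < j → d i ≠ d j := by
    intro i hi j hj hij hd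
    obtain ⟨x, hx⟩ := hskew i j hij
    rw [mem_inter] at hx
    have hxu : x ∈ Finset.univ.biUnion X := by rw [hcover]; exact mem_univ x
    obtain ⟨k, -, hxk⟩ := mem_biUnion.mp hxu
    rw [hI, mem_filter] at hi hj
    have h1 : x ∈ Y i k := by
      refine mem_filter.mpr ⟨hxk, ?_⟩
      have h := Finset.le_sup (f := fun p => (ω k p : ℕ) + 1)
        (mem_inter.mpr ⟨hx.1, hxk⟩)
      have hc : c i k = (A i ∩ X k).sup (fun p => (ω k p : ℕ) + 1) := rfl
      rw [hc]
      omega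
    have h2 : x ∉ Y j k := by
      intro hmem
      have hcle : c j k ≤ (ω k x : ℕ) := by
        apply Finset.sup_le
        intro p hp
        have hlt := hj.2 k p hp x (mem_inter.mpr ⟨hx.2, hxk⟩)
        have : (ω k p : ℕ) < (ω k x : ℕ) := hlt
        omega
      rw [mem_filter] at hmem
      omega
    have hdk : (Y i k).card = (Y j k).card := congrFun hd k
    have hYeq : Y i k = Y j k := by
      rcases le_total (c i k) (c j k) with h | h
      · refine eq_of_subset_of_card_le ?_ hdk.ge
        intro y hy
        rw [mem_filter] at hy ⊢
        exact ⟨hy.1, lt_of_lt_of_le hy.2 h⟩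
      · refine (eq_of_subset_of_card_le ?_ hdk.le).symm
        intro y hy
        rw [mem_filter] at hy ⊢
        exact ⟨hy.1, lt_of_lt_of_le hy.2 h⟩
    exact h2 (hYeq ▸ h1)
  have hmaps : ∀ i ∈ I, d i ∈ Fintype.piFinset (fun k => Finset.range ((X k).card + 1)) := by
    intro i _
    rw [Fintype.mem_piFinset]
    intro k
    rw [mem_range]
    have h := card_filter_le (X k) (fun y => ((ω k) y : ℕ) < c i k)
    have hd : d i k = ((X k).filter (fun y => ((ω k) y : ℕ) < c i k)).card := rfl
    rw [hd]
    omega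
  have hinj : Set.InjOn d ↑I := by
    intro i hi j hj heq
    by_contra hne
    rcases lt_or_gt_of_ne hne with h | h
    · exact key i hi j hj h heq
    · exact key j hj i hi h heq.symm
  have hle := card_le_card_of_injOn d hmaps hinj
  rw [Fintype.card_piFinset] at hle
  simpa using hle

lemma amgm_aux {r n : ℕ} (f : Fin r → ℕ) (hsum : ∑ k, f k = n) (hr : r ≠ 0) :
    ∏ k, ((f k : ℝ) + 1) ≤ (1 + (n : ℝ) / r) ^ r := by
  have hrpos : (0:ℝ) < r := by
    have := Nat.pos_of_ne_zero hr
    exact_mod_cast this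
  set z : Fin r → ℝ := fun k => (f k : ℝ) + 1 with hz
  have hznn : ∀ k ∈ (univ : Finset (Fin r)), (0:ℝ) ≤ z k := fun k _ => by positivity
  have hw : ∑ _k : Fin r, (1/(r:ℝ)) = 1 := by
    rw [sum_const, card_univ, Fintype.card_fin, nsmul_eq_mul]
    field_simp
  have h1 := Real.geom_mean_le_arith_mean_weighted univ (fun _ => 1/(r:ℝ)) z
    (fun _ _ => by positivity) hw hznn
  have h2 : ∑ k, (1/(r:ℝ)) * z k = 1 + (n:ℝ)/r := by
    rw [← mul_sum]
    have hzz : ∑ k, z k = (n:ℝ) + r := by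
      simp only [hz]
      rw [sum_add_distrib, sum_const, card_univ, Fintype.card_fin, nsmul_eq_mul, mul_one]
      congr 1
      rw [← Nat.cast_sum, hsum]
    rw [hzz]
    field_simp
    ring
  have h3 : ∏ k, z k ^ (1/(r:ℝ)) = (∏ k, z k) ^ (1/(r:ℝ)) :=
    Real.finset_prod_rpow _ _ hznn _
  rw [h3, h2] at h1
  have hP : (0:ℝ) ≤ ∏ k, z k := prod_nonneg hznn
  calc ∏ k, z k = ((∏ k, z k) ^ (1/(r:ℝ))) ^ (r:ℕ) := by
        rw [← Real.rpow_natCast ((∏ k, z k) ^ (1/(r:ℝ))) r, ← Real.rpow_mul hP]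
        rw [one_div, inv_mul_cancel₀ (ne_of_gt hrpos), Real.rpow_one]
    _ ≤ (1 + (n:ℝ)/r)^(r:ℕ) := pow_le_pow_left₀ (Real.rpow_nonneg hP _) h1 r

theorem skew_bollobas_partition_amgm (n m r : ℕ) (X : Fin r → Finset (Fin n))
    (hX : ∀ k l, k ≠ l → Disjoint (X k) (X l))
    (hcover : Finset.univ.biUnion X = Finset.univ)
    (A B : Fin m → Finset (Fin n))
    (hdisj : ∀ i, A i ∩ B i = ∅)
    (hskew : ∀ i j, i < j → (A i ∩ B j).Nonempty) :
    ∑ i, (∏ k, (((A i ∩ X k).card + (B i ∩ X k).card).choose (A i ∩ X k).card : ℝ))⁻¹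
      ≤ (1 + (n : ℝ) / r) ^ r := by
  have hAB : ∀ i k, Disjoint (A i ∩ X k) (B i ∩ X k) := by
    intro i k
    rw [disjoint_left]
    intro x hx1 hx2
    have hmem : x ∈ A i ∩ B i := mem_inter.mpr ⟨(mem_inter.mp hx1).1, (mem_inter.mp hx2).1⟩
    rw [hdisj i] at hmem
    exact notMem_empty x hmem
  set Ek : Fin m → Fin r → ℕ := fun i k => (univ.filter fun σ : Equiv.Perm (Fin n) =>
    ∀ p ∈ A i ∩ X k, ∀ q ∈ B i ∩ X k, σ p < σ q).card with hEk
  set C : Fin m → Fin r → ℕ := fun i k =>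
    (((A i ∩ X k).card + (B i ∩ X k).card).choose (A i ∩ X k).card) with hC
  have hcore : ∀ i k, n.factorial ≤ Ek i k * C i k := fun i k => core_count _ _ (hAB i k)
  have hCpos : ∀ i k, 0 < C i k := fun i k => Nat.choose_pos (Nat.le_add_right _ _)
  have hfacpos : (0:ℝ) < (n.factorial : ℝ) := by exact_mod_cast n.factorial_pos
  -- counting identity in ℕ
  have hsumN : ∑ i, ∏ k, Ek i k ≤ n.factorial ^ r * ∏ k, ((X k).card + 1) := by
    have hexp : ∀ i, ∏ k, Ek i k =
        ∑ ω ∈ Fintype.piFinset (fun _ : Fin r => (univ : Finset (Equiv.Perm (Fin n)))),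
          ∏ k, if (∀ p ∈ A i ∩ X k, ∀ q ∈ B i ∩ X k, (ω k) p < (ω k) q) then 1 else 0 := by
      intro i
      have hps := Finset.prod_univ_sum (fun _ : Fin r => (univ : Finset (Equiv.Perm (Fin n))))
        (fun k σ => if (∀ p ∈ A i ∩ X k, ∀ q ∈ B i ∩ X k, σ p < σ q) then (1:ℕ) else 0)
      rw [← hps]
      apply Finset.prod_congr rfl
      intro k _
      exact card_filter _ _
    calc ∑ i, ∏ k, Ek i k
        = ∑ ω ∈ Fintype.piFinset (fun _ : Fin r => (univ : Finset (Equiv.Perm (Fin n)))),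
            ∑ i, ∏ k, if (∀ p ∈ A i ∩ X k, ∀ q ∈ B i ∩ X k, (ω k) p < (ω k) q) then 1 else 0 := by
          rw [← Finset.sum_comm]
          exact Finset.sum_congr rfl (fun i _ => hexp i)
      _ ≤ ∑ _ω ∈ Fintype.piFinset (fun _ : Fin r => (univ : Finset (Equiv.Perm (Fin n)))),
            ∏ k, ((X k).card + 1) := by
          apply Finset.sum_le_sum
          intro ω _
          have heq : ∑ i, ∏ k, (if (∀ p ∈ A i ∩ X k, ∀ q ∈ B i ∩ X k, (ω k) p < (ω k) q)
              then 1 else 0) =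
              (univ.filter fun i : Fin m =>
                ∀ k, ∀ p ∈ A i ∩ X k, ∀ q ∈ B i ∩ X k, ω k p < ω k q).card := by
            rw [card_filter]
            apply Finset.sum_congr rfl
            intro i _
            rw [Finset.prod_boole]
            simp only [mem_univ, true_implies]
          rw [heq]
          exact count_le X hcover A B hskew ω
      _ = n.factorial ^ r * ∏ k, ((X k).card + 1) := by
          rw [sum_const, Fintype.card_piFinset]
          simp [Fintype.card_perm, mul_comm]
  -- main real chain
  have hsum_nk : ∑ k, (X k).card = n := by
    have h1 := card_biUnion (s := (univ : Finset (Fin r))) (t := X)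
      (fun k _ l _ hkl => hX k l hkl)
    rw [hcover] at h1
    simp only [card_univ, Fintype.card_fin] at h1
    omega
  have hmain : ∑ i, (∏ k, (C i k : ℝ))⁻¹ ≤ ∏ k, (((X k).card : ℝ) + 1) := by
    calc ∑ i, (∏ k, (C i k : ℝ))⁻¹ = ∑ i, ∏ k, (C i k : ℝ)⁻¹ := by
          apply Finset.sum_congr rfl
          intro i _
          rw [Finset.prod_inv_distrib]
      _ ≤ ∑ i, ∏ k, (Ek i k : ℝ) / (n.factorial : ℝ) := by
          apply Finset.sum_le_sum
          intro i _
          apply Finset.prod_le_prod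
          · intro k _
            positivity
          · intro k _
            have hc : (0:ℝ) < (C i k : ℝ) := by exact_mod_cast hCpos i k
            rw [inv_eq_one_div, div_le_div_iff₀ hc hfacpos, one_mul]
            have := hcore i k
            calc (n.factorial : ℝ) ≤ ((Ek i k * C i k : ℕ) : ℝ) := by exact_mod_cast this
              _ = (Ek i k : ℝ) * (C i k : ℝ) := by push_cast; ring
      _ = (∑ i, ∏ k, (Ek i k : ℝ)) / (n.factorial : ℝ) ^ r := by
          rw [sum_div]
          apply Finset.sum_congr rfl
          intro i _
          rw [prod_div_distrib, prod_const, card_univ, Fintype.card_fin]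
      _ ≤ ((n.factorial : ℝ) ^ r * ∏ k, (((X k).card : ℝ) + 1)) / (n.factorial : ℝ) ^ r := by
          apply div_le_div_of_nonneg_right ?_ (by positivity)
          exact_mod_cast hsumN
      _ = ∏ k, (((X k).card : ℝ) + 1) := by
          rw [mul_comm, mul_div_assoc, div_self (by positivity), mul_one]
  refine le_trans hmain ?_
  rcases eq_or_ne r 0 with hr | hr
  · subst hr
    simp
  · exact amgm_aux (fun k => (X k).card) hsum_nk hr
end

section
/- Let X = [n] be the disjoint union of X_1, ..., X_r with |X_k| = n_k, and let (A_i, B_i), i ∈ [m], be a Bollobás system of pairs of subsets of X. Then for any fixed l ∈ [r]: ∑_{i=1}^m (∏_{k=1}^r binom(|A_i ∩ X_k| + |B_i ∩ X_k|, |A_i ∩ X_k|))^{-1} ≤ (∏_{k=1}^r (1 + n_k)) / (1 + n_l). -/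
open Finset Equiv

namespace BollobasAux

variable {α : Type*} [Fintype α] [DecidableEq α]

lemma exists_perm_iff_mem (s t : Finset α) (h : s.card = t.card) :
    ∃ ρ : Equiv.Perm α, ∀ x, x ∈ s ↔ ρ x ∈ t := by
  have hc : sᶜ.card = tᶜ.card := by
    rw [Finset.card_compl, Finset.card_compl, h]
  classical
  let e : {x // x ∈ s} ≃ {x // x ∈ t} := Finset.equivOfCardEq h
  let f0 : {x // x ∈ sᶜ} ≃ {x // x ∈ tᶜ} := Finset.equivOfCardEq hc
  let f : {x // ¬ x ∈ s} ≃ {x // ¬ x ∈ t} :=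
    ((Equiv.subtypeEquivRight (fun x => by simp)).trans f0).trans
      (Equiv.subtypeEquivRight (fun x => by simp))
  refine ⟨(Equiv.sumCompl (· ∈ s)).symm.trans ((e.sumCongr f).trans (Equiv.sumCompl (· ∈ t))), fun x => ?_⟩
  by_cases hx : x ∈ s
  · simp only [Equiv.trans_apply, Equiv.sumCompl_symm_apply_of_pos hx, Equiv.sumCongr_apply,
      Sum.map_inl, Equiv.sumCompl_apply_inl]
    exact ⟨fun _ => (e ⟨x, hx⟩).2, fun _ => hx⟩
  · simp only [Equiv.trans_apply, Equiv.sumCompl_symm_apply_of_neg hx, Equiv.sumCongr_apply,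
      Sum.map_inr, Equiv.sumCompl_apply_inr]
    exact ⟨fun hx' => absurd hx' hx, fun ht => absurd ht (f ⟨x, hx⟩).2⟩

lemma exists_perm_iff_mem_within (C s t : Finset α) (hs : s ⊆ C) (ht : t ⊆ C)
    (h : s.card = t.card) :
    ∃ ρ : Equiv.Perm α, (∀ x, x ∈ s ↔ ρ x ∈ t) ∧ (∀ x, x ∈ C ↔ ρ x ∈ C) := by
  classical
  -- work inside the subtype ↥C
  have hcs : ∀ u : Finset α, u ⊆ C →
      (C.attach.filter (fun z : {x // x ∈ C} => (z : α) ∈ u)).card = u.card := by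
    intro u hu
    rw [Finset.filter_attach (fun a => a ∈ u) C, Finset.card_map, Finset.card_attach,
      (Finset.filter_mem_eq_inter.trans (Finset.inter_eq_right.mpr hu) : C.filter (· ∈ u) = u)]
  have hcard : (C.attach.filter (fun z : {x // x ∈ C} => (z : α) ∈ s)).card
      = (C.attach.filter (fun z : {x // x ∈ C} => (z : α) ∈ t)).card := by
    rw [hcs s hs, hcs t ht, h]
  obtain ⟨τ, hτ⟩ := exists_perm_iff_mem (α := {x // x ∈ C})
    (C.attach.filter (fun z => (z : α) ∈ s)) (C.attach.filter (fun z => (z : α) ∈ t)) hcard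
  refine ⟨Equiv.Perm.subtypeCongr τ (Equiv.refl _), fun x => ?_, fun x => ?_⟩
  · by_cases hxC : x ∈ C
    · have := hτ ⟨x, hxC⟩
      simp only [Finset.mem_filter, Finset.mem_attach, true_and] at this
      rw [Equiv.Perm.subtypeCongr.apply]
      simp only [hxC, dif_pos]
      exact this
    · have h1 : ¬ x ∈ s := fun hxs => hxC (hs hxs)
      rw [Equiv.Perm.subtypeCongr.apply]
      simp only [hxC, dif_neg, not_false_iff]
      exact ⟨fun hx' => absurd hx' h1, fun hxt => absurd (ht hxt) hxC⟩
  · by_cases hxC : x ∈ C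
    · rw [Equiv.Perm.subtypeCongr.apply]
      simp only [hxC, dif_pos]
      simpa using (τ ⟨x, hxC⟩).2
    · rw [Equiv.Perm.subtypeCongr.apply]
      simp [hxC]


variable {n : ℕ}

def rk (C : Finset (Fin n)) (σ : Equiv.Perm (Fin n)) (x : Fin n) : ℕ :=
  (C.filter (fun y => σ y < σ x)).card

def Dset (C : Finset (Fin n)) (a : ℕ) (σ : Equiv.Perm (Fin n)) : Finset (Fin n) :=
  C.filter (fun x => rk C σ x < a)

lemma rk_lt_of_lt {C : Finset (Fin n)} {σ : Equiv.Perm (Fin n)} {x y : Fin n}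
    (hx : x ∈ C) (hxy : σ x < σ y) : rk C σ x < rk C σ y := by
  apply Finset.card_lt_card
  refine ⟨fun z hz => ?_, fun hcon => ?_⟩
  · rw [Finset.mem_filter] at hz ⊢
    exact ⟨hz.1, hz.2.trans hxy⟩
  · have hxin : x ∈ C.filter (fun z => σ z < σ x) := hcon (Finset.mem_filter.mpr ⟨hx, hxy⟩)
    rw [Finset.mem_filter] at hxin
    exact lt_irrefl _ hxin.2

lemma rk_lt_C_card {C : Finset (Fin n)} {σ : Equiv.Perm (Fin n)} {x : Fin n}
    (hx : x ∈ C) : rk C σ x < C.card := by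
  apply Finset.card_lt_card
  refine ⟨Finset.filter_subset _ _, fun hcon => ?_⟩
  have := hcon hx
  rw [Finset.mem_filter] at this
  exact lt_irrefl _ this.2

lemma card_Dset {C : Finset (Fin n)} {σ : Equiv.Perm (Fin n)} {a : ℕ} (ha : a ≤ C.card) :
    (Dset C a σ).card = a := by
  classical
  have hinj : Set.InjOn (rk C σ) C := by
    intro x hx y hy hxy
    by_contra hne
    rcases lt_or_gt_of_ne (fun hs => hne (σ.injective hs) : σ x ≠ σ y) with hlt | hlt
    · exact absurd hxy (Nat.ne_of_lt (rk_lt_of_lt hx hlt))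
    · exact absurd hxy.symm (Nat.ne_of_lt (rk_lt_of_lt hy hlt))
  have himage : C.image (rk C σ) = Finset.range C.card := by
    apply Finset.eq_of_subset_of_card_le
    · intro v hv
      rw [Finset.mem_image] at hv
      obtain ⟨x, hx, rfl⟩ := hv
      exact Finset.mem_range.mpr (rk_lt_C_card hx)
    · rw [Finset.card_range, Finset.card_image_of_injOn hinj]
  have h1 : Dset C a σ = C.filter (fun x => rk C σ x < a) := rfl
  have h2 : (Dset C a σ).image (rk C σ) = (C.image (rk C σ)).filter (fun v => v < a) := by
    rw [h1, Finset.filter_image]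
  have h3 : (Dset C a σ).card = ((Dset C a σ).image (rk C σ)).card :=
    (Finset.card_image_of_injOn (hinj.mono (Finset.filter_subset _ _))).symm
  rw [h3, h2, himage]
  have : (Finset.range C.card).filter (fun v => v < a) = Finset.range a := by
    ext v
    simp only [Finset.mem_filter, Finset.mem_range]
    exact ⟨fun hv => hv.2, fun hv => ⟨lt_of_lt_of_le hv ha, hv⟩⟩
  rw [this, Finset.card_range]

abbrev good (A B : Finset (Fin n)) (σ : Equiv.Perm (Fin n)) : Prop :=
  ∀ x ∈ A, ∀ y ∈ B, σ x < σ y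

lemma good_iff_Dset {A B : Finset (Fin n)} (hd : Disjoint A B) (σ : Equiv.Perm (Fin n)) :
    good A B σ ↔ Dset (A ∪ B) A.card σ = A := by
  classical
  have hcC : (A ∪ B).card = A.card + B.card := Finset.card_union_of_disjoint hd
  have haC : A.card ≤ (A ∪ B).card := hcC ▸ Nat.le_add_right _ _
  constructor
  · intro hg
    have hsub : A ⊆ Dset (A ∪ B) A.card σ := by
      intro x hx
      rw [Dset, Finset.mem_filter]
      refine ⟨Finset.subset_union_left hx, ?_⟩
      have hsub2 : (A ∪ B).filter (fun y => σ y < σ x) ⊆ A.erase x := by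
        intro y hy
        rw [Finset.mem_filter] at hy
        rcases Finset.mem_union.mp hy.1 with hyA | hyB
        · refine Finset.mem_erase.mpr ⟨fun he => ?_, hyA⟩
          subst he; exact lt_irrefl _ hy.2
        · exact absurd (hg x hx y hyB) (not_lt_of_gt hy.2)
      calc rk (A ∪ B) σ x ≤ (A.erase x).card := Finset.card_le_card hsub2
        _ < A.card := Finset.card_erase_lt_of_mem hx
    exact (Finset.eq_of_subset_of_card_le hsub
      (le_of_eq ((card_Dset haC).trans rfl))).symm
  · intro hD x hx y hy
    have hxD : rk (A ∪ B) σ x < A.card := by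
      have : x ∈ Dset (A ∪ B) A.card σ := hD.symm ▸ hx
      exact (Finset.mem_filter.mp this).2
    have hyD : ¬ rk (A ∪ B) σ y < A.card := by
      intro hcon
      have : y ∈ Dset (A ∪ B) A.card σ :=
        Finset.mem_filter.mpr ⟨Finset.mem_union_right _ hy, hcon⟩
      rw [hD] at this
      exact Finset.disjoint_left.mp hd this hy
    rcases lt_trichotomy (σ x) (σ y) with hlt | heq | hgt
    · exact hlt
    · exact absurd (σ.injective heq) (fun he => Finset.disjoint_left.mp hd hx (he ▸ hy))
    · exact absurd (rk_lt_of_lt (Finset.mem_union_right _ hy) hgt)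
        (fun hcon => hyD (hcon.trans hxD))

lemma refilter {C : Finset (Fin n)} {ρ : Equiv.Perm (Fin n)}
    (hρC : ∀ x, x ∈ C ↔ ρ x ∈ C) (P : Fin n → Prop) [DecidablePred P] :
    C.filter (fun y => P (ρ⁻¹ y)) = (C.filter P).image ρ := by
  ext z
  simp only [Finset.mem_filter, Finset.mem_image]
  constructor
  · intro ⟨hz, hP⟩
    exact ⟨ρ⁻¹ z, ⟨by rw [hρC (ρ⁻¹ z), Equiv.Perm.inv_def, Equiv.apply_symm_apply]; exact hz, hP⟩, 
      Equiv.apply_symm_apply ρ z⟩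
  · rintro ⟨w, ⟨hw, hP⟩, rfl⟩
    exact ⟨(hρC w).mp hw, by rwa [Equiv.Perm.inv_def, Equiv.symm_apply_apply]⟩

lemma Dset_mul_inv {C : Finset (Fin n)} {ρ σ : Equiv.Perm (Fin n)} {a : ℕ}
    (hρC : ∀ x, x ∈ C ↔ ρ x ∈ C) :
    Dset C a (σ * ρ⁻¹) = (Dset C a σ).image ρ := by
  have hrk : ∀ x, rk C (σ * ρ⁻¹) x = rk C σ (ρ⁻¹ x) := by
    intro x
    show (C.filter (fun y => (σ * ρ⁻¹) y < (σ * ρ⁻¹) x)).card = _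
    have : C.filter (fun y => (σ * ρ⁻¹) y < (σ * ρ⁻¹) x)
        = C.filter (fun y => (fun z => σ z < σ (ρ⁻¹ x)) (ρ⁻¹ y)) := by
      apply Finset.filter_congr
      intro y _
      simp [Equiv.Perm.mul_apply]
    rw [this, refilter hρC (fun z => σ z < σ (ρ⁻¹ x)), Finset.card_image_of_injective _ ρ.injective]
    rfl
  show C.filter _ = _
  have : C.filter (fun x => rk C (σ * ρ⁻¹) x < a)
      = C.filter (fun x => (fun z => rk C σ z < a) (ρ⁻¹ x)) := by
    apply Finset.filter_congr
    intro x _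
    rw [hrk x]
  rw [this, refilter hρC (fun z => rk C σ z < a)]
  rfl

lemma card_goodPerms (A B : Finset (Fin n)) (hd : Disjoint A B) :
    (Finset.univ.filter (good A B)).card * ((A.card + B.card).choose A.card)
      = Nat.factorial n := by
  classical
  set C := A ∪ B with hC
  have hcC : C.card = A.card + B.card := Finset.card_union_of_disjoint hd
  have haC : A.card ≤ C.card := hcC ▸ Nat.le_add_right _ _
  have hmem : ∀ σ : Equiv.Perm (Fin n), Dset C A.card σ ∈ C.powersetCard A.card :=
    fun σ => Finset.mem_powersetCard.mpr ⟨Finset.filter_subset _ _, card_Dset haC⟩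
  have hsum := Finset.card_eq_sum_card_fiberwise
    (f := Dset C A.card) (s := (Finset.univ : Finset (Equiv.Perm (Fin n))))
    (t := C.powersetCard A.card) (fun σ _ => hmem σ)
  have hAP : A ∈ C.powersetCard A.card :=
    Finset.mem_powersetCard.mpr ⟨Finset.subset_union_left, rfl⟩
  have hfiber : ∀ D ∈ C.powersetCard A.card,
      (Finset.univ.filter fun σ : Equiv.Perm (Fin n) => Dset C A.card σ = D).card
      = (Finset.univ.filter fun σ : Equiv.Perm (Fin n) => Dset C A.card σ = A).card := by
    intro D hD
    rw [Finset.mem_powersetCard] at hD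
    obtain ⟨ρ, hρAD, hρC⟩ := exists_perm_iff_mem_within C A D Finset.subset_union_left
      hD.1 hD.2.symm
    have himg : A.image ρ = D := by
      apply Finset.eq_of_subset_of_card_le
      · intro z hz
        rw [Finset.mem_image] at hz
        obtain ⟨x, hx, rfl⟩ := hz
        exact (hρAD x).mp hx
      · rw [Finset.card_image_of_injective _ ρ.injective, hD.2]
    refine Finset.card_bij' (fun τ _ => τ * ρ) (fun σ _ => σ * ρ⁻¹) ?_ ?_ ?_ ?_
    · intro τ hτ
      rw [Finset.mem_filter] at hτ ⊢
      refine ⟨Finset.mem_univ _, ?_⟩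
      have hkey := Dset_mul_inv (σ := τ * ρ) (a := A.card) hρC
      rw [mul_inv_cancel_right] at hkey
      rw [hτ.2, ← himg] at hkey
      exact Finset.image_injective ρ.injective hkey.symm
    · intro σ hσ
      rw [Finset.mem_filter] at hσ ⊢
      refine ⟨Finset.mem_univ _, ?_⟩
      rw [Dset_mul_inv (σ := σ) (a := A.card) hρC, hσ.2, himg]
    · intro τ _; exact mul_inv_cancel_right τ ρ
    · intro σ _; exact inv_mul_cancel_right σ ρ
  rw [Finset.sum_congr rfl hfiber, Finset.sum_const, smul_eq_mul,
    Finset.card_powersetCard] at hsum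
  have hgood : (Finset.univ.filter (good A B))
      = (Finset.univ.filter fun σ : Equiv.Perm (Fin n) => Dset C A.card σ = A) := by
    apply Finset.filter_congr
    intro σ _
    simpa using good_iff_Dset hd σ
  rw [hgood]
  rw [Finset.card_univ, Fintype.card_perm, Fintype.card_fin] at hsum
  rw [hsum, ← hcC]
  exact mul_comm _ _

variable {m r : ℕ}

abbrev compat (X : Fin r → Finset (Fin n)) (A B : Fin m → Finset (Fin n)) (l : Fin r) (i : Fin m)
    (ω : (Fin r → Equiv.Perm (Fin n)) × (Fin r → Fin (n + 1))) : Prop :=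
  (∀ k, good (A i ∩ X k) (B i ∩ X k) (ω.1 k)) ∧
  (∀ k, k ≠ l → ((∀ x ∈ A i ∩ X k, rk (X k) (ω.1 k) x < (ω.2 k : ℕ)) ∧
      (∀ y ∈ B i ∩ X k, (ω.2 k : ℕ) ≤ rk (X k) (ω.1 k) y)))

lemma compat_unique {X : Fin r → Finset (Fin n)} {A B : Fin m → Finset (Fin n)} {l : Fin r}
    (hcover : Finset.univ.biUnion X = Finset.univ)
    (h : ∀ i j, A i ∩ B j = ∅ ↔ i = j)
    {i j : Fin m} {ω : (Fin r → Equiv.Perm (Fin n)) × (Fin r → Fin (n + 1))}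
    (hi : compat X A B l i ω) (hj : compat X A B l j ω) : i = j := by
  by_contra hne
  have hpart : ∀ x : Fin n, ∃ k, x ∈ X k := by
    intro x
    have : x ∈ Finset.univ.biUnion X := by rw [hcover]; exact Finset.mem_univ x
    simpa using Finset.mem_biUnion.mp this
  have main : ∀ (i' j' : Fin m), compat X A B l i' ω → compat X A B l j' ω →
      ∀ x, x ∈ A i' → x ∈ B j' → x ∈ X l := by
    intro i' j' hi' hj' x hxA hxB
    obtain ⟨k, hk⟩ := hpart x
    by_cases hkl : k = l
    · exact hkl ▸ hk
    · exfalso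
      have h1 := (hi'.2 k hkl).1 x (Finset.mem_inter.mpr ⟨hxA, hk⟩)
      have h2 := (hj'.2 k hkl).2 x (Finset.mem_inter.mpr ⟨hxB, hk⟩)
      exact absurd h1 (not_lt_of_ge h2)
  have hxne : A i ∩ B j ≠ ∅ := fun he => hne ((h i j).mp he)
  have hyne : A j ∩ B i ≠ ∅ := fun he => hne (((h j i).mp he).symm)
  obtain ⟨x, hx⟩ := Finset.nonempty_iff_ne_empty.mpr hxne
  obtain ⟨y, hy⟩ := Finset.nonempty_iff_ne_empty.mpr hyne
  rw [Finset.mem_inter] at hx hy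
  have hxl := main i j hi hj x hx.1 hx.2
  have hyl := main j i hj hi y hy.1 hy.2
  have c1 := hi.1 l x (Finset.mem_inter.mpr ⟨hx.1, hxl⟩) y (Finset.mem_inter.mpr ⟨hy.2, hyl⟩)
  have c2 := hj.1 l y (Finset.mem_inter.mpr ⟨hy.1, hyl⟩) x (Finset.mem_inter.mpr ⟨hx.2, hxl⟩)
  exact lt_asymm c1 c2

lemma card_filter_le_val {c : ℕ} (hc : c ≤ n) :
    ((Finset.univ : Finset (Fin (n + 1))).filter (fun t : Fin (n + 1) => (t : ℕ) ≤ c)).card = c + 1 := by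
  have : (Finset.univ : Finset (Fin (n + 1))).filter (fun t : Fin (n + 1) => (t : ℕ) ≤ c)
      = Finset.Iic (⟨c, Nat.lt_succ_of_le hc⟩ : Fin (n + 1)) := by
    ext t
    simp [Fin.le_def]
  rw [this, Fin.card_Iic]

lemma hXn {X : Fin r → Finset (Fin n)} (k : Fin r) : (X k).card ≤ n := by
  simpa using Finset.card_le_univ (X k)

lemma count_lower {X : Fin r → Finset (Fin n)} {A B : Fin m → Finset (Fin n)} {l : Fin r}
    (i : Fin m) :
    ∏ k, (Finset.univ.filter (good (A i ∩ X k) (B i ∩ X k))).card ≤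
    ((Finset.univ ×ˢ Fintype.piFinset (fun k => if k = l then ({0} : Finset (Fin (n + 1)))
        else Finset.univ.filter (fun t : Fin (n + 1) => (t : ℕ) ≤ (X k).card))).filter
      (compat X A B l i)).card := by
  classical
  have hb : ∀ (k : Fin r) (σ : Fin r → Equiv.Perm (Fin n)),
      ((X k).filter (fun y => ∃ x ∈ A i ∩ X k, σ k y ≤ σ k x)).card < n + 1 :=
    fun k σ => Nat.lt_succ_of_le (le_trans (Finset.card_le_card (Finset.filter_subset _ _))
      (hXn k))
  set tval : (Fin r → Equiv.Perm (Fin n)) → Fin r → Fin (n + 1) := fun σ k =>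
    if hkl : k = l then 0 else
      ⟨((X k).filter (fun y => ∃ x ∈ A i ∩ X k, σ k y ≤ σ k x)).card, hb k σ⟩ with htval
  rw [← Fintype.card_piFinset]
  apply Finset.card_le_card_of_injOn (fun σ => (σ, tval σ))
  · intro σ hσ
    rw [Finset.mem_coe, Fintype.mem_piFinset] at hσ
    have hgood : ∀ k, good (A i ∩ X k) (B i ∩ X k) (σ k) :=
      fun k => (Finset.mem_filter.mp (hσ k)).2
    rw [Finset.mem_coe, Finset.mem_filter]
    constructor
    · rw [Finset.mem_product]
      refine ⟨Finset.mem_univ _, ?_⟩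
      rw [Fintype.mem_piFinset]
      intro k
      by_cases hkl : k = l
      · simp [htval, hkl]
      · simp only [htval, dif_neg hkl, if_neg hkl]
        refine Finset.mem_filter.mpr ⟨Finset.mem_univ _, ?_⟩
        exact Finset.card_le_card (Finset.filter_subset _ _)
    · refine ⟨hgood, fun k hkl => ⟨?_, ?_⟩⟩
      · intro x hx
        have hxX : x ∈ X k := (Finset.mem_inter.mp hx).2
        show rk (X k) (σ k) x < ((tval σ k : Fin (n + 1)) : ℕ)
        simp only [htval, dif_neg hkl]
        apply Finset.card_lt_card
        refine ⟨fun z hz => ?_, fun hcon => ?_⟩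
        · rw [Finset.mem_filter] at hz ⊢
          exact ⟨hz.1, ⟨x, hx, le_of_lt hz.2⟩⟩
        · have : x ∈ (X k).filter (fun y => σ k y < σ k x) :=
            hcon (Finset.mem_filter.mpr ⟨hxX, ⟨x, hx, le_refl _⟩⟩)
          exact lt_irrefl _ (Finset.mem_filter.mp this).2
      · intro y hy
        show ((tval σ k : Fin (n + 1)) : ℕ) ≤ rk (X k) (σ k) y
        simp only [htval, dif_neg hkl]
        apply Finset.card_le_card
        intro z hz
        rw [Finset.mem_filter] at hz ⊢
        obtain ⟨hzX, x, hx, hle⟩ := hz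
        exact ⟨hzX, lt_of_le_of_lt hle (hgood k x hx y hy)⟩
  · intro σ1 _ σ2 _ heq
    exact congrArg Prod.fst heq

lemma omega_card {X : Fin r → Finset (Fin n)} {l : Fin r} :
    ((Finset.univ : Finset (Fin r → Equiv.Perm (Fin n))) ×ˢ Fintype.piFinset (fun k => if k = l then ({0} : Finset (Fin (n + 1)))
      else Finset.univ.filter (fun t : Fin (n + 1) => (t : ℕ) ≤ (X k).card))).card
    = (Nat.factorial n) ^ r * ∏ k, (if k = l then 1 else (X k).card + 1) := by
  classical
  rw [Finset.card_product, Fintype.card_piFinset]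
  congr 1
  · rw [Finset.card_univ, Fintype.card_fun, Fintype.card_perm, Fintype.card_fin,
      Fintype.card_fin]
  · apply Finset.prod_congr rfl
    intro k _
    by_cases hkl : k = l
    · simp [hkl]
    · rw [if_neg hkl, if_neg hkl, card_filter_le_val (hXn k)]

end BollobasAux

theorem bollobas_partition_lemma (n m r : ℕ) (X : Fin r → Finset (Fin n))
    (hX : ∀ k l, k ≠ l → Disjoint (X k) (X l))
    (hcover : Finset.univ.biUnion X = Finset.univ)
    (A B : Fin m → Finset (Fin n))
    (h : ∀ i j, A i ∩ B j = ∅ ↔ i = j) (l : Fin r) :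
    ∑ i, (∏ k, (((A i ∩ X k).card + (B i ∩ X k).card).choose (A i ∩ X k).card : ℝ))⁻¹
      ≤ (∏ k, (1 + (X k).card : ℝ)) / (1 + (X l).card : ℝ) := by
  classical
  set g : Fin m → Fin r → ℕ := fun i k =>
    (Finset.univ.filter (BollobasAux.good (A i ∩ X k) (B i ∩ X k))).card with hg
  set c : Fin m → Fin r → ℕ := fun i k =>
    ((A i ∩ X k).card + (B i ∩ X k).card).choose (A i ∩ X k).card with hc
  have hdisj : ∀ i k, Disjoint (A i ∩ X k) (B i ∩ X k) := by
    intro i k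
    have hABi : A i ∩ B i = ∅ := (h i i).mpr rfl
    rw [Finset.disjoint_left]
    intro x hx1 hx2
    have hmem : x ∈ A i ∩ B i := Finset.mem_inter.mpr
      ⟨(Finset.mem_inter.mp hx1).1, (Finset.mem_inter.mp hx2).1⟩
    rw [hABi] at hmem
    exact absurd hmem (Finset.notMem_empty x)
  have hkey : ∀ i k, g i k * c i k = Nat.factorial n :=
    fun i k => BollobasAux.card_goodPerms _ _ (hdisj i k)
  set Ω := ((Finset.univ : Finset (Fin r → Equiv.Perm (Fin n))) ×ˢ
    Fintype.piFinset (fun k => if k = l then ({0} : Finset (Fin (n + 1)))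
      else Finset.univ.filter (fun t : Fin (n + 1) => (t : ℕ) ≤ (X k).card))) with hΩ
  have hpairwise : ∀ i ∈ (Finset.univ : Finset (Fin m)), ∀ j ∈ Finset.univ, i ≠ j →
      Disjoint (Ω.filter (BollobasAux.compat X A B l i))
        (Ω.filter (BollobasAux.compat X A B l j)) := by
    intro i _ j _ hne
    rw [Finset.disjoint_left]
    intro ω hωi hωj
    exact hne (BollobasAux.compat_unique hcover h
      (Finset.mem_filter.mp hωi).2 (Finset.mem_filter.mp hωj).2)
  have hnat : ∑ i, ∏ k, g i k ≤
      (Nat.factorial n) ^ r * ∏ k, (if k = l then 1 else (X k).card + 1) := by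
    calc ∑ i, ∏ k, g i k
        ≤ ∑ i, (Ω.filter (BollobasAux.compat X A B l i)).card :=
          Finset.sum_le_sum (fun i _ => BollobasAux.count_lower i)
      _ = (Finset.univ.biUnion (fun i => Ω.filter (BollobasAux.compat X A B l i))).card :=
          (Finset.card_biUnion hpairwise).symm
      _ ≤ Ω.card := Finset.card_le_card
          (Finset.biUnion_subset.mpr (fun i _ => Finset.filter_subset _ _))
      _ = _ := BollobasAux.omega_card
  -- pass to the reals
  have hfac : (0 : ℝ) < (Nat.factorial n : ℝ) := by exact_mod_cast Nat.factorial_pos n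
  have hfacr : (0 : ℝ) < ((Nat.factorial n : ℝ)) ^ r := pow_pos hfac r
  have hcpos : ∀ i k, (0 : ℝ) < (c i k : ℝ) := by
    intro i k
    exact_mod_cast Nat.choose_pos (Nat.le_add_right _ _)
  have hprodc : ∀ i, (0 : ℝ) < ∏ k, (c i k : ℝ) :=
    fun i => Finset.prod_pos (fun k _ => hcpos i k)
  have hgc : ∀ i, ∏ k, (g i k : ℝ) = (Nat.factorial n : ℝ) ^ r * (∏ k, (c i k : ℝ))⁻¹ := by
    intro i
    have hmul : (∏ k, (g i k : ℝ)) * ∏ k, (c i k : ℝ) = (Nat.factorial n : ℝ) ^ r := by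
      rw [← Finset.prod_mul_distrib]
      have : ∀ k ∈ (Finset.univ : Finset (Fin r)), (g i k : ℝ) * (c i k : ℝ)
          = (Nat.factorial n : ℝ) := by
        intro k _
        exact_mod_cast congrArg (Nat.cast : ℕ → ℝ) (hkey i k)
      rw [Finset.prod_congr rfl this, Finset.prod_const, Finset.card_univ, Fintype.card_fin]
    rw [← hmul, mul_assoc, mul_inv_cancel₀ (ne_of_gt (hprodc i)), mul_one]
  have hLHS : ∑ i, (∏ k, (c i k : ℝ))⁻¹
      = (∑ i, ∏ k, (g i k : ℝ)) / (Nat.factorial n : ℝ) ^ r := by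
    rw [Finset.sum_div]
    apply Finset.sum_congr rfl
    intro i _
    rw [hgc i, mul_comm, mul_div_assoc, div_self (ne_of_gt hfacr), mul_one]
  have hcastnat : (∑ i, ∏ k, (g i k : ℝ))
      ≤ (Nat.factorial n : ℝ) ^ r * ∏ k, (if k = l then 1 else ((X k).card : ℝ) + 1) := by
    have heq : ∏ k, (if k = l then (1 : ℝ) else ((X k).card : ℝ) + 1)
        = ((∏ k, (if k = l then 1 else (X k).card + 1) : ℕ) : ℝ) := by
      push_cast
      apply Finset.prod_congr rfl
      intro k _
      by_cases hkl : k = l <;> simp [hkl]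
    rw [heq]
    exact_mod_cast hnat
  have hstep : ∑ i, (∏ k, (c i k : ℝ))⁻¹
      ≤ ∏ k, (if k = l then 1 else ((X k).card : ℝ) + 1) := by
    rw [hLHS, div_le_iff₀ hfacr, mul_comm]
    exact hcastnat
  refine le_trans hstep (le_of_eq ?_)
  have h1 : ∏ k, (if k = l then (1 : ℝ) else ((X k).card : ℝ) + 1)
      = ∏ k ∈ Finset.univ.erase l, (1 + ((X k).card : ℝ)) := by
    rw [← Finset.mul_prod_erase Finset.univ _ (Finset.mem_univ l), if_pos rfl, one_mul]
    exact Finset.prod_congr rfl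
      (fun k hk => by rw [if_neg (Finset.ne_of_mem_erase hk), add_comm])
  have h2 : (∏ k, (1 + ((X k).card : ℝ))) / (1 + ((X l).card : ℝ))
      = ∏ k ∈ Finset.univ.erase l, (1 + ((X k).card : ℝ)) := by
    rw [← Finset.mul_prod_erase Finset.univ
      (fun k => (1 + ((X k).card : ℝ))) (Finset.mem_univ l)]
    rw [mul_comm, mul_div_assoc, div_self (by positivity : (1 + ((X l).card : ℝ)) ≠ 0),
      mul_one]
  rw [h1, h2]
end

section
/- Let X = [n] be the disjoint union of X_1 and X_2, and let (A_i, B_i), i ∈ [m], be a Bollobás system of pairs of subsets of X. Then ∑_{i=1}^m (binom(|A_i ∩ X_1| + |B_i ∩ X_1|, |A_i ∩ X_1|) · binom(|A_i ∩ X_2| + |B_i ∩ X_2|, |A_i ∩ X_2|))^{-1} ≤ 1 + ⌊n/2⌋. -/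
open Finset Equiv

namespace BollobasTwo

variable {n : ℕ}

/-- all of `A` comes before all of `B` under `π`. -/
def Cond (A B : Finset (Fin n)) (π : Perm (Fin n)) : Prop :=
  ∀ x ∈ A, ∀ y ∈ B, π x < π y

instance (A B : Finset (Fin n)) (π : Perm (Fin n)) : Decidable (Cond A B π) := by
  unfold Cond; infer_instance

lemma cardA (A : Finset (Fin n)) (π : Perm (Fin n)) : (A.image ⇑π).card = A.card :=
  card_image_of_injective _ π.injective

lemma cardV (A B : Finset (Fin n)) (hd : Disjoint A B) (π : Perm (Fin n)) :
    ((A ∪ B).image ⇑π).card = A.card + B.card := by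
  rw [card_image_of_injective _ π.injective, card_union_of_disjoint hd]

noncomputable def sortFun (A B : Finset (Fin n)) (hd : Disjoint A B) (π : Perm (Fin n))
    (x : Fin n) : Fin n :=
  if hx : x ∈ A then
    ↑(((A ∪ B).image ⇑π).orderIsoOfFin (cardV A B hd π)
      ⟨((((A.image ⇑π).orderIsoOfFin (cardA A π)).symm ⟨π x, mem_image_of_mem _ hx⟩)).1,
        Nat.lt_of_lt_of_le (Fin.is_lt _) (Nat.le_add_right _ _)⟩)
  else if hx' : x ∈ B then
    ↑(((A ∪ B).image ⇑π).orderIsoOfFin (cardV A B hd π)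
      ⟨A.card + ((((B.image ⇑π).orderIsoOfFin (cardA B π)).symm ⟨π x, mem_image_of_mem _ hx'⟩)).1,
        Nat.add_lt_add_left (Fin.is_lt _) _⟩)
  else π x

section SortLemmas

variable {A B : Finset (Fin n)} (hd : Disjoint A B) (π : Perm (Fin n))

lemma orderIso_lt (S : Finset (Fin n)) {k : ℕ} (h : S.card = k) (i j : Fin k) :
    (↑(S.orderIsoOfFin h i) : Fin n) < ↑(S.orderIsoOfFin h j) ↔ i < j := by
  exact Subtype.coe_lt_coe.trans (OrderIso.lt_iff_lt _)

lemma rank_lt (S : Finset (Fin n)) {k : ℕ} (h : S.card = k) (u v : {x // x ∈ S}) :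
    (S.orderIsoOfFin h).symm u < (S.orderIsoOfFin h).symm v ↔ (u : Fin n) < v := by
  exact (OrderIso.lt_iff_lt _).trans Subtype.coe_lt_coe.symm

lemma sortFun_of_not_mem {x : Fin n} (hx : x ∉ A ∪ B) : sortFun A B hd π x = π x := by
  have h1 : x ∉ A := fun hh => hx (mem_union_left _ hh)
  have h2 : x ∉ B := fun hh => hx (mem_union_right _ hh)
  simp [sortFun, h1, h2]

lemma sortFun_mem {x : Fin n} (hx : x ∈ A ∪ B) :
    sortFun A B hd π x ∈ (A ∪ B).image ⇑π := by
  rcases mem_union.1 hx with hA | hB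
  · rw [sortFun, dif_pos hA]; exact Subtype.coe_prop _
  · by_cases hA : x ∈ A
    · rw [sortFun, dif_pos hA]; exact Subtype.coe_prop _
    · rw [sortFun, dif_neg hA, dif_pos hB]; exact Subtype.coe_prop _

lemma sortFun_pattern_A {x y : Fin n} (hx : x ∈ A) (hy : y ∈ A) :
    (sortFun A B hd π x < sortFun A B hd π y ↔ π x < π y) := by
  rw [sortFun, dif_pos hx, sortFun, dif_pos hy, orderIso_lt, Fin.mk_lt_mk, ← Fin.lt_def,
    rank_lt]

lemma sortFun_pattern_B {x y : Fin n} (hx : x ∈ B) (hy : y ∈ B) :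
    (sortFun A B hd π x < sortFun A B hd π y ↔ π x < π y) := by
  have hx' : x ∉ A := fun hh => (disjoint_left.1 hd hh) hx
  have hy' : y ∉ A := fun hh => (disjoint_left.1 hd hh) hy
  rw [sortFun, dif_neg hx', dif_pos hx, sortFun, dif_neg hy', dif_pos hy, orderIso_lt,
    Fin.mk_lt_mk, Nat.add_lt_add_iff_left, ← Fin.lt_def, rank_lt]

lemma sortFun_cond {x y : Fin n} (hx : x ∈ A) (hy : y ∈ B) :
    sortFun A B hd π x < sortFun A B hd π y := by
  have hy' : y ∉ A := fun hh => (disjoint_left.1 hd hh) hy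
  rw [sortFun, dif_pos hx, sortFun, dif_neg hy', dif_pos hy, orderIso_lt, Fin.mk_lt_mk]
  exact Nat.lt_of_lt_of_le (Fin.is_lt _) (Nat.le_add_right _ _)

lemma sortFun_injective : Function.Injective (sortFun A B hd π) := by
  have key : ∀ x y : Fin n, x ∈ A ∪ B → y ∉ A ∪ B → sortFun A B hd π x ≠ sortFun A B hd π y := by
    intro x y hx hy heq
    rw [sortFun_of_not_mem hd π hy] at heq
    have h1 : π y ∈ (A ∪ B).image ⇑π := heq ▸ sortFun_mem hd π hx
    obtain ⟨z, hz, hz2⟩ := mem_image.1 h1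
    exact hy (π.injective hz2 ▸ hz)
  intro x y heq
  by_cases hx : x ∈ A ∪ B
  · by_cases hy : y ∈ A ∪ B
    · rcases mem_union.1 hx with hxA | hxB <;> rcases mem_union.1 hy with hyA | hyB
      · refine π.injective (le_antisymm ?_ ?_) <;> rw [← not_lt]
        · rw [← sortFun_pattern_A hd π hyA hxA]; exact fun hc => absurd heq (ne_of_gt hc)
        · rw [← sortFun_pattern_A hd π hxA hyA]; exact fun hc => absurd heq (ne_of_lt hc)
      · exact absurd heq (ne_of_lt (sortFun_cond hd π hxA hyB))
      · exact absurd heq.symm (ne_of_lt (sortFun_cond hd π hyA hxB))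
      · refine π.injective (le_antisymm ?_ ?_) <;> rw [← not_lt]
        · rw [← sortFun_pattern_B hd π hyB hxB]; exact fun hc => absurd heq (ne_of_gt hc)
        · rw [← sortFun_pattern_B hd π hxB hyB]; exact fun hc => absurd heq (ne_of_lt hc)
    · exact absurd heq (key x y hx hy)
  · by_cases hy : y ∈ A ∪ B
    · exact absurd heq.symm (key y x hy hx)
    · rw [sortFun_of_not_mem hd π hx, sortFun_of_not_mem hd π hy] at heq
      exact π.injective heq

noncomputable def sortPerm : Perm (Fin n) :=
  Equiv.ofBijective _ (Finite.injective_iff_bijective.1 (sortFun_injective hd π))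

lemma sortPerm_apply (x : Fin n) : sortPerm hd π x = sortFun A B hd π x := rfl

lemma sortPerm_image : (A ∪ B).image ⇑(sortPerm hd π) = (A ∪ B).image ⇑π := by
  apply eq_of_subset_of_card_le
  · intro u hu
    obtain ⟨x, hx, rfl⟩ := mem_image.1 hu
    exact sortFun_mem hd π hx
  · rw [card_image_of_injective _ π.injective, card_image_of_injective _ (sortPerm hd π).injective]

end SortLemmas

lemma image_filter_preimage (σ : Perm (Fin n)) (s W : Finset (Fin n))
    (hW : W ⊆ s.image ⇑σ) : ((s.filter fun x => σ x ∈ W).image ⇑σ) = W := by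
  ext u
  constructor
  · intro hu
    obtain ⟨x, hx, rfl⟩ := mem_image.1 hu
    exact (mem_filter.1 hx).2
  · intro hu
    obtain ⟨x, hx, rfl⟩ := mem_image.1 (hW hu)
    exact mem_image_of_mem _ (mem_filter.2 ⟨hx, hu⟩)

lemma card_filter_preimage (σ : Perm (Fin n)) (s W : Finset (Fin n))
    (hW : W ⊆ s.image ⇑σ) : (s.filter fun x => σ x ∈ W).card = W.card := by
  conv_rhs => rw [← image_filter_preimage σ s W hW]
  rw [card_image_of_injective _ σ.injective]

/-- two permutations with the same image and the same relative order on `S` agree on `S`. -/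
lemma agree_of_image_eq_of_pattern (π π' : Perm (Fin n)) (S : Finset (Fin n))
    (himg : S.image ⇑π = S.image ⇑π')
    (hpat : ∀ x ∈ S, ∀ y ∈ S, (π x < π y ↔ π' x < π' y)) :
    ∀ x ∈ S, π x = π' x := by
  classical
  have hcard : (S.image ⇑π).card = S.card := card_image_of_injective _ π.injective
  set F : Fin S.card → Fin n :=
    fun i => π' (π.symm ((S.image ⇑π).orderEmbOfFin hcard i)) with hF
  have hmem : ∀ i, F i ∈ S.image ⇑π := by
    intro i
    obtain ⟨x, hx, hx2⟩ := mem_image.1 ((S.image ⇑π).orderEmbOfFin_mem hcard i)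
    have h3 : π.symm ((S.image ⇑π).orderEmbOfFin hcard i) = x := by
      rw [← hx2]; exact π.symm_apply_apply x
    rw [hF]; dsimp only; rw [h3, himg]
    exact mem_image_of_mem _ hx
  have hmono : StrictMono F := by
    intro i j hij
    have h1 := ((S.image ⇑π).orderEmbOfFin hcard).strictMono hij
    obtain ⟨x, hx, hx2⟩ := mem_image.1 ((S.image ⇑π).orderEmbOfFin_mem hcard i)
    obtain ⟨y, hy, hy2⟩ := mem_image.1 ((S.image ⇑π).orderEmbOfFin_mem hcard j)
    rw [hF]; dsimp only
    rw [← hx2, ← hy2, π.symm_apply_apply, π.symm_apply_apply]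
    exact (hpat x hx y hy).1 (by rw [hx2, hy2]; exact h1)
  have hFeq : F = ⇑((S.image ⇑π).orderEmbOfFin hcard) := orderEmbOfFin_unique hcard hmem hmono
  intro x hx
  have hxW : π x ∈ S.image ⇑π := mem_image_of_mem _ hx
  have hrange : π x ∈ Set.range ⇑((S.image ⇑π).orderEmbOfFin hcard) := by
    rw [range_orderEmbOfFin]; exact_mod_cast hxW
  obtain ⟨i, hi⟩ := hrange
  have h2 : F i = π' x := by rw [hF]; dsimp only; rw [hi, π.symm_apply_apply]
  rw [← hi, ← h2, hFeq]


section Count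

variable (A₁ B₁ A₂ B₂ : Finset (Fin n))

lemma key_count (hd₁ : Disjoint A₁ B₁) (hd₂ : Disjoint A₂ B₂)
    (hblocks : Disjoint (A₁ ∪ B₁) (A₂ ∪ B₂)) :
    n.factorial ≤ (univ.filter fun π : Perm (Fin n) => Cond A₁ B₁ π ∧ Cond A₂ B₂ π).card *
      ((A₁.card + B₁.card).choose A₁.card * (A₂.card + B₂.card).choose A₂.card) := by
  classical
  set σ : Perm (Fin n) → Perm (Fin n) := fun π => sortPerm hd₂ (sortPerm hd₁ π) with hσdef
  have hagree1 : ∀ (π : Perm (Fin n)) (x : Fin n), x ∈ A₁ ∪ B₁ → σ π x = sortPerm hd₁ π x := by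
    intro π x hx
    exact sortFun_of_not_mem hd₂ _ (disjoint_left.1 hblocks hx)
  have hagree2 : ∀ (π : Perm (Fin n)) (x : Fin n), x ∈ A₂ ∪ B₂ → sortPerm hd₁ π x = π x := by
    intro π x hx
    exact sortFun_of_not_mem hd₁ _ (disjoint_right.1 hblocks hx)
  have hagree0 : ∀ (π : Perm (Fin n)) (x : Fin n), x ∉ A₁ ∪ B₁ → x ∉ A₂ ∪ B₂ → σ π x = π x := by
    intro π x h1 h2
    rw [hσdef]; dsimp only
    rw [sortPerm_apply, sortFun_of_not_mem hd₂ _ h2, sortPerm_apply,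
      sortFun_of_not_mem hd₁ _ h1]
  have himg1 : ∀ π : Perm (Fin n), (A₁ ∪ B₁).image ⇑(σ π) = (A₁ ∪ B₁).image ⇑π := by
    intro π
    rw [Finset.image_congr (g := ⇑(sortPerm hd₁ π)) (fun x hx => hagree1 π x hx)]
    exact sortPerm_image hd₁ π
  have himg2 : ∀ π : Perm (Fin n), (A₂ ∪ B₂).image ⇑(σ π) = (A₂ ∪ B₂).image ⇑π := by
    intro π
    rw [hσdef]; dsimp only
    rw [sortPerm_image hd₂ _]
    exact Finset.image_congr (fun x hx => hagree2 π x hx)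
  have hcond1 : ∀ π : Perm (Fin n), Cond A₁ B₁ (σ π) := by
    intro π x hx y hy
    rw [hagree1 π x (mem_union_left _ hx), hagree1 π y (mem_union_right _ hy)]
    exact sortFun_cond hd₁ π hx hy
  have hcond2 : ∀ π : Perm (Fin n), Cond A₂ B₂ (σ π) := by
    intro π x hx y hy
    exact sortFun_cond hd₂ _ hx hy
  have hpatA1 : ∀ (π : Perm (Fin n)) (x : Fin n), x ∈ A₁ → ∀ y ∈ A₁, (σ π x < σ π y ↔ π x < π y) := by
    intro π x hx y hy
    rw [hagree1 π x (mem_union_left _ hx), hagree1 π y (mem_union_left _ hy)]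
    exact sortFun_pattern_A hd₁ π hx hy
  have hpatB1 : ∀ (π : Perm (Fin n)) (x : Fin n), x ∈ B₁ → ∀ y ∈ B₁, (σ π x < σ π y ↔ π x < π y) := by
    intro π x hx y hy
    rw [hagree1 π x (mem_union_right _ hx), hagree1 π y (mem_union_right _ hy)]
    exact sortFun_pattern_B hd₁ π hx hy
  have hpatA2 : ∀ (π : Perm (Fin n)) (x : Fin n), x ∈ A₂ → ∀ y ∈ A₂, (σ π x < σ π y ↔ π x < π y) := by
    intro π x hx y hy
    rw [hσdef]; dsimp only
    rw [show (π x) = sortPerm hd₁ π x from (hagree2 π x (mem_union_left _ hx)).symm,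
      show (π y) = sortPerm hd₁ π y from (hagree2 π y (mem_union_left _ hy)).symm]
    exact sortFun_pattern_A hd₂ _ hx hy
  have hpatB2 : ∀ (π : Perm (Fin n)) (x : Fin n), x ∈ B₂ → ∀ y ∈ B₂, (σ π x < σ π y ↔ π x < π y) := by
    intro π x hx y hy
    rw [hσdef]; dsimp only
    rw [show (π x) = sortPerm hd₁ π x from (hagree2 π x (mem_union_right _ hx)).symm,
      show (π y) = sortPerm hd₁ π y from (hagree2 π y (mem_union_right _ hy)).symm]
    exact sortFun_pattern_B hd₂ _ hx hy
  -- the T-sets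
  set T₁ : Perm (Fin n) → Finset (Fin n) :=
    fun π => (A₁ ∪ B₁).filter fun x => σ π x ∈ A₁.image ⇑π with hT₁def
  set T₂ : Perm (Fin n) → Finset (Fin n) :=
    fun π => (A₂ ∪ B₂).filter fun x => σ π x ∈ A₂.image ⇑π with hT₂def
  have hsub1 : ∀ π : Perm (Fin n), A₁.image ⇑π ⊆ (A₁ ∪ B₁).image ⇑(σ π) := by
    intro π; rw [himg1]; exact image_subset_image subset_union_left
  have hsub2 : ∀ π : Perm (Fin n), A₂.image ⇑π ⊆ (A₂ ∪ B₂).image ⇑(σ π) := by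
    intro π; rw [himg2]; exact image_subset_image subset_union_left
  have hT1img : ∀ π : Perm (Fin n), (T₁ π).image ⇑(σ π) = A₁.image ⇑π :=
    fun π => image_filter_preimage (σ π) _ _ (hsub1 π)
  have hT2img : ∀ π : Perm (Fin n), (T₂ π).image ⇑(σ π) = A₂.image ⇑π :=
    fun π => image_filter_preimage (σ π) _ _ (hsub2 π)
  have hT1card : ∀ π : Perm (Fin n), (T₁ π).card = A₁.card := by
    intro π
    rw [hT₁def]; dsimp only
    rw [card_filter_preimage (σ π) _ _ (hsub1 π), cardA]
  have hT2card : ∀ π : Perm (Fin n), (T₂ π).card = A₂.card := by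
    intro π
    rw [hT₂def]; dsimp only
    rw [card_filter_preimage (σ π) _ _ (hsub2 π), cardA]
  -- image of B-blocks is determined
  have hBimg : ∀ (ρ : Perm (Fin n)) (C D : Finset (Fin n)), Disjoint C D →
      D.image ⇑ρ = ((C ∪ D).image ⇑ρ) \ (C.image ⇑ρ) := by
    intro ρ C D hCD
    rw [image_union, union_sdiff_cancel_left ((disjoint_image ρ.injective).2 hCD)]
  -- the injection
  have hcardle : (univ : Finset (Perm (Fin n))).card ≤
      (((univ.filter fun π : Perm (Fin n) => Cond A₁ B₁ π ∧ Cond A₂ B₂ π) ×ˢ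
        ((A₁ ∪ B₁).powersetCard A₁.card ×ˢ (A₂ ∪ B₂).powersetCard A₂.card))).card := by
    apply card_le_card_of_injOn (fun π => (σ π, T₁ π, T₂ π))
    · intro π _
      refine mem_product.2 ⟨mem_filter.2 ⟨mem_univ _, hcond1 π, hcond2 π⟩, mem_product.2 ⟨?_, ?_⟩⟩
      · exact mem_powersetCard.2 ⟨filter_subset _ _, hT1card π⟩
      · exact mem_powersetCard.2 ⟨filter_subset _ _, hT2card π⟩
    · intro π _ π' _ heq
      simp only [Prod.mk.injEq] at heq
      obtain ⟨hσeq, hT1eq, hT2eq⟩ := heq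
      have himgA1 : A₁.image ⇑π = A₁.image ⇑π' := by
        rw [← hT1img π, ← hT1img π', hσeq, hT1eq]
      have himgA2 : A₂.image ⇑π = A₂.image ⇑π' := by
        rw [← hT2img π, ← hT2img π', hσeq, hT2eq]
      have himgB1 : B₁.image ⇑π = B₁.image ⇑π' := by
        rw [hBimg π A₁ B₁ hd₁, hBimg π' A₁ B₁ hd₁, ← himg1 π, ← himg1 π', hσeq, himgA1]
      have himgB2 : B₂.image ⇑π = B₂.image ⇑π' := by
        rw [hBimg π A₂ B₂ hd₂, hBimg π' A₂ B₂ hd₂, ← himg2 π, ← himg2 π', hσeq, himgA2]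
      have hagA1 := agree_of_image_eq_of_pattern π π' A₁ himgA1 (by
        intro x hx y hy
        rw [← hpatA1 π x hx y hy, ← hpatA1 π' x hx y hy, hσeq])
      have hagB1 := agree_of_image_eq_of_pattern π π' B₁ himgB1 (by
        intro x hx y hy
        rw [← hpatB1 π x hx y hy, ← hpatB1 π' x hx y hy, hσeq])
      have hagA2 := agree_of_image_eq_of_pattern π π' A₂ himgA2 (by
        intro x hx y hy
        rw [← hpatA2 π x hx y hy, ← hpatA2 π' x hx y hy, hσeq])
      have hagB2 := agree_of_image_eq_of_pattern π π' B₂ himgB2 (by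
        intro x hx y hy
        rw [← hpatB2 π x hx y hy, ← hpatB2 π' x hx y hy, hσeq])
      refine Equiv.ext fun x => ?_
      by_cases hx1 : x ∈ A₁ ∪ B₁
      · rcases mem_union.1 hx1 with hxA | hxB
        · exact hagA1 x hxA
        · exact hagB1 x hxB
      · by_cases hx2 : x ∈ A₂ ∪ B₂
        · rcases mem_union.1 hx2 with hxA | hxB
          · exact hagA2 x hxA
          · exact hagB2 x hxB
        · rw [← hagree0 π x hx1 hx2, ← hagree0 π' x hx1 hx2, hσeq]
  calc n.factorial = (univ : Finset (Perm (Fin n))).card := by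
        rw [card_univ, Fintype.card_perm, Fintype.card_fin]
    _ ≤ _ := hcardle
    _ = _ := by
        rw [card_product, card_product, card_powersetCard, card_powersetCard,
          card_union_of_disjoint hd₁, card_union_of_disjoint hd₂]

end Count


section Det

lemma det_bound {m : ℕ} (X₁ X₂ : Finset (Fin n)) (hX : Disjoint X₁ X₂)
    (hcover : X₁ ∪ X₂ = Finset.univ) (A B : Fin m → Finset (Fin n))
    (h : ∀ i j, A i ∩ B j = ∅ ↔ i = j) (π : Perm (Fin n)) :
    (univ.filter fun i =>
      Cond (A i ∩ X₁) (B i ∩ X₁) π ∧ Cond (A i ∩ X₂) (B i ∩ X₂) π).card ≤ 1 + n / 2 := by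
  classical
  set S := univ.filter fun i =>
      Cond (A i ∩ X₁) (B i ∩ X₁) π ∧ Cond (A i ∩ X₂) (B i ∩ X₂) π with hSdef
  set v : Finset (Fin n) → Fin m → ℕ := fun X i =>
    if hne : (B i ∩ X).Nonempty then ((B i ∩ X).image fun x => (π x : ℕ)).min' (hne.image _)
    else n with hvdef
  have hv_lt : ∀ (X : Finset (Fin n)) (i j : Fin m), Cond (A i ∩ X) (B i ∩ X) π →
      Cond (A j ∩ X) (B j ∩ X) π → ∀ x, x ∈ A i → x ∈ B j → x ∈ X → v X j < v X i := by
    intro X i j hi hj x hxA hxB hxX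
    have hne : (B j ∩ X).Nonempty := ⟨x, mem_inter.2 ⟨hxB, hxX⟩⟩
    have h1 : v X j ≤ (π x : ℕ) := by
      rw [hvdef]; dsimp only; rw [dif_pos hne]
      exact min'_le _ _ (mem_image_of_mem _ (mem_inter.2 ⟨hxB, hxX⟩))
    have h2 : (π x : ℕ) < v X i := by
      rw [hvdef]; dsimp only
      by_cases hne' : (B i ∩ X).Nonempty
      · rw [dif_pos hne']
        obtain ⟨z, hz, hz2⟩ := mem_image.1 (min'_mem _ (hne'.image fun x => (π x : ℕ)))
        rw [← hz2]
        exact_mod_cast hi x (mem_inter.2 ⟨hxA, hxX⟩) z hz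
      · rw [dif_neg hne']
        exact (π x).isLt
    omega
  have hv_ne : ∀ i ∈ S, ∀ j ∈ S, i ≠ j → v X₁ i ≠ v X₁ j ∧ v X₂ i ≠ v X₂ j := by
    intro i hi j hj hij
    obtain ⟨-, hi1, hi2⟩ := mem_filter.1 hi
    obtain ⟨-, hj1, hj2⟩ := mem_filter.1 hj
    have hxne : (A i ∩ B j).Nonempty :=
      nonempty_iff_ne_empty.2 fun hc => hij ((h i j).1 hc)
    have hyne : (A j ∩ B i).Nonempty :=
      nonempty_iff_ne_empty.2 fun hc => hij (((h j i).1 hc).symm)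
    obtain ⟨x, hx⟩ := hxne
    obtain ⟨y, hy⟩ := hyne
    have hx' := mem_inter.1 hx
    have hy' := mem_inter.1 hy
    have hx12 : x ∈ X₁ ∨ x ∈ X₂ := by
      have := mem_univ x; rw [← hcover, mem_union] at this; exact this
    have hy12 : y ∈ X₁ ∨ y ∈ X₂ := by
      have := mem_univ y; rw [← hcover, mem_union] at this; exact this
    rcases hx12 with hxX | hxX <;> rcases hy12 with hyX | hyX
    · exact absurd (lt_trans (hv_lt X₁ i j hi1 hj1 x hx'.1 hx'.2 hxX)
        (hv_lt X₁ j i hj1 hi1 y hy'.1 hy'.2 hyX)) (lt_irrefl _)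
    · exact ⟨(hv_lt X₁ i j hi1 hj1 x hx'.1 hx'.2 hxX).ne',
        (hv_lt X₂ j i hj2 hi2 y hy'.1 hy'.2 hyX).ne⟩
    · exact ⟨(hv_lt X₁ j i hj1 hi1 y hy'.1 hy'.2 hyX).ne,
        (hv_lt X₂ i j hi2 hj2 x hx'.1 hx'.2 hxX).ne'⟩
    · exact absurd (lt_trans (hv_lt X₂ i j hi2 hj2 x hx'.1 hx'.2 hxX)
        (hv_lt X₂ j i hj2 hi2 y hy'.1 hy'.2 hyX)) (lt_irrefl _)
  have hmaps : ∀ X : Finset (Fin n), ∀ i, v X i ∈ (X.image fun x => (π x : ℕ)) ∪ {n} := by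
    intro X i
    rw [hvdef]; dsimp only
    by_cases hne : (B i ∩ X).Nonempty
    · rw [dif_pos hne]
      apply mem_union_left
      have := min'_mem _ (hne.image fun x => (π x : ℕ))
      obtain ⟨z, hz, hz2⟩ := mem_image.1 this
      rw [← hz2]
      exact mem_image_of_mem _ (mem_inter.1 hz).2
    · rw [dif_neg hne]; exact mem_union_right _ (mem_singleton_self n)
  have hcard : ∀ X : Finset (Fin n), (∀ i ∈ S, ∀ j ∈ S, i ≠ j → v X i ≠ v X j) →
      S.card ≤ X.card + 1 := by
    intro X hinj
    have h1 : S.card ≤ ((X.image fun x => (π x : ℕ)) ∪ {n}).card := by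
      apply card_le_card_of_injOn (v X) (fun i _ => hmaps X i)
      · intro i hi j hj hne
        by_contra hc
        exact (hinj i (mem_coe.1 hi) j (mem_coe.1 hj) hc) hne
    calc S.card ≤ ((X.image fun x => (π x : ℕ)) ∪ {n}).card := h1
      _ ≤ (X.image fun x => (π x : ℕ)).card + ({n} : Finset ℕ).card := card_union_le _ _
      _ ≤ X.card + 1 := by
          rw [card_singleton]
          exact Nat.add_le_add_right (card_image_le) 1
  have hS1 := hcard X₁ (fun i hi j hj hne => (hv_ne i hi j hj hne).1)
  have hS2 := hcard X₂ (fun i hi j hj hne => (hv_ne i hi j hj hne).2)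
  have hsum : X₁.card + X₂.card = n := by
    rw [← card_union_of_disjoint hX, hcover, card_univ, Fintype.card_fin]
  omega

end Det

end BollobasTwo

open Finset Equiv BollobasTwo in
theorem bollobas_two_parts (n m : ℕ) (X₁ X₂ : Finset (Fin n))
    (hX : Disjoint X₁ X₂) (hcover : X₁ ∪ X₂ = Finset.univ)
    (A B : Fin m → Finset (Fin n))
    (h : ∀ i j, A i ∩ B j = ∅ ↔ i = j) :
    ∑ i, ((((A i ∩ X₁).card + (B i ∩ X₁).card).choose (A i ∩ X₁).card : ℝ) *
        (((A i ∩ X₂).card + (B i ∩ X₂).card).choose (A i ∩ X₂).card : ℝ))⁻¹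
      ≤ 1 + (n / 2 : ℕ) := by
  classical
  set F : Fin m → Finset (Perm (Fin n)) := fun i =>
    univ.filter fun π => Cond (A i ∩ X₁) (B i ∩ X₁) π ∧ Cond (A i ∩ X₂) (B i ∩ X₂) π with hFdef
  have hd : ∀ (i : Fin m) (X : Finset (Fin n)), Disjoint (A i ∩ X) (B i ∩ X) := by
    intro i X
    rw [Finset.disjoint_left]
    intro x hx1 hx2
    have hmem : x ∈ A i ∩ B i := mem_inter.2 ⟨(mem_inter.1 hx1).1, (mem_inter.1 hx2).1⟩
    rw [(h i i).2 rfl] at hmem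
    exact absurd hmem (notMem_empty x)
  have hb : ∀ i : Fin m,
      Disjoint ((A i ∩ X₁) ∪ (B i ∩ X₁)) ((A i ∩ X₂) ∪ (B i ∩ X₂)) :=
    fun i => hX.mono (union_subset inter_subset_right inter_subset_right)
      (union_subset inter_subset_right inter_subset_right)
  have hcount := fun i : Fin m =>
    key_count (A i ∩ X₁) (B i ∩ X₁) (A i ∩ X₂) (B i ∩ X₂) (hd i X₁) (hd i X₂) (hb i)
  have hsumF : ∑ i, (F i).card ≤ (1 + n / 2) * n.factorial := by
    have hswap : ∑ i, (F i).card = ∑ π : Perm (Fin n), (univ.filter fun i =>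
        Cond (A i ∩ X₁) (B i ∩ X₁) π ∧ Cond (A i ∩ X₂) (B i ∩ X₂) π).card := by
      simp only [hFdef, card_filter]
      exact Finset.sum_comm
    rw [hswap]
    calc ∑ π : Perm (Fin n), (univ.filter fun i =>
          Cond (A i ∩ X₁) (B i ∩ X₁) π ∧ Cond (A i ∩ X₂) (B i ∩ X₂) π).card
        ≤ ∑ _π : Perm (Fin n), (1 + n / 2) :=
          sum_le_sum fun π _ => det_bound X₁ X₂ hX hcover A B h π
      _ = (1 + n / 2) * n.factorial := by
          rw [sum_const, card_univ, Fintype.card_perm, Fintype.card_fin, smul_eq_mul, mul_comm]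
  have hfac : (0 : ℝ) < (n.factorial : ℝ) := by exact_mod_cast n.factorial_pos
  have hterm : ∀ i : Fin m,
      ((((A i ∩ X₁).card + (B i ∩ X₁).card).choose (A i ∩ X₁).card : ℝ) *
        (((A i ∩ X₂).card + (B i ∩ X₂).card).choose (A i ∩ X₂).card : ℝ))⁻¹
        ≤ ((F i).card : ℝ) / (n.factorial : ℝ) := by
    intro i
    have hC1 : 0 < ((A i ∩ X₁).card + (B i ∩ X₁).card).choose (A i ∩ X₁).card :=
      Nat.choose_pos (Nat.le_add_right _ _)
    have hC2 : 0 < ((A i ∩ X₂).card + (B i ∩ X₂).card).choose (A i ∩ X₂).card :=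
      Nat.choose_pos (Nat.le_add_right _ _)
    have hCpos : (0 : ℝ) < ((((A i ∩ X₁).card + (B i ∩ X₁).card).choose (A i ∩ X₁).card : ℝ) *
        (((A i ∩ X₂).card + (B i ∩ X₂).card).choose (A i ∩ X₂).card : ℝ)) :=
      mul_pos (by exact_mod_cast hC1) (by exact_mod_cast hC2)
    rw [le_div_iff₀ hfac, inv_mul_le_iff₀ hCpos]
    calc (n.factorial : ℝ)
        ≤ (((F i).card * (((A i ∩ X₁).card + (B i ∩ X₁).card).choose (A i ∩ X₁).card *
            ((A i ∩ X₂).card + (B i ∩ X₂).card).choose (A i ∩ X₂).card) : ℕ) : ℝ) := by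
          exact_mod_cast hcount i
      _ = _ := by push_cast; ring
  calc ∑ i, ((((A i ∩ X₁).card + (B i ∩ X₁).card).choose (A i ∩ X₁).card : ℝ) *
        (((A i ∩ X₂).card + (B i ∩ X₂).card).choose (A i ∩ X₂).card : ℝ))⁻¹
      ≤ ∑ i, ((F i).card : ℝ) / (n.factorial : ℝ) := sum_le_sum fun i _ => hterm i
    _ = (∑ i, ((F i).card : ℝ)) / (n.factorial : ℝ) := by rw [sum_div]
    _ ≤ (((1 + n / 2) * n.factorial : ℕ) : ℝ) / (n.factorial : ℝ) := by
        apply div_le_div_of_nonneg_right ?_ hfac.le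
        exact_mod_cast hsumF
    _ = 1 + (n / 2 : ℕ) := by
        push_cast
        field_simp
end

section
/- Let X = [n] be the disjoint union of X_1, ..., X_r, and let (A_i, B_i), i ∈ [m], be a Bollobás system of pairs of subsets of X. Then ∑_{i=1}^m (∏_{k=1}^r binom(|A_i ∩ X_k| + |B_i ∩ X_k|, |A_i ∩ X_k|))^{-1} ≤ (1 + n/r)^{r-1}. -/
open Finset

namespace BollobasAux

variable {n : ℕ}

/-- Permutations under which every element of `S` comes before every element of `T`. -/
def goodSet (S T : Finset (Fin n)) : Finset (Equiv.Perm (Fin n)) :=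
  univ.filter fun σ => ∀ a ∈ S, ∀ b ∈ T, σ a < σ b

lemma mem_goodSet {S T : Finset (Fin n)} {σ : Equiv.Perm (Fin n)} :
    σ ∈ goodSet S T ↔ ∀ a ∈ S, ∀ b ∈ T, σ a < σ b := by
  simp [goodSet]

lemma exists_cut (U : Finset (Fin n)) (s : ℕ) (hs : s ≤ U.card) (σ : Equiv.Perm (Fin n)) :
    ∃ W ∈ U.powersetCard s, σ ∈ goodSet W (U \ W) := by
  classical
  set L : List (Fin n) := (U.image σ).sort (· ≤ ·) with hL
  have hnodupL : L.Nodup := Finset.sort_nodup _ _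
  have hlen : L.length = U.card := by
    rw [hL, Finset.length_sort, Finset.card_image_of_injective _ σ.injective]
  have hsorted : L.Pairwise (· < ·) := (Finset.sortedLT_sort _).pairwise
  set W : Finset (Fin n) := ((L.take s).map σ.symm).toFinset with hW
  have hmemW : ∀ x, x ∈ W ↔ σ x ∈ L.take s := by
    intro x
    simp only [hW, List.mem_toFinset, List.mem_map]
    constructor
    · rintro ⟨v, hv, rfl⟩; simpa using hv
    · intro hx; exact ⟨σ x, hx, by simp⟩
  have hWU : W ⊆ U := by
    intro x hx
    have := (hmemW x).1 hx
    have : σ x ∈ L := List.mem_of_mem_take this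
    rw [hL, Finset.mem_sort] at this
    obtain ⟨y, hy, hyx⟩ := Finset.mem_image.1 this
    rwa [← σ.injective hyx]
  have hcardW : W.card = s := by
    have hnodup : ((L.take s).map σ.symm).Nodup :=
      (hnodupL.sublist (List.take_sublist _ _)).map σ.symm.injective
    rw [hW, List.toFinset_card_of_nodup hnodup, List.length_map, List.length_take,
      hlen]
    omega
  refine ⟨W, Finset.mem_powersetCard.2 ⟨hWU, hcardW⟩, mem_goodSet.2 ?_⟩
  intro a ha b hb
  have haT : σ a ∈ L.take s := (hmemW a).1 ha
  rw [Finset.mem_sdiff] at hb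
  have hbL : σ b ∈ L := by
    rw [hL, Finset.mem_sort]; exact Finset.mem_image_of_mem σ hb.1
  have hbD : σ b ∈ L.drop s := by
    have hmem : σ b ∈ L.take s ++ L.drop s := by rwa [List.take_append_drop]
    rcases List.mem_append.1 hmem with h' | h'
    · exact absurd ((hmemW b).2 h') hb.2
    · exact h'
  have := (List.pairwise_append.1 (by rwa [List.take_append_drop s L] : (L.take s ++ L.drop s).Pairwise (· < ·))).2.2
  exact this _ haT _ hbD

lemma cut_unique {U W W' : Finset (Fin n)} {s : ℕ} (hW : W ∈ U.powersetCard s)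
    (hW' : W' ∈ U.powersetCard s) {σ : Equiv.Perm (Fin n)} (hσ : σ ∈ goodSet W (U \ W))
    (hσ' : σ ∈ goodSet W' (U \ W')) : W = W' := by
  rw [Finset.mem_powersetCard] at hW hW'
  by_contra hne
  have h1 : ¬ W ⊆ W' := fun hsub => hne (Finset.eq_of_subset_of_card_le hsub (hW'.2.trans hW.2.symm).le)
  have h2 : ¬ W' ⊆ W := fun hsub => hne (Finset.eq_of_subset_of_card_le hsub (hW.2.trans hW'.2.symm).le).symm
  obtain ⟨x, hxW, hxW'⟩ := Finset.not_subset.1 h1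
  obtain ⟨y, hyW', hyW⟩ := Finset.not_subset.1 h2
  have hxy : σ x < σ y := mem_goodSet.1 hσ x hxW y (Finset.mem_sdiff.2 ⟨hW'.1 hyW', hyW⟩)
  have hyx : σ y < σ x := mem_goodSet.1 hσ' y hyW' x (Finset.mem_sdiff.2 ⟨hW.1 hxW, hxW'⟩)
  exact absurd hxy (not_lt.2 hyx.le)


lemma goodSet_card_eq (S T W : Finset (Fin n)) (hST : Disjoint S T)
    (hW : W ∈ (S ∪ T).powersetCard S.card) :
    (goodSet W ((S ∪ T) \ W)).card = (goodSet S T).card := by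
  classical
  rw [Finset.mem_powersetCard] at hW
  obtain ⟨hWU, hWcard⟩ := hW
  set U : Finset (Fin n) := S ∪ T with hU
  set T' : Finset (Fin n) := U \ W with hT'
  have hT'card : T'.card = T.card := by
    rw [hT', Finset.card_sdiff_of_subset hWU, hU, Finset.card_union_of_disjoint hST, hWcard]
    omega
  have e1 : { x // x ∈ W } ≃ { x // x ∈ S } :=
    (W.equivFin).trans (Finset.equivFinOfCardEq hWcard.symm).symm
  have e2 : { x // x ∈ T' } ≃ { x // x ∈ T } :=
    (T'.equivFin).trans (Finset.equivFinOfCardEq hT'card.symm).symm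
  set f : Fin n → Fin n := fun x =>
    if h : x ∈ W then (e1 ⟨x, h⟩ : Fin n)
    else if h' : x ∈ T' then (e2 ⟨x, h'⟩ : Fin n) else x with hf
  have hfW : ∀ x (h : x ∈ W), f x = (e1 ⟨x, h⟩ : Fin n) := by
    intro x h; simp [hf, h]
  have hfT' : ∀ x (h : x ∈ T'), f x = (e2 ⟨x, h⟩ : Fin n) := by
    intro x h
    have hxW : x ∉ W := (Finset.mem_sdiff.1 h).2
    simp [hf, hxW, h]
  have hfout : ∀ x, x ∉ U → f x = x := by
    intro x h
    have h1 : x ∉ W := fun hx => h (hWU hx)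
    have h2 : x ∉ T' := fun hx => h (Finset.mem_sdiff.1 hx).1
    simp [hf, h1, h2]
  have hmapW : ∀ x, x ∈ W → f x ∈ S := fun x h => by rw [hfW x h]; exact (e1 ⟨x, h⟩).2
  have hmapT' : ∀ x, x ∈ T' → f x ∈ T := fun x h => by rw [hfT' x h]; exact (e2 ⟨x, h⟩).2
  have hSU : S ⊆ U := Finset.subset_union_left
  have hTU : T ⊆ U := Finset.subset_union_right
  have hST' : ∀ x, x ∈ S → x ∉ T := fun x hx hx' => Finset.disjoint_left.1 hST hx hx'
  have hinj : Function.Injective f := by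
    intro x y hxy
    by_cases hx : x ∈ W <;> by_cases hy : y ∈ W
    · have := hxy; rw [hfW x hx, hfW y hy] at this
      have := e1.injective (Subtype.ext this)
      exact Subtype.mk_eq_mk.1 this
    · by_cases hy' : y ∈ T'
      · exact absurd (hxy ▸ hmapW x hx) (fun hh => hST' _ hh (hxy ▸ hmapT' y hy'))
      · have hyU : y ∉ U := fun hyU => hy' (Finset.mem_sdiff.2 ⟨hyU, hy⟩)
        rw [hfout y hyU] at hxy
        exact absurd (hxy ▸ hmapW x hx) (fun hh => hyU (hSU hh))
    · by_cases hx' : x ∈ T'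
      · exact absurd (hxy ▸ hmapT' x hx') (fun hh => hST' _ (hxy ▸ hmapW y hy) hh)
      · have hxU : x ∉ U := fun hxU => hx' (Finset.mem_sdiff.2 ⟨hxU, hx⟩)
        rw [hfout x hxU] at hxy
        exact absurd (hxy ▸ hmapW y hy) (fun hh => hxU (hSU hh))
    · by_cases hx' : x ∈ T' <;> by_cases hy' : y ∈ T'
      · have := hxy; rw [hfT' x hx', hfT' y hy'] at this
        exact Subtype.mk_eq_mk.1 (e2.injective (Subtype.ext this))
      · have hyU : y ∉ U := fun hyU => hy' (Finset.mem_sdiff.2 ⟨hyU, hy⟩)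
        rw [hfout y hyU] at hxy
        exact absurd (hxy ▸ hmapT' x hx') (fun hh => hyU (hTU hh))
      · have hxU : x ∉ U := fun hxU => hx' (Finset.mem_sdiff.2 ⟨hxU, hx⟩)
        rw [hfout x hxU] at hxy
        exact absurd (hxy ▸ hmapT' y hy') (fun hh => hxU (hTU hh))
      · have hyU : y ∉ U := fun hyU => hy' (Finset.mem_sdiff.2 ⟨hyU, hy⟩)
        have hxU : x ∉ U := fun hxU => hx' (Finset.mem_sdiff.2 ⟨hxU, hx⟩)
        rwa [hfout x hxU, hfout y hyU] at hxy
  set π : Equiv.Perm (Fin n) := Equiv.ofBijective f (Finite.injective_iff_bijective.1 hinj) with hπ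
  have hπapp : ∀ x, π x = f x := fun x => rfl
  have himW : W.image f = S := by
    apply Finset.eq_of_subset_of_card_le
    · intro y hy; obtain ⟨x, hx, rfl⟩ := Finset.mem_image.1 hy; exact hmapW x hx
    · rw [Finset.card_image_of_injective _ hinj, hWcard]
  have himT' : T'.image f = T := by
    apply Finset.eq_of_subset_of_card_le
    · intro y hy; obtain ⟨x, hx, rfl⟩ := Finset.mem_image.1 hy; exact hmapT' x hx
    · rw [Finset.card_image_of_injective _ hinj, hT'card]
  have hpreS : ∀ a ∈ S, π⁻¹ a ∈ W := by
    intro a ha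
    rw [← himW] at ha
    obtain ⟨x, hx, rfl⟩ := Finset.mem_image.1 ha
    have : π⁻¹ (π x) = x := π.symm_apply_apply x
    rwa [show f x = π x from rfl, this]
  have hpreT : ∀ b ∈ T, π⁻¹ b ∈ T' := by
    intro b hb
    rw [← himT'] at hb
    obtain ⟨x, hx, rfl⟩ := Finset.mem_image.1 hb
    have : π⁻¹ (π x) = x := π.symm_apply_apply x
    rwa [show f x = π x from rfl, this]
  refine (Finset.card_bij' (fun τ _ => τ * π) (fun σ _ => σ * π⁻¹) ?_ ?_ ?_ ?_).symm
  · intro σ hσ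
    rw [mem_goodSet] at hσ ⊢
    intro a ha b hb
    have : (σ * π) a = σ (π a) := rfl
    rw [this, show (σ * π) b = σ (π b) from rfl, hπapp, hπapp]
    exact hσ _ (hmapW a ha) _ (hmapT' b hb)
  · intro τ hτ
    rw [mem_goodSet] at hτ ⊢
    intro a ha b hb
    have h1 : (τ * π⁻¹) a = τ (π⁻¹ a) := rfl
    rw [h1, show (τ * π⁻¹) b = τ (π⁻¹ b) from rfl]
    exact hτ _ (hpreS a ha) _ (hpreT b hb)
  · intro σ _; group
  · intro τ _; group


lemma goodSet_card_mul (S T : Finset (Fin n)) (hST : Disjoint S T) :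
    (S.card + T.card).choose S.card * (goodSet S T).card = Nat.factorial n := by
  classical
  set U : Finset (Fin n) := S ∪ T with hU
  have hUcard : U.card = S.card + T.card := Finset.card_union_of_disjoint hST
  have hs : S.card ≤ U.card := by omega
  have hcover : (Finset.univ : Finset (Equiv.Perm (Fin n)))
      = (U.powersetCard S.card).biUnion (fun W => goodSet W (U \ W)) := by
    apply Finset.eq_of_subset_of_card_le
    · intro σ _
      obtain ⟨W, hW, hσ⟩ := exists_cut U S.card hs σ
      exact Finset.mem_biUnion.2 ⟨W, hW, hσ⟩
    · exact Finset.card_le_card (Finset.subset_univ _)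
  have hdisj : ∀ W ∈ U.powersetCard S.card, ∀ W' ∈ U.powersetCard S.card, W ≠ W' →
      Disjoint (goodSet W (U \ W)) (goodSet W' (U \ W')) := by
    intro W hW W' hW' hne
    rw [Finset.disjoint_left]
    intro σ hσ hσ'
    exact hne (cut_unique hW hW' hσ hσ')
  have hcard : (Finset.univ : Finset (Equiv.Perm (Fin n))).card
      = ∑ W ∈ U.powersetCard S.card, (goodSet W (U \ W)).card := by
    rw [hcover]; exact Finset.card_biUnion hdisj
  rw [Finset.card_univ, Fintype.card_perm, Fintype.card_fin] at hcard
  rw [hcard, Finset.sum_congr rfl (fun W hW => goodSet_card_eq S T W hST hW),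
    Finset.sum_const, Finset.card_powersetCard, hUcard, smul_eq_mul]


lemma cardI_le {n m r : ℕ} (X : Fin r → Finset (Fin n))
    (hcover : Finset.univ.biUnion X = Finset.univ)
    (A B : Fin m → Finset (Fin n))
    (h : ∀ i j, A i ∩ B j = ∅ ↔ i = j)
    (σ : Fin r → Equiv.Perm (Fin n)) (l : Fin r) :
    (univ.filter (fun i : Fin m =>
        ∀ k, ∀ a ∈ A i ∩ X k, ∀ b ∈ B i ∩ X k, (σ k) a < (σ k) b)).card
      ≤ ∏ k, (if k = l then 1 else ((X k).card + 1)) := by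
  classical
  set I : Finset (Fin m) := univ.filter (fun i : Fin m =>
      ∀ k, ∀ a ∈ A i ∩ X k, ∀ b ∈ B i ∩ X k, (σ k) a < (σ k) b) with hI
  have hmemI : ∀ i, i ∈ I ↔
      ∀ k, ∀ a ∈ A i ∩ X k, ∀ b ∈ B i ∩ X k, (σ k) a < (σ k) b := by
    intro i; simp [hI]
  set f : Fin m → (Fin r → WithBot (Fin n)) := fun i k =>
    if k = l then ⊥ else ((A i ∩ X k).image (σ k)).max with hf
  set t : ∀ _ : Fin r, Finset (WithBot (Fin n)) := fun k =>
    if k = l then {⊥} else insert ⊥ (((X k).image (σ k)).image (fun x : Fin n => (x : WithBot (Fin n)))) with ht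
  have hmem : ∀ i ∈ I, f i ∈ Fintype.piFinset t := by
    intro i _
    rw [Fintype.mem_piFinset]
    intro k
    by_cases hk : k = l
    · simp [hf, ht, hk]
    · simp only [hf, ht, if_neg hk]
      rcases (A i ∩ X k).eq_empty_or_nonempty with he | hne
      · rw [he, Finset.image_empty, Finset.max_empty]
        exact Finset.mem_insert_self _ _
      · have hne' : ((A i ∩ X k).image (σ k)).Nonempty := hne.image _
        rw [← Finset.coe_max' hne']
        apply Finset.mem_insert_of_mem
        exact Finset.mem_image_of_mem (fun x : Fin n => (x : WithBot (Fin n)))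
          (Finset.image_subset_image Finset.inter_subset_right (Finset.max'_mem _ hne'))
  have key : ∀ i ∈ I, ∀ j ∈ I, f i = f j → ∀ z ∈ A i ∩ B j, i ≠ j → z ∈ X l := by
    intro i hi j hj hfij z hz hij
    rw [Finset.mem_inter] at hz
    have hzuniv : z ∈ Finset.univ.biUnion X := by rw [hcover]; exact Finset.mem_univ z
    obtain ⟨k, -, hzk⟩ := Finset.mem_biUnion.1 hzuniv
    by_cases hk : k = l
    · rwa [hk] at hzk
    · exfalso
      have h1 : (↑((σ k) z) : WithBot (Fin n)) ≤ ((A i ∩ X k).image (σ k)).max :=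
        Finset.le_max (Finset.mem_image_of_mem _ (Finset.mem_inter.2 ⟨hz.1, hzk⟩))
      have h2 : (↑((σ k) z) : WithBot (Fin n)) ≤ ((A j ∩ X k).image (σ k)).max := by
        have := congrFun hfij k
        simp only [hf, if_neg hk] at this
        rwa [this] at h1
      have hne' : ((A j ∩ X k).image (σ k)).Nonempty := by
        rcases ((A j ∩ X k).image (σ k)).eq_empty_or_nonempty with he | hne
        · rw [he, Finset.max_empty] at h2
          exact absurd h2 (by simp)
        · exact hne
      rw [← Finset.coe_max' hne', WithBot.coe_le_coe] at h2
      obtain ⟨a, ha, haeq⟩ := Finset.mem_image.1 (Finset.max'_mem _ hne')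
      have hlt : (σ k) a < (σ k) z :=
        (hmemI j).1 hj k a ha z (Finset.mem_inter.2 ⟨hz.2, hzk⟩)
      rw [haeq] at hlt
      exact absurd h2 (not_le.2 hlt)
  have hinj : Set.InjOn f I := by
    intro i hi j hj hfij
    by_contra hij
    have hxne : (A i ∩ B j).Nonempty :=
      Finset.nonempty_iff_ne_empty.2 (fun he => hij ((h i j).1 he))
    have hyne : (A j ∩ B i).Nonempty :=
      Finset.nonempty_iff_ne_empty.2 (fun he => (fun hji => hij hji.symm) ((h j i).1 he))
    obtain ⟨x, hx⟩ := hxne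
    obtain ⟨y, hy⟩ := hyne
    have hxl : x ∈ X l := key i hi j hj hfij x hx hij
    have hyl : y ∈ X l := key j hj i hi hfij.symm y hy (fun hji => hij hji.symm)
    rw [Finset.mem_inter] at hx hy
    have h1 : (σ l) x < (σ l) y :=
      (hmemI i).1 hi l x (Finset.mem_inter.2 ⟨hx.1, hxl⟩) y (Finset.mem_inter.2 ⟨hy.2, hyl⟩)
    have h2 : (σ l) y < (σ l) x :=
      (hmemI j).1 hj l y (Finset.mem_inter.2 ⟨hy.1, hyl⟩) x (Finset.mem_inter.2 ⟨hx.2, hxl⟩)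
    exact absurd h1 (not_lt.2 h2.le)
  calc I.card ≤ (Fintype.piFinset t).card := Finset.card_le_card_of_injOn f hmem hinj
    _ = ∏ k, (t k).card := Fintype.card_piFinset t
    _ = ∏ k, (if k = l then 1 else ((X k).card + 1)) := by
        apply Finset.prod_congr rfl
        intro k _
        by_cases hk : k = l
        · simp [ht, hk]
        · rw [ht]
          simp only [if_neg hk]
          rw [Finset.card_insert_of_notMem (by simp), Finset.card_image_of_injective _
            (fun a b hab => by exact_mod_cast hab),
            Finset.card_image_of_injective _ (σ k).injective]


/-- Double counting: the key bound for a fixed coordinate `l`. -/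
lemma sum_inv_prod_le {n m r : ℕ} (X : Fin r → Finset (Fin n))
    (hcover : Finset.univ.biUnion X = Finset.univ)
    (A B : Fin m → Finset (Fin n))
    (h : ∀ i j, A i ∩ B j = ∅ ↔ i = j) (l : Fin r) :
    ∑ i, (∏ k, (((A i ∩ X k).card + (B i ∩ X k).card).choose (A i ∩ X k).card : ℝ))⁻¹
      ≤ ((∏ k, (if k = l then 1 else ((X k).card + 1)) : ℕ) : ℝ) := by
  classical
  set G : Fin m → Fin r → ℕ := fun i k => (goodSet (A i ∩ X k) (B i ∩ X k)).card with hG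
  set C : Fin m → Fin r → ℕ := fun i k =>
    ((A i ∩ X k).card + (B i ∩ X k).card).choose (A i ∩ X k).card with hC
  have hdisj : ∀ i k, Disjoint (A i ∩ X k) (B i ∩ X k) := by
    intro i k
    rw [Finset.disjoint_left]
    intro x hx1 hx2
    have : x ∈ A i ∩ B i := Finset.mem_inter.2
      ⟨(Finset.mem_inter.1 hx1).1, (Finset.mem_inter.1 hx2).1⟩
    rw [(h i i).2 rfl] at this
    exact absurd this (Finset.notMem_empty x)
  have hCG : ∀ i k, C i k * G i k = Nat.factorial n := fun i k =>
    goodSet_card_mul _ _ (hdisj i k)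
  have hCpos : ∀ i k, 0 < C i k := fun i k =>
    Nat.choose_pos (Nat.le_add_right _ _)
  -- step 1: the natural-number double count
  have hnat : ∑ i : Fin m, ∏ k, G i k
      ≤ (Nat.factorial n) ^ r * ∏ k, (if k = l then 1 else ((X k).card + 1)) := by
    have hSi : ∀ i : Fin m, ∏ k, G i k =
        ((univ : Finset (Fin r → Equiv.Perm (Fin n))).filter
          (fun σ => ∀ k, ∀ a ∈ A i ∩ X k, ∀ b ∈ B i ∩ X k, (σ k) a < (σ k) b)).card := by
      intro i
      have : (univ : Finset (Fin r → Equiv.Perm (Fin n))).filter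
          (fun σ => ∀ k, ∀ a ∈ A i ∩ X k, ∀ b ∈ B i ∩ X k, (σ k) a < (σ k) b)
          = Fintype.piFinset (fun k => goodSet (A i ∩ X k) (B i ∩ X k)) := by
        ext σ
        simp only [Finset.mem_filter, Finset.mem_univ, true_and, Fintype.mem_piFinset,
          mem_goodSet]
      rw [this, Fintype.card_piFinset]
    calc ∑ i : Fin m, ∏ k, G i k
        = ∑ i : Fin m, ∑ σ : Fin r → Equiv.Perm (Fin n),
            (if ∀ k, ∀ a ∈ A i ∩ X k, ∀ b ∈ B i ∩ X k, (σ k) a < (σ k) b then 1 else 0) := by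
          refine Finset.sum_congr rfl fun i _ => ?_
          rw [hSi i, Finset.card_filter]
      _ = ∑ σ : Fin r → Equiv.Perm (Fin n), ∑ i : Fin m,
            (if ∀ k, ∀ a ∈ A i ∩ X k, ∀ b ∈ B i ∩ X k, (σ k) a < (σ k) b then 1 else 0) :=
          Finset.sum_comm
      _ = ∑ σ : Fin r → Equiv.Perm (Fin n),
            ((univ.filter (fun i : Fin m =>
              ∀ k, ∀ a ∈ A i ∩ X k, ∀ b ∈ B i ∩ X k, (σ k) a < (σ k) b)).card) := by
          refine Finset.sum_congr rfl fun σ _ => ?_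
          rw [Finset.card_filter]
      _ ≤ ∑ _σ : Fin r → Equiv.Perm (Fin n), ∏ k, (if k = l then 1 else ((X k).card + 1)) :=
          Finset.sum_le_sum fun σ _ => cardI_le X hcover A B h σ l
      _ = (Nat.factorial n) ^ r * ∏ k, (if k = l then 1 else ((X k).card + 1)) := by
          rw [Finset.sum_const, Finset.card_univ, Fintype.card_fun, Fintype.card_perm,
            Fintype.card_fin, Fintype.card_fin, smul_eq_mul]
  -- step 2: transfer to ℝ
  have hfac : (0 : ℝ) < (Nat.factorial n : ℝ) := by positivity
  have hkey : ∀ i, (∏ k, (C i k : ℝ))⁻¹ = (∏ k, (G i k : ℝ)) / (Nat.factorial n) ^ r := by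
    intro i
    have hprod : (∏ k, (C i k : ℝ)) * (∏ k, (G i k : ℝ)) = (Nat.factorial n : ℝ) ^ r := by
      rw [← Finset.prod_mul_distrib]
      rw [Finset.prod_congr rfl (fun k _ => by
        rw [← Nat.cast_mul, hCG i k] : ∀ k ∈ univ, (C i k : ℝ) * (G i k : ℝ) = (Nat.factorial n : ℝ))]
      rw [Finset.prod_const, Finset.card_univ, Fintype.card_fin]
    have hCprodpos : (0 : ℝ) < ∏ k, (C i k : ℝ) := by
      apply Finset.prod_pos
      intro k _
      exact_mod_cast hCpos i k
    field_simp
    linarith [hprod]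
  calc ∑ i, (∏ k, (C i k : ℝ))⁻¹
      = (∑ i, ∏ k, (G i k : ℝ)) / (Nat.factorial n) ^ r := by
        rw [Finset.sum_div]
        exact Finset.sum_congr rfl fun i _ => hkey i
    _ ≤ ((Nat.factorial n : ℝ) ^ r * ((∏ k, (if k = l then 1 else ((X k).card + 1)) : ℕ) : ℝ))
          / (Nat.factorial n) ^ r := by
        gcongr
        exact_mod_cast hnat
    _ = ((∏ k, (if k = l then 1 else ((X k).card + 1)) : ℕ) : ℝ) := by
        exact mul_div_cancel_left₀ _ (by positivity)

end BollobasAux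

open BollobasAux in
theorem bollobas_partition (n m r : ℕ) (X : Fin r → Finset (Fin n))
    (hX : ∀ k l, k ≠ l → Disjoint (X k) (X l))
    (hcover : Finset.univ.biUnion X = Finset.univ)
    (A B : Fin m → Finset (Fin n))
    (h : ∀ i j, A i ∩ B j = ∅ ↔ i = j) :
    ∑ i, (∏ k, (((A i ∩ X k).card + (B i ∩ X k).card).choose (A i ∩ X k).card : ℝ))⁻¹
      ≤ (1 + (n : ℝ) / r) ^ (r - 1) := by
  classical
  rcases Nat.eq_zero_or_pos r with hr | hr
  · subst hr
    have hempty : (Finset.univ : Finset (Fin n)) = ∅ := by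
      rw [← hcover]; simp
    have hm : ∀ i j : Fin m, i = j := by
      intro i j
      apply (h i j).1
      apply Finset.eq_empty_of_forall_notMem
      intro x _
      have hx := Finset.mem_univ x
      rw [hempty] at hx
      exact absurd hx (Finset.notMem_empty x)
    have hm1 : m ≤ 1 := by
      by_contra hc
      push_neg at hc
      have h01 : (⟨0, by omega⟩ : Fin m) = ⟨1, by omega⟩ := hm _ _
      simp [Fin.mk.injEq] at h01
    simp only [Nat.zero_sub, pow_zero]
    have : ∑ i : Fin m, (∏ k : Fin 0,
        (((A i ∩ X k).card + (B i ∩ X k).card).choose (A i ∩ X k).card : ℝ))⁻¹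
        = (m : ℝ) := by
      simp
    rw [this]
    exact_mod_cast hm1
  -- main case r ≥ 1
  have hrR : (0 : ℝ) < r := by exact_mod_cast hr
  set c : Fin r → ℝ := fun k => ((X k).card + 1 : ℝ) with hc
  have hcpos : ∀ k, (0 : ℝ) < c k := fun k => by positivity
  set Q : ℝ := ∏ k, c k with hQdef
  have hQpos : 0 < Q := Finset.prod_pos fun k _ => hcpos k
  set S : ℝ := ∑ i, (∏ k,
    (((A i ∩ X k).card + (B i ∩ X k).card).choose (A i ∩ X k).card : ℝ))⁻¹ with hSdef
  have hS0 : 0 ≤ S := by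
    apply Finset.sum_nonneg
    intro i _
    positivity
  have hSl : ∀ l : Fin r, S ≤ ∏ k ∈ Finset.univ.erase l, c k := by
    intro l
    refine (sum_inv_prod_le X hcover A B h l).trans_eq ?_
    push_cast
    rw [← Finset.mul_prod_erase Finset.univ _ (Finset.mem_univ l)]
    rw [if_pos rfl, one_mul]
    refine Finset.prod_congr rfl fun k hk => ?_
    rw [if_neg (Finset.mem_erase.1 hk).1]
  have hcardsum : ∑ k, (X k).card = n := by
    have hd : ∀ k ∈ (Finset.univ : Finset (Fin r)), ∀ l ∈ Finset.univ, k ≠ l →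
        Disjoint (X k) (X l) := fun k _ l _ hkl => hX k l hkl
    have := Finset.card_biUnion hd
    rw [hcover, Finset.card_univ, Fintype.card_fin] at this
    omega
  set Z : ℝ := 1 + (n : ℝ) / r with hZdef
  have hZ0 : 0 ≤ Z := by positivity
  -- AM-GM : Q ≤ Z ^ r
  have hQZ : Q ≤ Z ^ r := by
    have hgm := Real.geom_mean_le_arith_mean_weighted Finset.univ
      (fun _ : Fin r => 1 / (r : ℝ)) c
      (fun k _ => by positivity)
      (by rw [Finset.sum_const, Finset.card_univ, Fintype.card_fin, nsmul_eq_mul]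
          field_simp)
      (fun k _ => (hcpos k).le)
    have hlhs : ∏ k, c k ^ (1 / (r : ℝ)) = Q ^ (1 / (r : ℝ)) :=
      Real.finset_prod_rpow Finset.univ c (fun k _ => (hcpos k).le) _
    have hrhs : ∑ k, (1 / (r : ℝ)) * c k = Z := by
      rw [← Finset.mul_sum]
      have : ∑ k, c k = (n : ℝ) + r := by
        rw [hc]
        push_cast
        rw [Finset.sum_add_distrib, Finset.sum_const, Finset.card_univ, Fintype.card_fin,
          nsmul_eq_mul, mul_one]
        rw_mod_cast [hcardsum]
      rw [this, hZdef]
      field_simp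
      ring
    rw [hlhs, hrhs] at hgm
    have : Q = (Q ^ (1 / (r : ℝ))) ^ r := by
      rw [← Real.rpow_natCast (Q ^ (1 / (r : ℝ))) r, ← Real.rpow_mul hQpos.le]
      rw [one_div, inv_mul_cancel₀ (ne_of_gt hrR), Real.rpow_one]
    rw [this]
    exact pow_le_pow_left₀ (Real.rpow_nonneg hQpos.le _) hgm r
  -- combine
  have hSr : S ^ r ≤ Q ^ (r - 1) := by
    have h1 : S ^ r = ∏ _l : Fin r, S := by
      rw [Finset.prod_const, Finset.card_univ, Fintype.card_fin]
    have h2 : (∏ l : Fin r, ∏ k ∈ Finset.univ.erase l, c k) = Q ^ (r - 1) := by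
      have hmul : (∏ l : Fin r, ∏ k ∈ Finset.univ.erase l, c k) * Q = Q ^ (r - 1) * Q := by
        calc (∏ l : Fin r, ∏ k ∈ Finset.univ.erase l, c k) * Q
            = ∏ l : Fin r, (c l * ∏ k ∈ Finset.univ.erase l, c k) := by
              rw [Finset.prod_mul_distrib, ← hQdef, mul_comm]
          _ = ∏ _l : Fin r, Q := Finset.prod_congr rfl fun l _ =>
              Finset.mul_prod_erase Finset.univ c (Finset.mem_univ l)
          _ = Q ^ r := by rw [Finset.prod_const, Finset.card_univ, Fintype.card_fin]
          _ = Q ^ (r - 1) * Q := by rw [← pow_succ]; congr 1; omega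
      exact mul_right_cancel₀ (ne_of_gt hQpos) hmul
    rw [h1, ← h2]
    exact Finset.prod_le_prod (fun l _ => hS0) (fun l _ => hSl l)
  have hfinal : S ^ r ≤ (Z ^ (r - 1)) ^ r := by
    refine hSr.trans ?_
    calc Q ^ (r - 1) ≤ (Z ^ r) ^ (r - 1) :=
          pow_le_pow_left₀ hQpos.le hQZ (r - 1)
      _ = (Z ^ (r - 1)) ^ r := by rw [← pow_mul, mul_comm, pow_mul]
  exact le_of_pow_le_pow_left₀ (by omega) (by positivity) hfinal
end
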